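/- arXiv:2505.19393 — 7 statements merged into one kernel-verified Lean document; each statement's English description precedes it below -/
import Mathlib

section
/- Let (W,S) be a finitary Coxeter system whose Coxeter graph is connected, and let T be its set of reflections. Every T-Lipschitz self-map τ : W → W is either constant or a right translation (i.e., there exists w ∈ W with τ(x) = x·w for all x ∈ W). -/
/-- The Coxeter graph of a Coxeter matrix `M`: vertices are the indices of the simple
reflections, with an edge between distinct `i, j` exactly when the order `M i j` of `sᵢ sⱼ` is
at least 3 (where, following Mathlib's convention, `M i j = 0` encodes infinite order). -/
def coxeterGraph {B : Type*} (M : CoxeterMatrix B) : SimpleGraph B where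
  Adj i j := i ≠ j ∧ (M i j = 0 ∨ 3 ≤ M i j)
  symm := by
    constructor
    intro i j h
    exact ⟨Ne.symm h.1, by rw [M.symmetric j i]; exact h.2⟩
  loopless := ⟨fun i h => h.1 rfl⟩

/-- `τ : W → W` is `T`-Lipschitz for the set `T` of reflections of a Coxeter system:
`τ(tθ) ∈ {τ(θ), t·τ(θ)}` for every `θ ∈ W` and every reflection `t`. -/
def IsReflLipschitz {B W : Type*} [Group W] {M : CoxeterMatrix B}
    (cs : CoxeterSystem M W) (τ : W → W) : Prop :=
  ∀ θ t : W, cs.IsReflection t → (τ (t * θ) = τ θ ∨ τ (t * θ) = t * τ θ)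

/-! ### Auxiliary: the geometric representation -/

section GeomRep

variable {B : Type*}

/-- The linear functional `v ↦ ⟨eₖ, v⟩` for the standard bilinear form of the geometric
representation of a Coxeter matrix. -/
private noncomputable def gphi (M : CoxeterMatrix B) (k : B) : (B →₀ ℝ) →ₗ[ℝ] ℝ :=
  Finsupp.linearCombination ℝ (fun l => -Real.cos (Real.pi / (M k l : ℝ)))

/-- The geometric reflection associated to a simple root. -/
private noncomputable def gsigma (M : CoxeterMatrix B) (k : B) : Function.End (B →₀ ℝ) :=
  fun u => u - (2 * gphi M k u) • Finsupp.single k 1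

private lemma gsigma_apply (M : CoxeterMatrix B) (k : B) (u : B →₀ ℝ) :
    gsigma M k u = u - (2 * gphi M k u) • Finsupp.single k 1 := rfl

private lemma gphi_single (M : CoxeterMatrix B) (k l : B) :
    gphi M k (Finsupp.single l 1) = -Real.cos (Real.pi / (M k l : ℝ)) := by
  simp [gphi]

private lemma gphi_diag (M : CoxeterMatrix B) (k : B) :
    gphi M k (Finsupp.single k 1) = 1 := by
  rw [gphi_single, M.diagonal k]
  norm_num [Real.cos_pi]

private lemma end_pow_apply {α : Type*} (f g : Function.End α) (n : ℕ) (u : α) :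
    ((f * g) ^ n) u = ((f : α → α) ∘ (g : α → α))^[n] u := rfl

/-- The key rank-two computation: the product of two geometric reflections whose roots make an
angle `π/m` has order dividing `m`. -/
private lemma rank_two_pow {V : Type*} [AddCommGroup V] [Module ℝ V] (m : ℕ) (hm : 2 ≤ m)
    (φk φl : V →ₗ[ℝ] ℝ) (ek el : V) (F G : V → V)
    (hkk : φk ek = 1) (hll : φl el = 1)
    (hkl : φk el = -Real.cos (Real.pi / (m : ℝ)))
    (hlk : φl ek = -Real.cos (Real.pi / (m : ℝ)))
    (hF : ∀ u, F u = u - (2 * φk u) • ek) (hG : ∀ u, G u = u - (2 * φl u) • el)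
    (v : V) : (F ∘ G)^[m] v = v := by
  have hm0 : (0:ℝ) < (m : ℝ) := by exact_mod_cast Nat.lt_of_lt_of_le (by norm_num) hm
  set θ : ℝ := Real.pi / (m : ℝ) with hθdef
  set c : ℝ := Real.cos θ with hcdef
  have hθ0 : 0 < θ := div_pos Real.pi_pos hm0
  have hθπ : θ < Real.pi := by
    rw [hθdef]
    exact div_lt_self Real.pi_pos (by exact_mod_cast Nat.lt_of_lt_of_le (by norm_num) hm)
  have hsin : 0 < Real.sin θ := Real.sin_pos_of_pos_of_lt_pi hθ0 hθπ
  have hs : Real.sin θ ≠ 0 := ne_of_gt hsin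
  have hc2 : 1 - c^2 ≠ 0 := by
    have h := Real.sin_sq_add_cos_sq θ
    have h2 : 1 - c^2 = Real.sin θ ^ 2 := by rw [hcdef]; linarith
    rw [h2]
    positivity
  set p : ℕ → ℝ := fun n => Real.sin ((n : ℝ) * θ) / Real.sin θ with hpdef
  have hp0 : p 0 = 0 := by simp [hpdef]
  have hp1 : p 1 = 1 := by simp [hpdef, div_self hs]
  have hprec : ∀ n : ℕ, p (n + 2) = 2 * c * p (n + 1) - p n := by
    intro n
    have e1 : (((n : ℕ) + 2 : ℕ) : ℝ) * θ = (((n:ℝ) + 1) * θ) + θ := by push_cast; ring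
    have e2 : ((n : ℕ) : ℝ) * θ = (((n:ℝ) + 1) * θ) - θ := by ring
    have e3 : (((n : ℕ) + 1 : ℕ) : ℝ) * θ = ((n:ℝ) + 1) * θ := by push_cast; ring
    simp only [hpdef]
    rw [e1, e2, e3, Real.sin_add, Real.sin_sub, ← hcdef]
    field_simp
    ring
  have hmθ : (m : ℝ) * θ = Real.pi := by
    rw [hθdef]
    field_simp
  have hp2m : p (2 * m) = 0 := by
    simp only [hpdef]
    rw [show ((2 * m : ℕ) : ℝ) * θ = 2 * ((m:ℝ) * θ) by push_cast; ring, hmθ,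
      Real.sin_two_pi, zero_div]
  have hp2m1 : p (2 * m + 1) = 1 := by
    simp only [hpdef]
    rw [show ((2 * m + 1 : ℕ) : ℝ) * θ = 2 * ((m:ℝ) * θ) + θ by push_cast; ring, hmθ,
      Real.sin_add, Real.sin_two_pi, Real.cos_two_pi]
    field_simp
    simp
  have hstep : ∀ A D : ℝ, (F ∘ G) (v + A • ek + D • el)
      = v + (4*c^2*A - A - 2*(φk v) - 2*c*D - 4*c*(φl v)) • ek
          + (2*c*A - D - 2*(φl v)) • el := by
    intro A D
    have hGv : G (v + A • ek + D • el) = v + A • ek + (2*c*A - D - 2*(φl v)) • el := by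
      rw [hG]
      have hφ : φl (v + A • ek + D • el) = φl v - c*A + D := by
        rw [map_add, map_add, map_smul, map_smul, hlk, hll, smul_eq_mul, smul_eq_mul]
        ring
      rw [hφ]
      module
    rw [Function.comp_apply, hGv, hF]
    have hφ2 : φk (v + A • ek + (2*c*A - D - 2*(φl v)) • el)
        = φk v + A - c*(2*c*A - D - 2*(φl v)) := by
      rw [map_add, map_add, map_smul, map_smul, hkk, hkl, smul_eq_mul, smul_eq_mul]
      ring
    rw [hφ2]
    module
  have key : ∀ n : ℕ, (F ∘ G)^[n] v
      = v + (((φk v) + c*(φl v))/(1-c^2)*(p (2*n+1) - 1)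
              - ((φl v) + c*(φk v))/(1-c^2)*(p (2*n))) • ek
          + (((φk v) + c*(φl v))/(1-c^2)*(p (2*n))
              + ((φl v) + c*(φk v))/(1-c^2)*(p (2*n+1) - 2*c*(p (2*n)) - 1)) • el := by
    intro n
    induction n with
    | zero =>
      rw [Function.iterate_zero_apply, show 2*0+1 = 1 from rfl, show 2*0 = 0 from rfl, hp0, hp1]
      match_scalars <;> ring
    | succ n ih =>
      rw [Function.iterate_succ_apply', ih, hstep]
      have q1 : p (2*n+2) = 2*c*p (2*n+1) - p (2*n) := hprec (2*n)
      have q2 : p (2*n+3) = 2*c*p (2*n+2) - p (2*n+1) := by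
        have h := hprec (2*n+1)
        rwa [show 2*n+1+2 = 2*n+3 by ring, show 2*n+1+1 = 2*n+2 by ring] at h
      rw [show 2*(n+1)+1 = 2*n+3 by ring, show 2*(n+1) = 2*n+2 by ring, q2, q1]
      match_scalars <;> (field_simp; try ring)
  rw [key m, hp2m, hp2m1]
  match_scalars <;> ring

private lemma gsigma_liftable (M : CoxeterMatrix B) (hfin : ∀ k l : B, M k l ≠ 0) :
    CoxeterMatrix.IsLiftable M (gsigma M) := by
  intro k l
  by_cases hkl : k = l
  · subst hkl
    rw [M.diagonal k, pow_one]
    refine funext fun v => ?_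
    show gsigma M k (gsigma M k v) = v
    rw [gsigma_apply, gsigma_apply]
    have h1 : gphi M k (v - (2 * gphi M k v) • Finsupp.single k 1) = -(gphi M k v) := by
      rw [map_sub, map_smul, gphi_diag, smul_eq_mul]
      ring
    rw [h1]
    module
  · have hm2 : 2 ≤ M k l := by
      have h1 := M.off_diagonal k l hkl
      have h2 := hfin k l
      omega
    have hkl' : gphi M k (Finsupp.single l 1) = -Real.cos (Real.pi / (M k l : ℝ)) :=
      gphi_single M k l
    have hlk' : gphi M l (Finsupp.single k 1) = -Real.cos (Real.pi / (M k l : ℝ)) := by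
      rw [gphi_single, M.symmetric l k]
    refine funext fun v => ?_
    have h := rank_two_pow (M k l) hm2 (gphi M k) (gphi M l)
      (Finsupp.single k 1) (Finsupp.single l 1) (gsigma M k) (gsigma M l)
      (gphi_diag M k) (gphi_diag M l) hkl' hlk'
      (fun u => rfl) (fun u => rfl) v
    calc ((gsigma M k * gsigma M l) ^ (M k l : ℕ)) v
        = (gsigma M k ∘ gsigma M l)^[M k l] v := end_pow_apply _ _ _ _
      _ = v := h
      _ = (1 : Function.End (B →₀ ℝ)) v := rfl

/-- If `i ≠ j` and `M i j ≥ 3`, then `(sᵢ sⱼ)² ≠ 1`. -/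
private lemma simple_mul_simple_sq_ne_one {W : Type*} [Group W] {M : CoxeterMatrix B}
    (cs : CoxeterSystem M W) (hfin : ∀ k l : B, M k l ≠ 0) {i j : B} (hne : i ≠ j)
    (h3 : 3 ≤ M i j) :
    (cs.simple i * cs.simple j) * (cs.simple i * cs.simple j) ≠ 1 := by
  classical
  intro hcon
  set c : ℝ := Real.cos (Real.pi / (M i j : ℝ)) with hcdef
  have hM0 : (0:ℝ) < (M i j : ℝ) := by exact_mod_cast Nat.lt_of_lt_of_le (by norm_num) h3
  have hcge : 1/2 ≤ c := by
    have h1 : Real.pi / (M i j : ℝ) ≤ Real.pi / 3 := by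
      gcongr
      exact_mod_cast h3
    have h0 : 0 ≤ Real.pi / (M i j : ℝ) := by positivity
    have h2 : Real.pi / 3 ≤ Real.pi := by linarith [Real.pi_pos]
    have := Real.cos_le_cos_of_nonneg_of_le_pi h0 h2 h1
    rw [Real.cos_pi_div_three] at this
    rw [hcdef]
    linarith
  -- transport the relation through the geometric representation
  have hψ : (gsigma M i * gsigma M j) * (gsigma M i * gsigma M j) = 1 := by
    have h := congrArg (cs.lift ⟨gsigma M, gsigma_liftable M hfin⟩) hcon
    rwa [map_mul, map_mul, map_one, CoxeterSystem.lift_apply_simple,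
      CoxeterSystem.lift_apply_simple] at h
  have happ : gsigma M i (gsigma M j (gsigma M i (gsigma M j (Finsupp.single i 1))))
      = Finsupp.single i 1 := congrFun hψ (Finsupp.single i 1)
  -- value computations
  have hφji : gphi M j (Finsupp.single i 1) = -c := by
    rw [gphi_single, M.symmetric j i, hcdef]
  have hφij : gphi M i (Finsupp.single j 1) = -c := by
    rw [gphi_single, hcdef]
  have h1 : gsigma M j (Finsupp.single i 1)
      = Finsupp.single i 1 + (2*c) • Finsupp.single j 1 := by
    rw [gsigma_apply, hφji]
    module
  have h2 : gsigma M i (Finsupp.single i 1 + (2*c) • Finsupp.single j 1)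
      = (4*c^2 - 1) • Finsupp.single i 1 + (2*c) • Finsupp.single j 1 := by
    rw [gsigma_apply]
    have hv : gphi M i (Finsupp.single i 1 + (2*c) • Finsupp.single j 1) = 1 - 2*c^2 := by
      rw [map_add, map_smul, gphi_diag, hφij, smul_eq_mul]
      ring
    rw [hv]
    module
  have h3' : gsigma M j ((4*c^2 - 1) • Finsupp.single i 1 + (2*c) • Finsupp.single j 1)
      = (4*c^2 - 1) • Finsupp.single i 1 + (8*c^3 - 4*c) • Finsupp.single j 1 := by
    rw [gsigma_apply]
    have hv : gphi M j ((4*c^2 - 1) • Finsupp.single i 1 + (2*c) • Finsupp.single j 1)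
        = 3*c - 4*c^3 := by
      rw [map_add, map_smul, map_smul, gphi_diag, hφji, smul_eq_mul, smul_eq_mul]
      ring
    rw [hv]
    module
  have h4 : gsigma M i ((4*c^2 - 1) • Finsupp.single i 1 + (8*c^3 - 4*c) • Finsupp.single j 1)
      = (16*c^4 - 12*c^2 + 1) • Finsupp.single i 1 + (8*c^3 - 4*c) • Finsupp.single j 1 := by
    rw [gsigma_apply]
    have hv : gphi M i ((4*c^2 - 1) • Finsupp.single i 1 + (8*c^3 - 4*c) • Finsupp.single j 1)
        = 8*c^2 - 8*c^4 - 1 := by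
      rw [map_add, map_smul, map_smul, gphi_diag, hφij, smul_eq_mul, smul_eq_mul]
      ring
    rw [hv]
    module
  rw [h1, h2, h3', h4] at happ
  -- extract coordinates
  have hco_j : (8*c^3 - 4*c) = 0 := by
    have := DFunLike.congr_fun happ j
    simpa [Finsupp.single_apply, hne, Ne.symm hne] using this
  have hco_i : (16*c^4 - 12*c^2 + 1) = 1 := by
    have := DFunLike.congr_fun happ i
    simpa [Finsupp.single_apply, hne, Ne.symm hne] using this
  have e2 : 8*c^4 - 4*c^2 = 0 := by linear_combination c * hco_j
  have e1 : 16*c^4 - 12*c^2 = 0 := by linarith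
  have hc20 : c^2 = 0 := by linarith
  have : c = 0 := by
    have := sq_eq_zero_iff.mp (by rw [sq]; nlinarith : c^2 = 0)
    exact this
  linarith

end GeomRep

/-! ### Auxiliary: the dihedral propagation step -/

private lemma dihedral_step {W : Type*} [Group W] {ρ : W → W} {x a b : W}
    (ha2 : a * a = 1) (hb2 : b * b = 1) (hsq : (a * b) * (a * b) ≠ 1)
    (hPb : ρ (x * b) = ρ x ∨ ρ (x * b) = ρ x * b)
    (hPab : ρ (x * a * b) = ρ (x * a) ∨ ρ (x * a * b) = ρ (x * a) * b)
    (hPbab : ρ (x * a * b) = ρ (x * b) ∨ ρ (x * a * b) = ρ (x * b) * (b * a * b))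
    (hPaba : ρ (x * a * b * a) = ρ (x * a * b) ∨ ρ (x * a * b * a) = ρ (x * a * b) * a)
    (hPxaba : ρ (x * a * b * a) = ρ x ∨ ρ (x * a * b * a) = ρ x * (a * b * a))
    (hFa : ρ (x * a) = ρ x) : ρ (x * b) = ρ x := by
  by_contra hnb
  have hb' : ρ (x * b) = ρ x * b := hPb.resolve_left hnb
  have hane : a ≠ 1 := by rintro rfl; exact hsq (by simpa using hb2)
  have hbne : b ≠ 1 := by rintro rfl; exact hsq (by simpa using ha2)
  have habne : a * b ≠ 1 := by intro h; exact hsq (by rw [h, one_mul])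
  have hbane : b * a ≠ 1 := by
    intro h
    apply habne
    have h5 : (b * a) * (a * b) = 1 := by
      rw [mul_assoc, ← mul_assoc a a b, ha2, one_mul, hb2]
    rwa [h, one_mul] at h5
  have e1 : b * (b * a * b) = a * b := by
    rw [mul_assoc b a b, ← mul_assoc, hb2, one_mul]
  -- step: ρ (x a b) = ρ x * b
  have hab : ρ (x * a * b) = ρ x * b := by
    rw [hFa] at hPab
    rcases hPab with hA | hA
    · exfalso
      rw [hb'] at hPbab
      rcases hPbab with hB | hB
      · exact hbne (left_eq_mul.mp (hA.symm.trans hB))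
      · apply habne
        have h5 : ρ x = ρ x * b * (b * a * b) := hA.symm.trans hB
        rw [mul_assoc, e1] at h5
        exact left_eq_mul.mp h5
    · exact hA
  -- step: contradiction via ρ (x a b a)
  rw [hab] at hPaba
  rcases hPaba with h3 | h3 <;> rcases hPxaba with h4 | h4
  · exact hbne (mul_eq_left.mp (h3.symm.trans h4))
  · have h5 : b = a * b * a := mul_left_cancel (h3.symm.trans h4)
    apply hsq
    calc (a * b) * (a * b) = a * b * a * b := by rw [← mul_assoc]
      _ = b * b := by rw [← h5]
      _ = 1 := hb2
  · apply hbane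
    have h5 := h3.symm.trans h4
    rw [mul_assoc] at h5
    exact mul_eq_left.mp h5
  · have h5 : b * a = a * b * a := by
      have h6 := h3.symm.trans h4
      rw [mul_assoc (ρ x) b a] at h6
      exact mul_left_cancel h6
    have h6 : b = a * b := mul_right_cancel h5
    exact hane (right_eq_mul.mp h6)

/-- **Theorem.** Let `(W,S)` be a finitary Coxeter system (no infinite entries in the Coxeter
matrix) whose Coxeter graph is connected. Every `T`-Lipschitz self-map of `W` (for `T` the set of
reflections) is either constant or a right translation. -/
theorem reflLipschitz_constant_or_rightTranslation
    {B W : Type*} [Group W] (M : CoxeterMatrix B) (cs : CoxeterSystem M W)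
    (hfin : ∀ i j : B, M i j ≠ 0)
    (hconn : (coxeterGraph M).Connected)
    (τ : W → W) (hτ : IsReflLipschitz cs τ) :
    (∃ c : W, ∀ x : W, τ x = c) ∨ (∃ w : W, ∀ x : W, τ x = x * w) := by
  classical
  obtain ⟨i₀⟩ : Nonempty B := hconn.nonempty
  set ρ : W → W := fun x => (τ x⁻¹)⁻¹ with hρdef
  have hP : ∀ (x t : W), cs.IsReflection t → ρ (x * t) = ρ x ∨ ρ (x * t) = ρ x * t := by
    intro x t ht
    have hxt : (x * t)⁻¹ = t * x⁻¹ := by rw [mul_inv_rev, ht.inv]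
    rcases hτ x⁻¹ t ht with h | h
    · left
      simp only [hρdef]
      rw [hxt, h]
    · right
      simp only [hρdef]
      rw [hxt, h, mul_inv_rev, ht.inv]
  have hsep : ∀ {i j : B}, (coxeterGraph M).Adj i j →
      (cs.simple i * cs.simple j) * (cs.simple i * cs.simple j) ≠ 1 := by
    intro i j hadj
    exact simple_mul_simple_sq_ne_one cs hfin (hadj : i ≠ j ∧ (M i j = 0 ∨ 3 ≤ M i j)).1
      ((hadj : i ≠ j ∧ (M i j = 0 ∨ 3 ≤ M i j)).2.resolve_left (hfin i j))
  -- one-step propagation along an edge of the Coxeter graph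
  have key : ∀ (x : W) {i j : B}, (coxeterGraph M).Adj i j →
      ρ (x * cs.simple i) = ρ x → ρ (x * cs.simple j) = ρ x := by
    intro x i j hadj hFa
    have r_bab : cs.IsReflection (cs.simple j * cs.simple i * cs.simple j) := by
      have h := (cs.isReflection_simple i).conj (cs.simple j)
      rwa [cs.inv_simple] at h
    have r_aba : cs.IsReflection (cs.simple i * cs.simple j * cs.simple i) := by
      have h := (cs.isReflection_simple j).conj (cs.simple i)
      rwa [cs.inv_simple] at h
    have hPbab := hP (x * cs.simple j) (cs.simple j * cs.simple i * cs.simple j) r_bab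
    have hxbab : x * cs.simple j * (cs.simple j * cs.simple i * cs.simple j)
        = x * cs.simple i * cs.simple j := by
      rw [mul_assoc x (cs.simple j), mul_assoc (cs.simple j) (cs.simple i),
        cs.simple_mul_simple_cancel_left, ← mul_assoc]
    rw [hxbab] at hPbab
    have hPxaba := hP x (cs.simple i * cs.simple j * cs.simple i) r_aba
    have hxaba : x * (cs.simple i * cs.simple j * cs.simple i)
        = x * cs.simple i * cs.simple j * cs.simple i := by
      simp only [mul_assoc]
    rw [hxaba] at hPxaba
    exact dihedral_step (cs.simple_mul_simple_self i) (cs.simple_mul_simple_self j)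
      (hsep hadj) (hP x (cs.simple j) (cs.isReflection_simple j))
      (hP (x * cs.simple i) (cs.simple j) (cs.isReflection_simple j))
      hPbab
      (hP (x * cs.simple i * cs.simple j) (cs.simple i) (cs.isReflection_simple i))
      hPxaba hFa
  have hiff : ∀ (x : W) {i j : B}, (coxeterGraph M).Adj i j →
      ((ρ (x * cs.simple i) = ρ x) ↔ (ρ (x * cs.simple j) = ρ x)) :=
    fun x _ _ h => ⟨key x h, key x h.symm⟩
  have hreach : ∀ (x : W) (i j : B),
      ((ρ (x * cs.simple i) = ρ x) ↔ (ρ (x * cs.simple j) = ρ x)) := by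
    intro x i j
    obtain ⟨w⟩ := hconn.preconnected i j
    induction w with
    | nil => exact Iff.rfl
    | cons h _ ih => exact (hiff x h).trans ih
  have hglobal : ∀ (w : W) (i : B),
      ((ρ (w * cs.simple i) = ρ w) ↔ (ρ (1 * cs.simple i₀) = ρ 1)) := by
    intro w
    refine cs.simple_induction_right
      (p := fun w => ∀ i : B, ((ρ (w * cs.simple i) = ρ w) ↔ (ρ (1 * cs.simple i₀) = ρ 1)))
      w (fun i => hreach 1 i i₀) ?_
    intro w j hw i
    refine (hreach (w * cs.simple j) i j).trans ?_
    rw [cs.simple_mul_simple_cancel_right j]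
    rw [eq_comm]
    exact hw j
  by_cases hbase : ρ (1 * cs.simple i₀) = ρ 1
  · -- every edge is folded: τ is constant
    have hfold : ∀ (w : W) (i : B), ρ (w * cs.simple i) = ρ w :=
      fun w i => (hglobal w i).mpr hbase
    have hconst : ∀ w : W, ρ w = ρ 1 := by
      intro w
      exact cs.simple_induction_right (p := fun w => ρ w = ρ 1) w rfl
        (fun w i hw => (hfold w i).trans hw)
    left
    refine ⟨τ 1, fun x => ?_⟩
    have h1 : ρ x⁻¹ = ρ 1 := hconst x⁻¹
    simp only [hρdef, inv_inv, inv_one] at h1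
    exact inv_injective h1
  · -- every edge is preserved: τ is a right translation
    have hpres : ∀ (w : W) (i : B), ρ (w * cs.simple i) = ρ w * cs.simple i := by
      intro w i
      rcases hP w (cs.simple i) (cs.isReflection_simple i) with h | h
      · exact absurd ((hglobal w i).mp h) hbase
      · exact h
    have htrans : ∀ w : W, ρ w = ρ 1 * w := by
      intro w
      refine cs.simple_induction_right (p := fun w => ρ w = ρ 1 * w) w (by simp) ?_
      intro w i hw
      rw [hpres w i, hw, mul_assoc]
    right
    refine ⟨τ 1, fun x => ?_⟩
    have h1 := htrans x⁻¹
    simp only [hρdef, inv_inv, inv_one] at h1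
    have h2 := congrArg (·⁻¹) h1
    simp only [inv_inv, mul_inv_rev] at h2
    exact h2
end

section
/- Let n ≥ 1. A self-map τ : S_n → S_n of the symmetric group on n symbols satisfying τ(θσ) ∈ {τ(θ), (θσθ⁻¹)·τ(θ)} for every θ ∈ S_n and every c-simple transposition σ is either constant or a right translation (i.e., there exists w ∈ S_n with τ(θ) = θ·w for all θ ∈ S_n). -/
set_option linter.dupNamespace false
set_option maxHeartbeats 1000000

namespace CsimpleAux

open Fin.NatCast Fin.CommRing

/-- the c-simple transposition `(j, j+1)` in `S_{m+2}`. -/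
abbrev sj (m : ℕ) (j : Fin (m + 2)) : Equiv.Perm (Fin (m + 2)) := Equiv.swap j (j + 1)

lemma cast_ne_zero {m k : ℕ} (h1 : 1 ≤ k) (h2 : k < m + 2) : (k : Fin (m + 2)) ≠ 0 := by
  intro hE
  have hv := Fin.val_cast_of_lt (n := m + 2) h2
  rw [hE] at hv
  simp at hv
  omega

lemma add_cast_ne {m : ℕ} (a : Fin (m + 2)) {k : ℕ} (h1 : 1 ≤ k) (h2 : k < m + 2) :
    a + (k : Fin (m + 2)) ≠ a := by
  intro hE
  have h' : a + (k : Fin (m + 2)) = a + 0 := by rw [add_zero]; exact hE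
  exact cast_ne_zero h1 h2 (add_left_cancel h')

lemma cast_add_one_eq {m : ℕ} (a : Fin (m + 2)) (i : ℕ) :
    a + (i : Fin (m + 2)) + 1 = a + ((i + 1 : ℕ) : Fin (m + 2)) := by
  push_cast
  ring

lemma succ_add_cast {m : ℕ} (a : Fin (m + 2)) (i : ℕ) :
    (a + 1) + (i : Fin (m + 2)) = a + ((i + 1 : ℕ) : Fin (m + 2)) := by
  push_cast
  ring

lemma add_cast_sub_val {m : ℕ} (j : Fin (m + 2)) {k : ℕ} (hk : k < m + 2) :
    ((j + (k : Fin (m + 2))) - j).val = k := by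
  rw [add_sub_cancel_left, Fin.val_cast_of_lt hk]

lemma cast_m1 {m : ℕ} : ((m + 1 : ℕ) : Fin (m + 2)) = -1 := by
  have h1 : ((m + 1 : ℕ) : Fin (m + 2)) + 1 = 0 := by
    have h : ((m + 1 : ℕ) : Fin (m + 2)) + 1 = ((m + 1 + 1 : ℕ) : Fin (m + 2)) := by
      push_cast; ring
    rw [h]
    exact Fin.natCast_self (m + 2)
  exact eq_neg_of_add_eq_zero_left h1

/-- the partial product `s_j s_{j+1} ⋯ s_{j+i-1}`. -/
def Q (m : ℕ) (j : Fin (m + 2)) : ℕ → Equiv.Perm (Fin (m + 2))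
  | 0 => 1
  | (i + 1) => Q m j i * sj m (j + (i : Fin (m + 2)))

lemma Q_apply (m : ℕ) (j : Fin (m + 2)) :
    ∀ i, i ≤ m + 1 → ∀ p : Fin (m + 2),
      Q m j i p = if (p - j).val < i then p + 1
        else if (p - j).val = i then j else p := by
  intro i
  induction i with
  | zero =>
    intro _ p
    rw [Q]
    simp only [Equiv.Perm.one_apply]
    rw [if_neg (by omega)]
    by_cases hp : (p - j).val = 0
    · rw [if_pos hp]
      have h0 : p - j = 0 := Fin.ext (by rw [hp, Fin.val_zero])
      exact sub_eq_zero.mp h0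
    · rw [if_neg hp]
  | succ i ih =>
    intro hi p
    have hi' : i ≤ m + 1 := by omega
    rw [Q]
    rw [Equiv.Perm.mul_apply]
    by_cases h1 : p = j + (i : Fin (m + 2))
    · have hd : (p - j).val = i := by rw [h1]; exact add_cast_sub_val j (by omega)
      have hsw : (sj m (j + (i : Fin (m + 2)))) p = j + ((i + 1 : ℕ) : Fin (m + 2)) := by
        rw [h1, ← cast_add_one_eq]
        exact Equiv.swap_apply_left _ _
      have hd2 : ((j + ((i + 1 : ℕ) : Fin (m + 2))) - j).val = i + 1 :=
        add_cast_sub_val j (by omega)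
      rw [hsw, ih hi', hd2, hd]
      split_ifs <;> first
        | omega
        | (rw [h1, cast_add_one_eq])
    · by_cases h2 : p = j + (i : Fin (m + 2)) + 1
      · have hd : (p - j).val = i + 1 := by
          rw [h2, cast_add_one_eq]
          exact add_cast_sub_val j (by omega)
        have hsw : (sj m (j + (i : Fin (m + 2)))) p = j + (i : Fin (m + 2)) := by
          rw [h2]; exact Equiv.swap_apply_right _ _
        have hd2 : ((j + ((i : ℕ) : Fin (m + 2))) - j).val = i := add_cast_sub_val j (by omega)
        rw [hsw, ih hi', hd2, hd]
        split_ifs <;> first | rfl | omega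
      · have hsw : (sj m (j + (i : Fin (m + 2)))) p = p :=
          Equiv.swap_apply_of_ne_of_ne h1 h2
        have hne1 : (p - j).val ≠ i := by
          intro hv
          apply h1
          have h' : p - j = (i : Fin (m + 2)) :=
            Fin.ext (by rw [hv, Fin.val_cast_of_lt (show i < m + 2 by omega)])
          rw [← h', add_sub_cancel]
        have hne2 : (p - j).val ≠ i + 1 := by
          intro hv
          apply h2
          have h' : p - j = ((i + 1 : ℕ) : Fin (m + 2)) :=
            Fin.ext (by rw [hv, Fin.val_cast_of_lt (show i + 1 < m + 2 by omega)])
          rw [cast_add_one_eq, ← h', add_sub_cancel]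
        rw [hsw, ih hi']
        split_ifs <;> first | rfl | omega

lemma Q_top (m : ℕ) (j : Fin (m + 2)) : Q m j (m + 1) = finRotate (m + 2) := by
  apply Equiv.ext
  intro p
  rw [Q_apply m j (m + 1) le_rfl p, finRotate_succ_apply]
  have hle : (p - j).val ≤ m + 1 := Fin.is_le _
  by_cases hlt : (p - j).val < m + 1
  · rw [if_pos hlt]
  · have heq : (p - j).val = m + 1 := by omega
    rw [if_neg hlt, if_pos heq]
    have hpj : p - j = ((m + 1 : ℕ) : Fin (m + 2)) :=
      Fin.ext (by rw [heq, Fin.val_cast_of_lt (by omega)])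
    have hp : p = j + ((m + 1 : ℕ) : Fin (m + 2)) := by
      rw [← hpj, add_sub_cancel]
    rw [hp, cast_m1]
    ring


lemma sj_inv {m : ℕ} (j : Fin (m + 2)) : (sj m j)⁻¹ = sj m j := Equiv.swap_inv _ _

lemma sj_mul_self {m : ℕ} (j : Fin (m + 2)) : sj m j * sj m j = 1 := Equiv.swap_mul_self _ _

lemma swap_mem {m : ℕ} (x y : Fin (m + 2)) :
    Equiv.swap x y ∈ Submonoid.closure (Set.range (sj m)) := by
  have step : ∀ k : ℕ, k ≤ m + 1 → ∀ a : Fin (m + 2),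
      Equiv.swap a (a + (k : Fin (m + 2))) ∈ Submonoid.closure (Set.range (sj m)) := by
    intro k
    induction k with
    | zero =>
      intro _ a
      rw [Nat.cast_zero, add_zero, Equiv.swap_self]
      exact Submonoid.one_mem _
    | succ k ih =>
      intro hk a
      rcases Nat.eq_zero_or_pos k with rfl | hkpos
      · have h1 : a + ((0 + 1 : ℕ) : Fin (m + 2)) = a + 1 := by push_cast; ring
        rw [h1]
        exact Submonoid.subset_closure ⟨a, rfl⟩
      · have hmem := ih (by omega) a
        have hga : (sj m (a + (k : Fin (m + 2)))) a = a := by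
          apply Equiv.swap_apply_of_ne_of_ne
        -- a ≠ a + k
          · exact (add_cast_ne a (by omega) (by omega)).symm
          · rw [cast_add_one_eq]
            exact (add_cast_ne a (by omega) (by omega)).symm
        have hgb : (sj m (a + (k : Fin (m + 2)))) (a + (k : Fin (m + 2)))
            = a + ((k + 1 : ℕ) : Fin (m + 2)) := by
          rw [← cast_add_one_eq]
          exact Equiv.swap_apply_left _ _
        have key : Equiv.swap a (a + ((k + 1 : ℕ) : Fin (m + 2))) =
            sj m (a + (k : Fin (m + 2))) * Equiv.swap a (a + (k : Fin (m + 2))) *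
              (sj m (a + (k : Fin (m + 2))))⁻¹ := by
          nth_rewrite 1 [← hga]
          rw [← hgb]
          exact Equiv.swap_apply_apply _ _ _
        rw [key]
        refine Submonoid.mul_mem _ (Submonoid.mul_mem _ ?_ hmem) ?_
        · exact Submonoid.subset_closure ⟨_, rfl⟩
        · rw [sj_inv]
          exact Submonoid.subset_closure ⟨_, rfl⟩
  by_cases hxy : x = y
  · rw [hxy, Equiv.swap_self]
    exact Submonoid.one_mem _
  · have hy : y = x + (((y - x).val : ℕ) : Fin (m + 2)) := by
      rw [Fin.cast_val_eq_self]
      ring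
    rw [hy]
    exact step _ (Fin.is_le _) x

lemma exists_list {m : ℕ} (σ : Equiv.Perm (Fin (m + 2))) :
    ∃ l : List (Equiv.Perm (Fin (m + 2))), (∀ x ∈ l, ∃ j, x = sj m j) ∧ l.prod = σ := by
  have hM : σ ∈ Submonoid.closure (Set.range (sj m)) :=
    Equiv.Perm.swap_induction_on σ (Submonoid.one_mem _)
      (fun f x y _ ihf => Submonoid.mul_mem _ (swap_mem x y) ihf)
  obtain ⟨l, hl, hlp⟩ := Submonoid.exists_list_of_mem_closure hM
  refine ⟨l, fun x hx => ?_, hlp⟩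
  obtain ⟨j, hj⟩ := hl x hx
  exact ⟨j, hj.symm⟩

section Tracking

variable {m : ℕ} {h : Equiv.Perm (Fin (m + 2)) → Equiv.Perm (Fin (m + 2))}

lemma path_step (H : ∀ θ j, h (θ * sj m j) = h θ ∨ h (θ * sj m j) = sj m j * h θ)
    (θ : Equiv.Perm (Fin (m + 2))) (j : Fin (m + 2)) (i : ℕ) :
    h (θ * Q m j (i + 1)) = h (θ * Q m j i) ∨
      h (θ * Q m j (i + 1)) = sj m (j + (i : Fin (m + 2))) * h (θ * Q m j i) := by
  have e : θ * Q m j (i + 1) = (θ * Q m j i) * sj m (j + (i : Fin (m + 2))) := by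
    rw [Q, mul_assoc]
  rw [e]
  exact H (θ * Q m j i) (j + (i : Fin (m + 2)))

lemma w_spec2 (H : ∀ θ j, h (θ * sj m j) = h θ ∨ h (θ * sj m j) = sj m j * h θ)
    (θ : Equiv.Perm (Fin (m + 2))) (p : Fin (m + 2)) :
    (h (θ * finRotate (m + 2)) * (h θ)⁻¹) p = p ∨
      (h (θ * finRotate (m + 2)) * (h θ)⁻¹) p = p - 1 := by
  have key : ∀ i, i ≤ m → (h (θ * Q m (p + 1) i) * (h θ)⁻¹) p = p := by
    intro i
    induction i with
    | zero =>
      intro _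
      rw [Q, mul_one]
      simp
    | succ i ih =>
      intro hi
      rcases path_step H θ (p + 1) i with hc | hc
      · rw [hc]; exact ih (by omega)
      · rw [hc, mul_assoc, Equiv.Perm.mul_apply, ih (by omega)]
        apply Equiv.swap_apply_of_ne_of_ne
        · rw [succ_add_cast]
          exact (add_cast_ne p (by omega) (by omega)).symm
        · rw [succ_add_cast, cast_add_one_eq]
          exact (add_cast_ne p (by omega) (by omega)).symm
  have e : θ * finRotate (m + 2) = θ * Q m (p + 1) (m + 1) := by rw [Q_top]
  rcases path_step H θ (p + 1) m with hc | hc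
  · left
    rw [e, hc]
    exact key m le_rfl
  · right
    rw [e, hc, mul_assoc, Equiv.Perm.mul_apply, key m le_rfl]
    have hm : (p + 1) + ((m : ℕ) : Fin (m + 2)) = p - 1 := by
      rw [succ_add_cast, cast_m1]
      ring
    rw [hm]
    show Equiv.swap (p - 1) (p - 1 + 1) p = p - 1
    rw [show p - 1 + 1 = p from by ring]
    exact Equiv.swap_apply_right _ _

lemma L1_forward (H : ∀ θ j, h (θ * sj m j) = h θ ∨ h (θ * sj m j) = sj m j * h θ)
    (θ : Equiv.Perm (Fin (m + 2))) (j : Fin (m + 2))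
    (hb : h (θ * sj m j) = sj m j * h θ) :
    (h (θ * finRotate (m + 2)) * (h θ)⁻¹) (j + 1) = j := by
  have hQ1 : θ * Q m j 1 = θ * sj m j := by
    rw [Q, Q]
    simp
  have key : ∀ i, i ≤ m → (h (θ * Q m j (i + 1)) * (h θ)⁻¹) (j + 1) = j := by
    intro i
    induction i with
    | zero =>
      intro _
      simp only [Nat.zero_add]
      rw [hQ1, hb, mul_inv_cancel_right]
      exact Equiv.swap_apply_right _ _
    | succ i ih =>
      intro hi
      rcases path_step H θ j (i + 1) with hc | hc
      · rw [hc]; exact ih (by omega)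
      · rw [hc, mul_assoc, Equiv.Perm.mul_apply, ih (by omega)]
        apply Equiv.swap_apply_of_ne_of_ne
        · exact (add_cast_ne j (by omega) (by omega)).symm
        · rw [cast_add_one_eq]
          exact (add_cast_ne j (by omega) (by omega)).symm
  have e : θ * finRotate (m + 2) = θ * Q m j (m + 1) := by rw [Q_top]
  rw [e]
  exact key m le_rfl

lemma L1_backward (H : ∀ θ j, h (θ * sj m j) = h θ ∨ h (θ * sj m j) = sj m j * h θ)
    (θ : Equiv.Perm (Fin (m + 2))) (j : Fin (m + 2))
    (ha : h (θ * sj m j) = h θ) :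
    (h (θ * finRotate (m + 2)) * (h θ)⁻¹) (j + 1) ≠ j := by
  have hQ1 : θ * Q m j 1 = θ * sj m j := by
    rw [Q, Q]
    simp
  have key : ∀ i, i ≤ m →
      1 ≤ (((h (θ * Q m j (i + 1)) * (h θ)⁻¹) (j + 1)) - j).val ∧
        (((h (θ * Q m j (i + 1)) * (h θ)⁻¹) (j + 1)) - j).val ≤ i + 1 := by
    intro i
    induction i with
    | zero =>
      intro _
      simp only [Nat.zero_add]
      rw [hQ1, ha, mul_inv_cancel, Equiv.Perm.one_apply, add_sub_cancel_left, Fin.val_one]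
      omega
    | succ i ih =>
      intro hi
      have ihs := ih (by omega)
      rcases path_step H θ j (i + 1) with hc | hc
      · rw [hc]
        exact ⟨ihs.1, by omega⟩
      · rw [hc, mul_assoc, Equiv.Perm.mul_apply]
        set v := (h (θ * Q m j (i + 1)) * (h θ)⁻¹) (j + 1) with hv
        by_cases h1 : v = j + ((i + 1 : ℕ) : Fin (m + 2))
        · have hsw : (sj m (j + ((i + 1 : ℕ) : Fin (m + 2)))) v
              = j + ((i + 1 + 1 : ℕ) : Fin (m + 2)) := by
            rw [h1, ← cast_add_one_eq j (i + 1)]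
            exact Equiv.swap_apply_left _ _
          rw [hsw, add_cast_sub_val j (show i + 1 + 1 < m + 2 by omega)]
          omega
        · by_cases h2 : v = j + ((i + 1 : ℕ) : Fin (m + 2)) + 1
          · exfalso
            have hd : (v - j).val = i + 1 + 1 := by
              rw [h2, cast_add_one_eq]
              exact add_cast_sub_val j (by omega)
            omega
          · rw [Equiv.swap_apply_of_ne_of_ne h1 h2]
            exact ⟨ihs.1, by omega⟩
  have e : θ * finRotate (m + 2) = θ * Q m j (m + 1) := by rw [Q_top]
  rw [e]
  intro hEq
  have hk := (key m le_rfl).1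
  rw [hEq, sub_self] at hk
  simp at hk

lemma B_symm {θ : Equiv.Perm (Fin (m + 2))} {j : Fin (m + 2)}
    (hb : h (θ * sj m j) = sj m j * h θ) :
    h ((θ * sj m j) * sj m j) = sj m j * h (θ * sj m j) := by
  rw [mul_assoc, sj_mul_self, mul_one, hb, ← mul_assoc, sj_mul_self, one_mul]

lemma allB_of_B (H : ∀ θ j, h (θ * sj m j) = h θ ∨ h (θ * sj m j) = sj m j * h θ)
    (θ : Equiv.Perm (Fin (m + 2))) (j₀ : Fin (m + 2))
    (hb : h (θ * sj m j₀) = sj m j₀ * h θ) :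
    ∀ k, h (θ * sj m k) = sj m k * h θ := by
  have hw0 : (h (θ * finRotate (m + 2)) * (h θ)⁻¹) (j₀ + 1) = j₀ := L1_forward H θ j₀ hb
  have hstep : ∀ kk : ℕ,
      (h (θ * finRotate (m + 2)) * (h θ)⁻¹) ((j₀ + 1) - (kk : Fin (m + 2)))
        = ((j₀ + 1) - (kk : Fin (m + 2))) - 1 := by
    intro kk
    induction kk with
    | zero =>
      rw [Nat.cast_zero, sub_zero, hw0, add_sub_cancel_right]
    | succ kk ih =>
      have hsub : (j₀ + 1) - ((kk + 1 : ℕ) : Fin (m + 2))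
          = ((j₀ + 1) - (kk : Fin (m + 2))) - 1 := by
        push_cast
        ring
      rcases w_spec2 H θ ((j₀ + 1) - ((kk + 1 : ℕ) : Fin (m + 2))) with hc | hc
      · exfalso
        have hinj : ((j₀ + 1) - ((kk + 1 : ℕ) : Fin (m + 2)))
            = ((j₀ + 1) - (kk : Fin (m + 2))) := by
          apply (h (θ * finRotate (m + 2)) * (h θ)⁻¹).injective
          rw [hc, ih, ← hsub]
        rw [hsub] at hinj
        have h1 : (1 : Fin (m + 2)) = 0 := sub_eq_self.mp hinj
        have hv1 := Fin.val_one m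
        rw [h1] at hv1
        simp at hv1
      · exact hc
  intro k
  have hk : (h (θ * finRotate (m + 2)) * (h θ)⁻¹) (k + 1) = k := by
    have hx := hstep (((j₀ + 1) - (k + 1)).val)
    rw [Fin.cast_val_eq_self, sub_sub_cancel] at hx
    rw [hx, add_sub_cancel_right]
  rcases H θ k with hc | hc
  · exact absurd hk (L1_backward H θ k hc)
  · exact hc

end Tracking

theorem dichotomy (m : ℕ) (h : Equiv.Perm (Fin (m + 2)) → Equiv.Perm (Fin (m + 2)))
    (H1 : h 1 = 1)
    (H : ∀ θ j, h (θ * sj m j) = h θ ∨ h (θ * sj m j) = sj m j * h θ) :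
    (∀ θ, h θ = 1) ∨ (∀ θ, h θ = θ⁻¹) := by
  by_cases hB : ∃ θ j, h (θ * sj m j) = sj m j * h θ
  · right
    obtain ⟨θ₀, j₀, hb₀⟩ := hB
    have hprop : ∀ l : List (Equiv.Perm (Fin (m + 2))), (∀ x ∈ l, ∃ j, x = sj m j) →
        ∃ j, h ((θ₀ * l.prod) * sj m j) = sj m j * h (θ₀ * l.prod) := by
      intro l
      induction l using List.reverseRecOn with
      | nil =>
        intro _
        rw [List.prod_nil, mul_one]
        exact ⟨j₀, hb₀⟩
      | append_singleton l'' a ih =>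
        intro hmem
        obtain ⟨j, rfl⟩ := hmem a (by simp)
        obtain ⟨j1, hj1⟩ := ih (fun x hx => hmem x (by simp [hx]))
        have hBj := allB_of_B H (θ₀ * l''.prod) j1 hj1 j
        refine ⟨j, ?_⟩
        have hsymm := B_symm (m := m) hBj
        rw [List.prod_append, List.prod_singleton, ← mul_assoc]
        exact hsymm
    have hBall : ∀ θ k, h (θ * sj m k) = sj m k * h θ := by
      intro θ k
      obtain ⟨l, hl, hlp⟩ := exists_list (m := m) (θ₀⁻¹ * θ)
      obtain ⟨j, hj⟩ := hprop l hl
      have hθ : θ₀ * l.prod = θ := by rw [hlp, ← mul_assoc, mul_inv_cancel, one_mul]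
      rw [hθ] at hj
      exact allB_of_B H θ j hj k
    have key : ∀ l : List (Equiv.Perm (Fin (m + 2))), (∀ x ∈ l, ∃ j, x = sj m j) →
        h l.prod = (l.prod)⁻¹ := by
      intro l
      induction l using List.reverseRecOn with
      | nil =>
        intro _
        rw [List.prod_nil, inv_one]
        exact H1
      | append_singleton l'' a ih =>
        intro hmem
        obtain ⟨j, rfl⟩ := hmem a (by simp)
        rw [List.prod_append, List.prod_singleton, hBall l''.prod j,
          ih (fun x hx => hmem x (by simp [hx])), mul_inv_rev, sj_inv]
    intro θ
    obtain ⟨l, hl, hlp⟩ := exists_list (m := m) θ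
    rw [← hlp]
    exact key l hl
  · left
    have hA : ∀ θ j, h (θ * sj m j) = h θ := by
      intro θ j
      rcases H θ j with hc | hc
      · exact hc
      · exact absurd ⟨θ, j, hc⟩ hB
    have key : ∀ l : List (Equiv.Perm (Fin (m + 2))), (∀ x ∈ l, ∃ j, x = sj m j) →
        h l.prod = 1 := by
      intro l
      induction l using List.reverseRecOn with
      | nil =>
        intro _
        rw [List.prod_nil]
        exact H1
      | append_singleton l'' a ih =>
        intro hmem
        obtain ⟨j, rfl⟩ := hmem a (by simp)
        rw [List.prod_append, List.prod_singleton, hA l''.prod j]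
        exact ih (fun x hx => hmem x (by simp [hx]))
    intro θ
    obtain ⟨l, hl, hlp⟩ := exists_list (m := m) θ
    rw [← hlp]
    exact key l hl

end CsimpleAux

/-- **Proposition.** Let `n ≥ 1`. A self-map `τ` of the symmetric group `Sₙ` satisfying
`τ(θσ) ∈ {τ(θ), (θσθ⁻¹)·τ(θ)}` for every `θ ∈ Sₙ` and every c-simple transposition
`σ ∈ {(1 2), (2 3), …, (n−1 n), (n 1)}` is either constant or a right translation.
(The c-simple transpositions are the `Equiv.swap j (j+1)` for `j : Fin n`, with cyclic
successor given by `finRotate n`.) -/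
theorem csimple_lipschitz_constant_or_rightTranslation
    (n : ℕ) (hn : 1 ≤ n)
    (τ : Equiv.Perm (Fin n) → Equiv.Perm (Fin n))
    (hτ : ∀ (θ : Equiv.Perm (Fin n)) (j : Fin n),
      τ (θ * Equiv.swap j (finRotate n j)) = τ θ ∨
      τ (θ * Equiv.swap j (finRotate n j)) =
        (θ * Equiv.swap j (finRotate n j) * θ⁻¹) * τ θ) :
    (∃ c : Equiv.Perm (Fin n), ∀ θ : Equiv.Perm (Fin n), τ θ = c) ∨
    (∃ w : Equiv.Perm (Fin n), ∀ θ : Equiv.Perm (Fin n), τ θ = θ * w) := by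
  by_cases hn1 : n = 1
  · subst hn1
    left
    refine ⟨τ 1, fun θ => ?_⟩
    have hθ : θ = 1 := Equiv.ext fun x => by
      rw [Fin.eq_zero (θ x), Fin.eq_zero ((1 : Equiv.Perm (Fin 1)) x)]
    rw [hθ]
  · obtain ⟨m, rfl⟩ : ∃ m, n = m + 2 := ⟨n - 2, by omega⟩
    have hrot : ∀ j : Fin (m + 2),
        Equiv.swap j (finRotate (m + 2) j) = CsimpleAux.sj m j := by
      intro j
      rw [finRotate_succ_apply]
    have H1 : (1 : Equiv.Perm (Fin (m + 2)))⁻¹ * τ 1 * (τ 1)⁻¹ = 1 := by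
      simp
    have H : ∀ (θ : Equiv.Perm (Fin (m + 2))) (j : Fin (m + 2)),
        (θ * CsimpleAux.sj m j)⁻¹ * τ (θ * CsimpleAux.sj m j) * (τ 1)⁻¹
          = θ⁻¹ * τ θ * (τ 1)⁻¹ ∨
        (θ * CsimpleAux.sj m j)⁻¹ * τ (θ * CsimpleAux.sj m j) * (τ 1)⁻¹
          = CsimpleAux.sj m j * (θ⁻¹ * τ θ * (τ 1)⁻¹) := by
      intro θ j
      rcases hτ θ j with hc | hc <;> rw [hrot j] at hc
      · right
        rw [hc, mul_inv_rev, CsimpleAux.sj_inv]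
        simp only [mul_assoc]
      · left
        rw [hc]
        group
    rcases CsimpleAux.dichotomy m (fun θ => θ⁻¹ * τ θ * (τ 1)⁻¹) H1 H with hd | hd
    · right
      refine ⟨τ 1, fun θ => ?_⟩
      have h3 : θ⁻¹ * τ θ * (τ 1)⁻¹ = 1 := hd θ
      have h2 := congrArg (fun x => θ * x * τ 1) h3
      simpa [mul_assoc] using h2
    · left
      refine ⟨τ 1, fun θ => ?_⟩
      have h3 : θ⁻¹ * τ θ * (τ 1)⁻¹ = θ⁻¹ := hd θ
      have h2 := congrArg (fun x => θ * x * τ 1) h3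
      simpa [mul_assoc] using h2
end

section
/- For n ≥ 1, the symmetric group S_n acts by permutation of coordinates on the space C^n(S¹)_{Π=1} := {(z_1,…,z_n) ∈ (S¹)^n : the z_i are pairwise distinct and z_1 z_2 ⋯ z_n = 1}, and the induced action of S_n on the set of path components of C^n(S¹)_{Π=1} is simply transitive (both free and transitive). -/
open scoped BigOperators Real
open Complex Finset

noncomputable def argA (w : ℂ) : ℝ := π + Complex.arg (-w)

lemma argA_exp {w : ℂ} (hw : ‖w‖ = 1) : Complex.exp (argA w * I) = w := by
  have h0 : ‖-w‖ = 1 := by rw [norm_neg]; exact hw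
  have h2 : Complex.exp ((Complex.arg (-w) : ℝ) * I) = -w := by
    have := Complex.norm_mul_exp_arg_mul_I (-w)
    rwa [h0, ofReal_one, one_mul] at this
  rw [argA, ofReal_add, add_mul, Complex.exp_add, Complex.exp_pi_mul_I, h2]
  ring

lemma argA_pos {w : ℂ} : 0 < argA w := by
  have := Complex.neg_pi_lt_arg (-w)
  simp only [argA]; linarith

lemma eq_one_of_im_zero {w : ℂ} (hw : ‖w‖ = 1) (him : w.im = 0) (hre : 0 ≤ w.re) :
    w = 1 := by
  have h2 : w.re * w.re + w.im * w.im = 1 := by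
    have := Complex.sq_norm w
    rw [hw] at this
    simpa [Complex.normSq_apply, sq] using this.symm
  rw [him] at h2
  have : w.re = 1 := by nlinarith
  exact Complex.ext (by simp [this]) (by simp [him])

lemma argA_lt {w : ℂ} (hw : ‖w‖ = 1) (h1 : w ≠ 1) : argA w < 2 * π := by
  have hle := Complex.arg_le_pi (-w)
  rcases lt_or_eq_of_le hle with h | h
  · simp only [argA]; linarith
  · exfalso
    rw [Complex.arg_eq_pi_iff] at h
    exact h1 (eq_one_of_im_zero hw (by simpa using h.2) (by simpa using le_of_lt h.1))

lemma argA_continuousAt {w : ℂ} (hw : ‖w‖ = 1) (h1 : w ≠ 1) :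
    ContinuousAt argA w := by
  have hslit : -w ∈ Complex.slitPlane := by
    rw [Complex.mem_slitPlane_iff]
    by_cases him : w.im = 0
    · left
      have : w ≠ 0 := by intro h; rw [h] at hw; simp at hw
      -- w real, w ≠ 1, |w|=1 : w = -1, so -w has re = 1 > 0
      have hre : w.re ≤ 0 := by
        by_contra hre
        push_neg at hre
        exact h1 (eq_one_of_im_zero hw him (le_of_lt hre))
      have h2 : w.re * w.re + w.im * w.im = 1 := by
        have := Complex.sq_norm w
        rw [hw] at this
        simpa [Complex.normSq_apply, sq] using this.symm
      rw [him] at h2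
      have : w.re = -1 := by nlinarith
      simp [this]
    · right; simpa using him
  exact (ContinuousAt.add continuousAt_const
    ((Complex.continuousAt_arg hslit).comp continuousAt_neg))

lemma circle_exp_sum {ι : Type*} (s : Finset ι) (f : ι → ℝ) :
    Circle.exp (∑ i ∈ s, f i) = ∏ i ∈ s, Circle.exp (f i) := by
  classical
  induction s using Finset.cons_induction with
  | empty => simp [Circle.exp_zero]
  | cons a s ha ih => rw [Finset.sum_cons, Finset.prod_cons, Circle.exp_add, ih]

lemma exp_mul_I_eq {r s : ℝ} (h : Complex.exp ((r:ℂ) * I) = Complex.exp ((s:ℂ) * I)) :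
    ∃ m : ℤ, r = s + m * (2 * π) := by
  apply Circle.exp_eq_exp.mp
  apply Circle.coe_injective
  simpa [Circle.coe_exp] using h

lemma argA_spec (a b : ℝ) (h : Circle.exp a ≠ Circle.exp b) :
    argA ((Circle.exp a : ℂ) / (Circle.exp b : ℂ))
      = a - b - 2 * π * ⌊(a - b) / (2 * π)⌋ := by
  set w : ℂ := (Circle.exp a : ℂ) / (Circle.exp b : ℂ) with hw
  have habs : ‖w‖ = 1 := by
    simp [hw, map_div₀]
  have hw1 : w ≠ 1 := by
    intro hc
    apply h
    apply Circle.coe_injective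
    rw [hw, div_eq_one_iff_eq (Circle.coe_ne_zero _)] at hc
    exact hc
  have hpi : (0:ℝ) < 2 * π := by positivity
  -- w = exp ((a-b) I)
  have hwexp : w = Complex.exp (((a - b : ℝ):ℂ) * I) := by
    rw [hw, Circle.coe_exp, Circle.coe_exp, ← Complex.exp_sub]
    push_cast
    ring_nf
  set R : ℝ := a - b - 2 * π * ⌊(a - b) / (2 * π)⌋ with hR
  have hexpR : Complex.exp ((R:ℂ) * I) = Complex.exp (((a - b : ℝ):ℂ) * I) := by
    rw [hR]
    push_cast
    rw [sub_mul, Complex.exp_sub]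
    rw [show ((2:ℂ) * π * (⌊(a - b) / (2 * π)⌋:ℂ)) * I = (⌊(a - b) / (2 * π)⌋:ℂ) * (2 * π * I) by ring]
    rw [Complex.exp_int_mul_two_pi_mul_I]
    field_simp
  have hA : Complex.exp ((argA w : ℂ) * I) = Complex.exp ((R:ℂ) * I) := by
    rw [argA_exp habs, hexpR, hwexp]
  obtain ⟨m, hm⟩ := exp_mul_I_eq hA
  -- bounds
  have hRlb : 0 ≤ R := by
    have := Int.floor_le ((a - b) / (2 * π))
    have h2 : 2 * π * ⌊(a - b) / (2 * π)⌋ ≤ a - b := by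
      rw [mul_comm]
      calc (⌊(a - b) / (2 * π)⌋ : ℝ) * (2 * π) ≤ ((a - b) / (2 * π)) * (2 * π) := by
            apply mul_le_mul_of_nonneg_right this (le_of_lt hpi)
        _ = a - b := by field_simp
    simp only [hR]; linarith
  have hRub : R < 2 * π := by
    have := Int.lt_floor_add_one ((a - b) / (2 * π))
    have h2 : a - b < 2 * π * ⌊(a - b) / (2 * π)⌋ + 2 * π := by
      have := mul_lt_mul_of_pos_right this hpi
      calc a - b = ((a - b) / (2 * π)) * (2 * π) := by field_simp
        _ < (⌊(a - b) / (2 * π)⌋ + 1) * (2 * π) := this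
        _ = 2 * π * ⌊(a - b) / (2 * π)⌋ + 2 * π := by ring
    simp only [hR]; linarith
  have hAlb : 0 < argA w := argA_pos
  have hAub : argA w < 2 * π := argA_lt habs hw1
  have hm0 : m = 0 := by
    rcases lt_trichotomy m 0 with h' | h' | h'
    · exfalso
      have hm1 : m ≤ -1 := by omega
      have : (m:ℝ) ≤ -1 := by exact_mod_cast hm1
      nlinarith
    · exact h'
    · exfalso
      have : (1:ℝ) ≤ (m:ℝ) := by exact_mod_cast h'
      nlinarith
  rw [hm0] at hm
  simpa using hm

/-- The configuration space `C^n(S¹)_{Π=1}` of `n`-tuples of pairwise distinct points of the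
circle whose product is `1`. -/
def CircleConfigProdOne (n : ℕ) : Type :=
  {z : Fin n → Circle // Function.Injective z ∧ ∏ i, z i = 1}

noncomputable instance (n : ℕ) : TopologicalSpace (CircleConfigProdOne n) :=
  inferInstanceAs (TopologicalSpace {z : Fin n → Circle // Function.Injective z ∧ ∏ i, z i = 1})

/-- The permutation action of `Sₙ` on `C^n(S¹)_{Π=1}`: `σ · (z₁,…,zₙ) = (z_{σ⁻¹(1)},…,z_{σ⁻¹(n)})`. -/
def permConfigAct (n : ℕ) (σ : Equiv.Perm (Fin n)) (z : CircleConfigProdOne n) :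
    CircleConfigProdOne n :=
  ⟨fun i => z.val (σ⁻¹ i),
    ⟨z.prop.1.comp (Equiv.injective σ⁻¹),
      by rw [Equiv.prod_comp σ⁻¹ z.val]; exact z.prop.2⟩⟩

noncomputable def Psi (n : ℕ) (m : Fin n) (z : CircleConfigProdOne n) : ℂ :=
  (z.val m : ℂ) *
    Complex.exp ((((∑ l ∈ Finset.univ.erase m, argA ((z.val l : ℂ) / (z.val m : ℂ))) / n : ℝ) : ℂ) * I)

lemma psi_pow {n : ℕ} (hn : 0 < n) (m : Fin n) (z : CircleConfigProdOne n) :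
    Psi n m z ^ n = 1 := by
  set A : ℂ := (z.val m : ℂ) with hA
  have hA0 : A ≠ 0 := Circle.coe_ne_zero _
  have hn' : (n:ℂ) ≠ 0 := by exact_mod_cast Nat.cast_ne_zero.mpr hn.ne'
  set S : ℝ := ∑ l ∈ Finset.univ.erase m, argA ((z.val l : ℂ) / A) with hS
  have hprod : (∏ l, (z.val l : ℂ)) = 1 := by
    have h1 := map_prod Circle.coeHom z.val Finset.univ
    rw [z.prop.2] at h1
    exact h1.symm.trans (map_one _)
  have hQ : (∏ l ∈ Finset.univ.erase m, (z.val l : ℂ)) * A = 1 := by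
    rw [hA, Finset.prod_erase_mul Finset.univ _ (Finset.mem_univ m)]
    exact hprod
  have hexp : Complex.exp (((S : ℝ) : ℂ) * I)
      = ∏ l ∈ Finset.univ.erase m, ((z.val l : ℂ) / A) := by
    rw [hS]
    push_cast
    rw [Finset.sum_mul, Complex.exp_sum]
    refine Finset.prod_congr rfl fun l _ => ?_
    exact argA_exp (by simp [map_div₀, hA, Circle.norm_coe])
  have hcard : (Finset.univ.erase m).card = n - 1 := by
    rw [Finset.card_erase_of_mem (Finset.mem_univ m), Finset.card_univ, Fintype.card_fin]
  have hsplit : (∏ l ∈ Finset.univ.erase m, ((z.val l : ℂ) / A))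
      = (∏ l ∈ Finset.univ.erase m, (z.val l : ℂ)) / A ^ (n - 1) := by
    rw [Finset.prod_div_distrib, Finset.prod_const, hcard]
  have hpow1 : A ^ (n - 1) * A = A ^ n := by
    rw [← pow_succ]
    congr 1
    omega
  rw [Psi, mul_pow, ← Complex.exp_nat_mul]
  have harg : (n : ℂ) * ((((S / n : ℝ)) : ℂ) * I) = ((S:ℝ):ℂ) * I := by
    push_cast
    field_simp
  rw [harg, hexp, hsplit, ← hA]
  field_simp [hpow1]
  calc A ^ n * (∏ l ∈ Finset.univ.erase m, (z.val l : ℂ))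
      = A ^ (n-1) * ((∏ l ∈ Finset.univ.erase m, (z.val l : ℂ)) * A) := by
        rw [← hpow1]; ring
    _ = A ^ (n-1) := by rw [hQ, mul_one]

lemma coord_continuous {n : ℕ} (l : Fin n) :
    Continuous (fun z : CircleConfigProdOne n => (z.val l : ℂ)) := by
  have h1 : Continuous (fun z : CircleConfigProdOne n => z.val) := continuous_subtype_val
  have h2 : Continuous (fun z : CircleConfigProdOne n => z.val l) := (continuous_apply l).comp h1
  exact continuous_subtype_val.comp h2

lemma psi_continuous {n : ℕ} (m : Fin n) : Continuous (Psi n m) := by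
  rw [continuous_iff_continuousAt]
  intro z
  have hS : ContinuousAt
      (fun z : CircleConfigProdOne n =>
        ∑ l ∈ Finset.univ.erase m, argA ((z.val l : ℂ) / (z.val m : ℂ))) z := by
    apply tendsto_finset_sum
    intro l hl
    have hlm : l ≠ m := Finset.ne_of_mem_erase hl
    have hdiv : ContinuousAt
        (fun z : CircleConfigProdOne n => (z.val l : ℂ) / (z.val m : ℂ)) z :=
      ContinuousAt.div ((coord_continuous l).continuousAt) ((coord_continuous m).continuousAt)
        (Circle.coe_ne_zero _)
    have habs : ‖(z.val l : ℂ) / (z.val m : ℂ)‖ = 1 := by simp [map_div₀, Circle.norm_coe]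
    have hne1 : ((z.val l : ℂ) / (z.val m : ℂ)) ≠ 1 := by
      intro hc
      rw [div_eq_one_iff_eq (Circle.coe_ne_zero _)] at hc
      exact hlm (z.prop.1 (Circle.coe_injective hc))
    exact ContinuousAt.comp (g := argA)
      (f := fun z : CircleConfigProdOne n => (z.val l : ℂ) / (z.val m : ℂ))
      (argA_continuousAt habs hne1) hdiv
  have : ContinuousAt (fun z : CircleConfigProdOne n =>
      ((((∑ l ∈ Finset.univ.erase m, argA ((z.val l : ℂ) / (z.val m : ℂ))) / n : ℝ)) : ℂ) * I) z := by
    exact (Complex.continuous_ofReal.continuousAt.comp (hS.div_const _)).mul continuousAt_const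
  exact ((coord_continuous m).continuousAt).mul (Complex.continuous_exp.continuousAt.comp this)

lemma psi_joined {n : ℕ} (hn : 0 < n) (m : Fin n) {x y : CircleConfigProdOne n}
    (h : Joined x y) : Psi n m x = Psi n m y := by
  obtain ⟨γ⟩ := h
  have hfin : ({w : ℂ | w ^ n = 1}).Finite := by
    apply Set.Finite.subset (Polynomial.nthRootsFinset n (1:ℂ)).finite_toSet
    intro w hw
    rw [Set.mem_setOf_eq] at hw
    simpa [Polynomial.mem_nthRootsFinset hn] using hw
  haveI := hfin.to_subtype
  have key : Psi n m (γ 0) = Psi n m (γ 1) :=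
    IsPreconnected.constant_of_mapsTo (S := (Set.univ : Set unitInterval))
      (T := {w : ℂ | w ^ n = 1}) (f := fun t => Psi n m (γ t)) isPreconnected_univ hfin.isDiscrete
      (((psi_continuous m).comp γ.continuous).continuousOn)
      (fun t _ => psi_pow hn m (γ t)) trivial trivial
  simpa [γ.source, γ.target] using key

lemma psi_eq {n : ℕ} (hn : 0 < n) (z : CircleConfigProdOne n) (θ : Fin n → ℝ)
    (hz : ∀ l, Circle.exp (θ l) = z.val l) (k : ℤ)
    (hk : ∑ l, θ l = k * (2 * π)) (m : Fin n) :
    Psi n m z = Complex.exp ((((2 * π * ((k : ℝ) -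
      ((∑ l ∈ Finset.univ.erase m, ⌊(θ l - θ m) / (2 * π)⌋ : ℤ) : ℝ)) / n : ℝ)) : ℂ) * I) := by
  have hn' : (n:ℝ) ≠ 0 := Nat.cast_ne_zero.mpr hn.ne'
  have hzne : ∀ l, l ≠ m → Circle.exp (θ l) ≠ Circle.exp (θ m) := by
    intro l hl hc
    apply hl
    apply z.prop.1
    rw [← hz l, ← hz m, hc]
  set N : ℤ := ∑ l ∈ Finset.univ.erase m, ⌊(θ l - θ m) / (2 * π)⌋ with hN
  have hargA : ∀ l ∈ Finset.univ.erase m,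
      argA ((z.val l : ℂ) / (z.val m : ℂ))
        = θ l - θ m - 2 * π * ⌊(θ l - θ m) / (2 * π)⌋ := by
    intro l hl
    rw [← hz l, ← hz m]
    exact argA_spec (θ l) (θ m) (hzne l (Finset.ne_of_mem_erase hl))
  have hsum_erase : ∑ l ∈ Finset.univ.erase m, θ l = (∑ l, θ l) - θ m := by
    have := Finset.sum_erase_add Finset.univ θ (Finset.mem_univ m)
    linarith
  have hcard : ((Finset.univ.erase m).card : ℝ) = (n : ℝ) - 1 := by
    rw [Finset.card_erase_of_mem (Finset.mem_univ m), Finset.card_univ, Fintype.card_fin,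
      Nat.cast_sub hn, Nat.cast_one]
  have hS : (∑ l ∈ Finset.univ.erase m, argA ((z.val l : ℂ) / (z.val m : ℂ)))
      = (k : ℝ) * (2 * π) - n * θ m - 2 * π * (N : ℝ) := by
    rw [Finset.sum_congr rfl hargA]
    have e1 : ∑ l ∈ Finset.univ.erase m,
        (θ l - θ m - 2 * π * ⌊(θ l - θ m) / (2 * π)⌋)
        = (∑ l ∈ Finset.univ.erase m, θ l)
          - (Finset.univ.erase m).card * θ m
          - 2 * π * (N : ℝ) := by
      rw [Finset.sum_sub_distrib, Finset.sum_sub_distrib, Finset.sum_const, nsmul_eq_mul,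
        ← Finset.mul_sum, hN]
      push_cast
      ring
    rw [e1, hsum_erase, hk, hcard]
    ring
  have hzm : (z.val m : ℂ) = Complex.exp (((θ m : ℝ) : ℂ) * I) := by
    rw [← hz m, Circle.coe_exp]
  rw [Psi, hS, hzm, ← Complex.exp_add]
  congr 1
  have hnc : (n:ℂ) ≠ 0 := Nat.cast_ne_zero.mpr hn.ne'
  push_cast
  field_simp
  ring

lemma psi_perm {n : ℕ} (σ : Equiv.Perm (Fin n)) (z : CircleConfigProdOne n) (m : Fin n) :
    Psi n m (permConfigAct n σ z) = Psi n (σ⁻¹ m) z := by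
  have hsum : ∑ l ∈ Finset.univ.erase m,
        argA ((z.val (σ⁻¹ l) : ℂ) / (z.val (σ⁻¹ m) : ℂ))
      = ∑ l ∈ Finset.univ.erase (σ⁻¹ m), argA ((z.val l : ℂ) / (z.val (σ⁻¹ m) : ℂ)) := by
    apply Finset.sum_equiv (σ⁻¹ : Equiv.Perm (Fin n))
    · intro i
      simp [Finset.mem_erase]
    · intro i _
      rfl
  simp only [Psi, permConfigAct, hsum]

lemma floor_diff_not_dvd {n : ℕ} (θ : Fin n → ℝ)
    (hθ : ∀ l m' : Fin n, l ≠ m' → ∀ j : ℤ, (θ l - θ m') / (2 * π) ≠ (j : ℝ))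
    (m m' : Fin n) (hmm : m ≠ m') :
    ¬ ((n:ℤ) ∣ (∑ l ∈ Finset.univ.erase m, ⌊(θ l - θ m) / (2 * π)⌋)
        - (∑ l ∈ Finset.univ.erase m', ⌊(θ l - θ m') / (2 * π)⌋)) := by
  set φ : Fin n → ℝ := fun l => θ l / (2 * π) with hφ
  have hpi : (0:ℝ) < 2 * π := by positivity
  have hsub : ∀ l l' : Fin n, (θ l - θ l') / (2 * π) = φ l - φ l' := by
    intro l l'
    rw [hφ]
    field_simp
  have hint : ∀ l l' : Fin n, l ≠ l' → ∀ j : ℤ, φ l - φ l' ≠ (j : ℝ) := by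
    intro l l' h j
    rw [← hsub]
    exact hθ l l' h j
  have hn2 : 2 ≤ n := by
    have h1 := m.isLt
    have h2 := m'.isLt
    have h3 : m.val ≠ m'.val := fun hc => hmm (Fin.ext hc)
    omega
  intro ⟨c, hc⟩
  simp only [hsub] at hc
  set d : ℝ := φ m' - φ m with hd
  have hdint : ∀ j : ℤ, d ≠ (j : ℝ) := hint m' m hmm.symm
  have hfd : (⌊d⌋ : ℝ) < d := by
    rcases lt_or_eq_of_le (Int.floor_le d) with h | h
    · exact h
    · exact absurd h.symm (hdint ⌊d⌋)
  have hfd2 : d < (⌊d⌋ : ℝ) + 1 := Int.lt_floor_add_one d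
  have hfloorneg : ⌊-d⌋ = -⌊d⌋ - 1 := by
    apply Int.floor_eq_iff.mpr
    constructor
    · push_cast; linarith
    · push_cast; linarith
  set s : Finset (Fin n) := (Finset.univ.erase m).erase m' with hs
  have hmem1 : m' ∈ Finset.univ.erase m := Finset.mem_erase.mpr ⟨hmm.symm, Finset.mem_univ m'⟩
  have hmem2 : m ∈ Finset.univ.erase m' := Finset.mem_erase.mpr ⟨hmm, Finset.mem_univ m⟩
  have hsplit1 : (∑ l ∈ Finset.univ.erase m, ⌊φ l - φ m⌋)
      = (∑ l ∈ s, ⌊φ l - φ m⌋) + ⌊d⌋ := by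
    rw [hs, ← Finset.sum_erase_add (Finset.univ.erase m) _ hmem1, hd]
  have hserase : (Finset.univ.erase m').erase m = s := by
    rw [hs, Finset.erase_right_comm]
  have hsplit2 : (∑ l ∈ Finset.univ.erase m', ⌊φ l - φ m'⌋)
      = (∑ l ∈ s, ⌊φ l - φ m'⌋) + (-⌊d⌋ - 1) := by
    rw [← Finset.sum_erase_add (Finset.univ.erase m') _ hmem2, hserase, ← hfloorneg]
    congr 2
    rw [hd]
    ring_nf
  have hcards : (s.card : ℤ) = (n : ℤ) - 2 := by
    rw [hs, Finset.card_erase_of_mem hmem1, Finset.card_erase_of_mem (Finset.mem_univ m),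
      Finset.card_univ, Fintype.card_fin]
    push_cast [Nat.cast_sub hn2]
    omega
  -- termwise bounds
  have hterm : ∀ l ∈ s, ⌊d⌋ ≤ ⌊φ l - φ m⌋ - ⌊φ l - φ m'⌋ ∧
      ⌊φ l - φ m⌋ - ⌊φ l - φ m'⌋ ≤ ⌊d⌋ + 1 := by
    intro l hl
    have hx : φ l - φ m = (φ l - φ m') + d := by rw [hd]; ring
    constructor
    · have : ⌊φ l - φ m'⌋ + ⌊d⌋ ≤ ⌊φ l - φ m⌋ := by
        apply Int.le_floor.mpr
        rw [hx]
        push_cast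
        have := Int.floor_le (φ l - φ m')
        linarith [Int.floor_le d]
      omega
    · have : ⌊φ l - φ m⌋ < ⌊φ l - φ m'⌋ + ⌊d⌋ + 2 := by
        apply Int.floor_lt.mpr
        rw [hx]
        push_cast
        have := Int.lt_floor_add_one (φ l - φ m')
        linarith
      omega
  have hBl : (s.card : ℤ) * ⌊d⌋ ≤ ∑ l ∈ s, (⌊φ l - φ m⌋ - ⌊φ l - φ m'⌋) := by
    calc (s.card : ℤ) * ⌊d⌋ = ∑ _l ∈ s, ⌊d⌋ := by rw [Finset.sum_const, nsmul_eq_mul]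
      _ ≤ _ := Finset.sum_le_sum (fun l hl => (hterm l hl).1)
  have hBu : (∑ l ∈ s, (⌊φ l - φ m⌋ - ⌊φ l - φ m'⌋)) ≤ (s.card : ℤ) * (⌊d⌋ + 1) := by
    calc _ ≤ ∑ _l ∈ s, (⌊d⌋ + 1) := Finset.sum_le_sum (fun l hl => (hterm l hl).2)
      _ = (s.card : ℤ) * (⌊d⌋ + 1) := by rw [Finset.sum_const, nsmul_eq_mul]
  have hBsum : ∑ l ∈ s, (⌊φ l - φ m⌋ - ⌊φ l - φ m'⌋)
      = (∑ l ∈ s, ⌊φ l - φ m⌋) - (∑ l ∈ s, ⌊φ l - φ m'⌋) := Finset.sum_sub_distrib _ _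
  rw [hsplit1, hsplit2] at hc
  rw [hBsum, hcards] at hBl hBu
  have hc' : (∑ l ∈ s, ⌊φ l - φ m⌋) - (∑ l ∈ s, ⌊φ l - φ m'⌋) + 2 * ⌊d⌋ + 1
      = (n:ℤ) * c := by linarith [hc]
  have hnc1 : (n:ℤ) * ⌊d⌋ < (n:ℤ) * c := by nlinarith [hc', hBl]
  have hnc2 : (n:ℤ) * c < (n:ℤ) * (⌊d⌋ + 1) := by nlinarith [hc', hBu]
  have hnpos : (0:ℤ) < (n:ℤ) := by exact_mod_cast Nat.lt_of_lt_of_le Nat.zero_lt_two hn2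
  have h1 := (mul_lt_mul_iff_right₀ hnpos).mp hnc1
  have h2 := (mul_lt_mul_iff_right₀ hnpos).mp hnc2
  omega

lemma freeness_aux {n : ℕ} (hn : 0 < n) (σ : Equiv.Perm (Fin n)) (z : CircleConfigProdOne n)
    (h : Joined (permConfigAct n σ z) z) : σ = 1 := by
  have hpi : (0:ℝ) < 2 * π := by positivity
  set θ : Fin n → ℝ := fun l => Complex.arg ((z.val l : ℂ)) with hθ
  have hz : ∀ l, Circle.exp (θ l) = z.val l := fun l => Circle.exp_arg (z.val l)
  have h1 : Circle.exp (∑ l, θ l) = Circle.exp 0 := by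
    rw [circle_exp_sum, Finset.prod_congr rfl (fun l _ => hz l), z.prop.2, Circle.exp_zero]
  obtain ⟨k, hk⟩ : ∃ k : ℤ, ∑ l, θ l = (k:ℝ) * (2 * π) := by
    obtain ⟨m', hm'⟩ := Circle.exp_eq_exp.mp h1
    exact ⟨m', by simpa using hm'⟩
  have hnd : ∀ l m' : Fin n, l ≠ m' → ∀ j : ℤ, (θ l - θ m') / (2 * π) ≠ (j : ℝ) := by
    intro l m' hl j hc
    apply hl
    apply z.prop.1
    rw [← hz l, ← hz m']
    apply Circle.exp_eq_exp.mpr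
    exact ⟨j, by field_simp at hc; linarith⟩
  have hfix : ∀ m : Fin n, σ⁻¹ m = m := by
    intro m
    by_contra hne
    have e1 : Psi n m (permConfigAct n σ z) = Psi n m z := psi_joined hn m h
    rw [psi_perm] at e1
    rw [psi_eq hn z θ hz k hk (σ⁻¹ m), psi_eq hn z θ hz k hk m] at e1
    obtain ⟨c, hc⟩ := exp_mul_I_eq e1
    set Na : ℤ := ∑ l ∈ Finset.univ.erase (σ⁻¹ m), ⌊(θ l - θ (σ⁻¹ m)) / (2 * π)⌋ with hNa
    set Nb : ℤ := ∑ l ∈ Finset.univ.erase m, ⌊(θ l - θ m) / (2 * π)⌋ with hNb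
    have hn' : (n:ℝ) ≠ 0 := Nat.cast_ne_zero.mpr hn.ne'
    -- hc : 2π(k - Na)/n = 2π(k - Nb)/n + c * 2π
    have hdvd : (n:ℤ) ∣ (Nb - Na) := by
      refine ⟨c, ?_⟩
      have hreal : ((Nb - Na : ℤ) : ℝ) = (((n:ℤ) * c : ℤ) : ℝ) := by
        push_cast
        field_simp at hc
        nlinarith [Real.pi_pos, hc]
      exact_mod_cast hreal
    exact floor_diff_not_dvd θ hnd m (σ⁻¹ m) (fun hc' => hne hc'.symm)
      (by rw [← hNb, ← hNa]; exact hdvd)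
  have hinv : σ⁻¹ = 1 := Equiv.ext fun m => hfix m
  rw [← inv_inv σ, hinv]
  rfl

lemma convex_open_interval {A B u v t : ℝ} (ht0 : 0 ≤ t) (ht1 : t ≤ 1)
    (hu1 : A < u) (hu2 : u < B) (hv1 : A < v) (hv2 : v < B) :
    A < (1 - t) * u + t * v ∧ (1 - t) * u + t * v < B := by
  rcases eq_or_lt_of_le ht1 with h | h
  · subst h
    constructor
    · have e : (1 - (1:ℝ)) * u + 1 * v = v := by ring
      rw [e]; exact hv1
    · have e : (1 - (1:ℝ)) * u + 1 * v = v := by ring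
      rw [e]; exact hv2
  · constructor
    · nlinarith [mul_pos (sub_pos.mpr h) (sub_pos.mpr hu1), mul_nonneg ht0 (sub_pos.mpr hv1).le]
    · nlinarith [mul_pos (sub_pos.mpr h) (sub_pos.mpr hu2), mul_nonneg ht0 (sub_pos.mpr hv2).le]

lemma joined_of_lifts {n : ℕ} (z z' : CircleConfigProdOne n) (θ θ' : Fin n → ℝ)
    (hz : ∀ l, Circle.exp (θ l) = z.val l) (hz' : ∀ l, Circle.exp (θ' l) = z'.val l)
    (hsum : ∑ l, θ l = ∑ l, θ' l)
    (hfloor : ∀ l m : Fin n, l ≠ m →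
      ⌊(θ l - θ m) / (2 * π)⌋ = ⌊(θ' l - θ' m) / (2 * π)⌋) :
    Joined z z' := by
  have hpi : (0:ℝ) < 2 * π := by positivity
  have hnd : ∀ l m : Fin n, l ≠ m → ∀ j : ℤ, θ l - θ m ≠ (j:ℝ) * (2 * π) := by
    intro l m hlm j hc
    apply hlm
    apply z.prop.1
    rw [← hz l, ← hz m]
    exact Circle.exp_eq_exp.mpr ⟨j, by linarith⟩
  have hnd' : ∀ l m : Fin n, l ≠ m → ∀ j : ℤ, θ' l - θ' m ≠ (j:ℝ) * (2 * π) := by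
    intro l m hlm j hc
    apply hlm
    apply z'.prop.1
    rw [← hz' l, ← hz' m]
    exact Circle.exp_eq_exp.mpr ⟨j, by linarith⟩
  -- the path
  have hmem : ∀ t : unitInterval,
      Function.Injective (fun l => Circle.exp ((1 - (t:ℝ)) * θ l + (t:ℝ) * θ' l)) ∧
      ∏ l, Circle.exp ((1 - (t:ℝ)) * θ l + (t:ℝ) * θ' l) = 1 := by
    intro t
    constructor
    · intro l m hlm
      by_contra hne
      obtain ⟨j, hj⟩ := Circle.exp_eq_exp.mp hlm
      -- difference is a convex combination
      have hdiff : ((1 - (t:ℝ)) * θ l + (t:ℝ) * θ' l) - ((1 - (t:ℝ)) * θ m + (t:ℝ) * θ' m)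
          = (1 - (t:ℝ)) * (θ l - θ m) + (t:ℝ) * (θ' l - θ' m) := by ring
      set c : ℤ := ⌊(θ l - θ m) / (2 * π)⌋ with hcdef
      have hc' : ⌊(θ' l - θ' m) / (2 * π)⌋ = c := (hfloor l m hne).symm
      have hb1 : (c:ℝ) * (2 * π) < θ l - θ m := by
        have hle := Int.floor_le ((θ l - θ m) / (2 * π))
        rw [← hcdef] at hle
        have : (c:ℝ) * (2*π) ≤ θ l - θ m := by
          calc (c:ℝ) * (2*π) ≤ ((θ l - θ m) / (2 * π)) * (2*π) :=
                mul_le_mul_of_nonneg_right hle (le_of_lt hpi)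
            _ = θ l - θ m := by field_simp
        rcases lt_or_eq_of_le this with h | h
        · exact h
        · exact absurd h.symm (hnd l m hne c)
      have hb2 : θ l - θ m < (c:ℝ) * (2 * π) + 2 * π := by
        have hlt := Int.lt_floor_add_one ((θ l - θ m) / (2 * π))
        rw [← hcdef] at hlt
        have := mul_lt_mul_of_pos_right hlt hpi
        calc θ l - θ m = ((θ l - θ m) / (2 * π)) * (2*π) := by field_simp
          _ < ((c:ℝ) + 1) * (2*π) := this
          _ = (c:ℝ) * (2 * π) + 2 * π := by ring
      have hb1' : (c:ℝ) * (2 * π) < θ' l - θ' m := by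
        have hle := Int.floor_le ((θ' l - θ' m) / (2 * π))
        rw [hc'] at hle
        have : (c:ℝ) * (2*π) ≤ θ' l - θ' m := by
          calc (c:ℝ) * (2*π) ≤ ((θ' l - θ' m) / (2 * π)) * (2*π) :=
                mul_le_mul_of_nonneg_right hle (le_of_lt hpi)
            _ = θ' l - θ' m := by field_simp
        rcases lt_or_eq_of_le this with h | h
        · exact h
        · exact absurd h.symm (hnd' l m hne c)
      have hb2' : θ' l - θ' m < (c:ℝ) * (2 * π) + 2 * π := by
        have hlt := Int.lt_floor_add_one ((θ' l - θ' m) / (2 * π))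
        rw [hc'] at hlt
        have := mul_lt_mul_of_pos_right hlt hpi
        calc θ' l - θ' m = ((θ' l - θ' m) / (2 * π)) * (2*π) := by field_simp
          _ < ((c:ℝ) + 1) * (2*π) := this
          _ = (c:ℝ) * (2 * π) + 2 * π := by ring
      obtain ⟨hlo, hhi⟩ := convex_open_interval t.2.1 t.2.2 hb1 hb2 hb1' hb2'
      have hj' : (1 - (t:ℝ)) * (θ l - θ m) + (t:ℝ) * (θ' l - θ' m) = (j:ℝ) * (2 * π) := by
        rw [← hdiff]; linarith
      have hj1 : (c:ℝ) * (2 * π) < (j:ℝ) * (2 * π) := by rw [← hj']; exact hlo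
      have hj2 : (j:ℝ) * (2 * π) < ((c:ℝ) + 1) * (2 * π) := by rw [← hj']; linarith
      have hcj1 : (c:ℝ) < (j:ℝ) := (mul_lt_mul_iff_left₀ hpi).mp hj1
      have hcj2 : (j:ℝ) < (c:ℝ) + 1 := (mul_lt_mul_iff_left₀ hpi).mp hj2
      have : c < j := by exact_mod_cast hcj1
      have : j < c + 1 := by exact_mod_cast hcj2
      omega
    · rw [← circle_exp_sum]
      have : ∑ l, ((1 - (t:ℝ)) * θ l + (t:ℝ) * θ' l) = ∑ l, θ l := by
        rw [Finset.sum_add_distrib, ← Finset.mul_sum, ← Finset.mul_sum, ← hsum]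
        ring
      rw [this, circle_exp_sum, Finset.prod_congr rfl (fun l _ => hz l)]
      exact z.prop.2
  let F : unitInterval → CircleConfigProdOne n := fun t =>
    ⟨fun l => Circle.exp ((1 - (t:ℝ)) * θ l + (t:ℝ) * θ' l), hmem t⟩
  have hFcont : Continuous F := by
    apply Continuous.subtype_mk
    apply continuous_pi
    intro l
    apply Circle.exp.continuous.comp
    have hts : Continuous (fun t : unitInterval => (t:ℝ)) := continuous_subtype_val
    continuity
  refine ⟨⟨⟨F, hFcont⟩, ?_, ?_⟩⟩
  · apply Subtype.ext
    funext l
    show Circle.exp ((1 - ((0:unitInterval):ℝ)) * θ l + ((0:unitInterval):ℝ) * θ' l) = z.val l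
    rw [show ((0:unitInterval):ℝ) = 0 from rfl]
    simpa using hz l
  · apply Subtype.ext
    funext l
    show Circle.exp ((1 - ((1:unitInterval):ℝ)) * θ l + ((1:unitInterval):ℝ) * θ' l) = z'.val l
    rw [show ((1:unitInterval):ℝ) = 1 from rfl]
    simpa using hz' l

lemma gauss_fin (n : ℕ) : (∑ j : Fin n, ((j : ℕ) : ℝ)) * 2 = (n:ℝ) * ((n:ℝ) - 1) := by
  induction n with
  | zero => simp
  | succ m ih =>
    rw [Fin.sum_univ_castSucc]
    simp only [Fin.coe_castSucc, Fin.val_last]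
    push_cast
    push_cast at ih
    linear_combination ih

noncomputable def stdPsi (n : ℕ) : Fin n → ℝ :=
  fun j => 2 * π * (j : ℕ) / n - π * ((n:ℝ) - 1) / n

lemma stdPsi_sum {n : ℕ} (hn : 0 < n) : ∑ j, stdPsi n j = 0 := by
  have hn' : (n:ℝ) ≠ 0 := Nat.cast_ne_zero.mpr hn.ne'
  have hg := gauss_fin n
  simp only [stdPsi]
  rw [Finset.sum_sub_distrib, Finset.sum_const, Finset.card_univ, Fintype.card_fin,
    nsmul_eq_mul]
  have h1 : ∑ j : Fin n, 2 * π * ((j:ℕ):ℝ) / n = (2 * π / n) * ∑ j : Fin n, ((j:ℕ):ℝ) := by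
    rw [Finset.mul_sum]
    exact Finset.sum_congr rfl fun j _ => by ring
  have hS : (∑ j : Fin n, ((j:ℕ):ℝ)) = (n:ℝ) * ((n:ℝ) - 1) / 2 := by linarith
  rw [h1, hS]
  field_simp
  ring

noncomputable def stdCfg (n : ℕ) (hn : 0 < n) : CircleConfigProdOne n := by
  refine ⟨fun j => Circle.exp (stdPsi n j), ?_, ?_⟩
  · intro j j' hjj
    obtain ⟨m, hm⟩ := Circle.exp_eq_exp.mp hjj
    have hn' : (n:ℝ) ≠ 0 := Nat.cast_ne_zero.mpr hn.ne'
    have hpi : (0:ℝ) < π := Real.pi_pos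
    have hd : stdPsi n j - stdPsi n j' = 2 * π * (((j:ℕ):ℝ) - ((j':ℕ):ℝ)) / n := by
      simp only [stdPsi]
      field_simp
      ring
    have hval : ((j:ℕ):ℝ) - ((j':ℕ):ℝ) = (m:ℝ) * n := by
      have : stdPsi n j - stdPsi n j' = (m:ℝ) * (2 * π) := by linarith [hm]
      rw [hd] at this
      field_simp at this
      nlinarith [this, hpi]
    have hZ : ((j:ℕ):ℤ) - ((j':ℕ):ℤ) = m * n := by exact_mod_cast hval
    have hb1 : ((j:ℕ):ℤ) < n := by exact_mod_cast j.isLt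
    have hb2 : ((j':ℕ):ℤ) < n := by exact_mod_cast j'.isLt
    have hb3 : (0:ℤ) ≤ ((j:ℕ):ℤ) := by positivity
    have hb4 : (0:ℤ) ≤ ((j':ℕ):ℤ) := by positivity
    have hm0 : m = 0 := by
      rcases lt_trichotomy m 0 with h | h | h
      · nlinarith [hZ, hb1, hb2, hb3, hb4, h]
      · exact h
      · nlinarith [hZ, hb1, hb2, hb3, hb4, h]
    rw [hm0] at hZ
    apply Fin.ext
    omega
  · rw [← circle_exp_sum, stdPsi_sum hn, Circle.exp_zero]

lemma floor_div_two_pi_neg_one {x : ℝ} (h1 : -(2*π) ≤ x) (h2 : x < 0) : ⌊x / (2*π)⌋ = -1 := by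
  have hpi : (0:ℝ) < 2*π := by positivity
  apply Int.floor_eq_iff.mpr
  constructor
  · push_cast
    rw [le_div_iff₀ hpi]
    linarith
  · push_cast
    have := div_neg_of_neg_of_pos h2 hpi
    linarith

lemma floor_div_two_pi_zero {x : ℝ} (h1 : 0 ≤ x) (h2 : x < 2*π) : ⌊x / (2*π)⌋ = 0 := by
  have hpi : (0:ℝ) < 2*π := by positivity
  apply Int.floor_eq_iff.mpr
  constructor
  · push_cast
    positivity
  · push_cast
    have := (div_lt_one hpi).mpr h2
    linarith

lemma joined_std {n : ℕ} (hn : 0 < n) (z : CircleConfigProdOne n) :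
    ∃ σ : Equiv.Perm (Fin n), Joined z (permConfigAct n σ (stdCfg n hn)) := by
  haveI : NeZero n := ⟨hn.ne'⟩
  have hpi : (0:ℝ) < π := Real.pi_pos
  have hn' : (n:ℝ) ≠ 0 := Nat.cast_ne_zero.mpr hn.ne'
  set θ : Fin n → ℝ := fun l => Complex.arg ((z.val l : ℂ)) with hθdef
  have hz : ∀ l, Circle.exp (θ l) = z.val l := fun l => Circle.exp_arg (z.val l)
  have h1 : Circle.exp (∑ l, θ l) = Circle.exp 0 := by
    rw [circle_exp_sum, Finset.prod_congr rfl (fun l _ => hz l), z.prop.2, Circle.exp_zero]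
  obtain ⟨k, hk⟩ : ∃ k : ℤ, ∑ l, θ l = (k:ℝ) * (2 * π) := by
    obtain ⟨m', hm'⟩ := Circle.exp_eq_exp.mp h1
    exact ⟨m', by simpa using hm'⟩
  have hθinj : Function.Injective θ := by
    intro l m hlm
    apply z.prop.1
    exact Circle.injective_arg hlm
  set τ : Equiv.Perm (Fin n) := Tuple.sort θ with hτdef
  have hsm : StrictMono (θ ∘ τ) :=
    (Tuple.monotone_sort θ).strictMono_of_injective (hθinj.comp τ.injective)
  set K : ℕ := (k % (n:ℤ)).toNat with hKdef
  have hK : (K:ℤ) = k % (n:ℤ) :=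
    Int.toNat_of_nonneg (Int.emod_nonneg k (by exact_mod_cast hn.ne'))
  set kf : Fin n := (open Fin.NatCast in (K : Fin n)) with hkfdef
  set e : Equiv.Perm (Fin n) := Equiv.addRight kf with hedef
  set σ : Equiv.Perm (Fin n) := ((τ⁻¹ : Equiv.Perm (Fin n)).trans e)⁻¹ with hσdef
  have hσinv : ∀ l, σ⁻¹ l = τ⁻¹ l + kf := by
    intro l
    rw [hσdef, inv_inv]
    rfl
  set φ : Fin n → ℝ :=
    fun l => 2 * π * ((((τ⁻¹ l : Fin n) : ℕ) : ℝ) + (k:ℝ)) / n - π * ((n:ℝ) - 1) / n with hφdef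
  set w : CircleConfigProdOne n := permConfigAct n σ (stdCfg n hn) with hwdef
  refine ⟨σ, ?_⟩
  have hz' : ∀ l, Circle.exp (φ l) = w.val l := by
    intro l
    have hwl : w.val l = Circle.exp (stdPsi n (τ⁻¹ l + kf)) := by
      rw [hwdef]
      show (stdCfg n hn).val (σ⁻¹ l) = _
      rw [hσinv l]
      rfl
    rw [hwl]
    apply Circle.exp_eq_exp.mpr
    set a : ℕ := ((τ⁻¹ l : Fin n) : ℕ) with hadef
    set v : ℕ := ((τ⁻¹ l + kf : Fin n) : ℕ) with hvdef
    have hvval : v = (a + K % n) % n := by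
      rw [hvdef, hadef, Fin.val_add, hkfdef, Fin.val_natCast]
    have hvz : (v:ℤ) = ((a:ℤ) + k % (n:ℤ)) % (n:ℤ) := by
      rw [hvval]
      push_cast
      rw [hK, Int.emod_emod_of_dvd k dvd_rfl]
    have hdvd : (n:ℤ) ∣ ((a:ℤ) + k - (v:ℤ)) := by
      have egen : ∀ x : ℤ, (n:ℤ) ∣ (x - x % (n:ℤ)) := fun x =>
        ⟨x / n, by rw [Int.emod_def]; ring⟩
      have e1 : (n:ℤ) ∣ (k - k % (n:ℤ)) := egen k
      have e2 : (n:ℤ) ∣ (((a:ℤ) + k % (n:ℤ)) - ((a:ℤ) + k % (n:ℤ)) % (n:ℤ)) :=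
        egen _
      have e3 : (a:ℤ) + k - (v:ℤ)
          = (k - k % (n:ℤ)) + (((a:ℤ) + k % (n:ℤ)) - ((a:ℤ) + k % (n:ℤ)) % (n:ℤ)) := by
        rw [hvz]; ring
      rw [e3]
      exact dvd_add e1 e2
    obtain ⟨m, hm⟩ := hdvd
    refine ⟨m, ?_⟩
    have hcast : ((a:ℕ):ℝ) + (k:ℝ) - ((v:ℕ):ℝ) = (n:ℝ) * (m:ℝ) := by exact_mod_cast hm
    have hφl : φ l = 2 * π * (((a:ℕ):ℝ) + (k:ℝ)) / n - π * ((n:ℝ) - 1) / n := rfl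
    have hstd : stdPsi n (τ⁻¹ l + kf) = 2 * π * (((v:ℕ):ℝ)) / n - π * ((n:ℝ) - 1) / n := rfl
    have hdiff : φ l - stdPsi n (τ⁻¹ l + kf)
        = 2 * π * (((a:ℕ):ℝ) + (k:ℝ) - ((v:ℕ):ℝ)) / n := by
      rw [hφl, hstd]; ring
    rw [hcast] at hdiff
    have hfin : φ l - stdPsi n (τ⁻¹ l + kf) = (m:ℝ) * (2 * π) := by
      rw [hdiff]
      field_simp
    linarith
  have hsum : ∑ l, θ l = ∑ l, φ l := by
    have hre : ∑ l, ((((τ⁻¹ l : Fin n) : ℕ) : ℝ)) = ∑ j : Fin n, ((j:ℕ):ℝ) :=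
      Equiv.sum_comp (τ⁻¹ : Equiv.Perm (Fin n)) (fun j => ((j:ℕ):ℝ))
    have hgauss : (∑ j : Fin n, ((j:ℕ):ℝ)) = (n:ℝ) * ((n:ℝ) - 1) / 2 := by
      have := gauss_fin n
      linarith
    have h2 : ∑ l, φ l
        = (2 * π / n) * (∑ l, ((((τ⁻¹ l : Fin n) : ℕ) : ℝ)) + n * k) - π * ((n:ℝ) - 1) := by
      simp only [hφdef]
      rw [Finset.sum_sub_distrib, Finset.sum_const, Finset.card_univ, Fintype.card_fin,
        nsmul_eq_mul]
      have h3 : ∑ l, 2 * π * ((((τ⁻¹ l : Fin n) : ℕ) : ℝ) + (k:ℝ)) / n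
          = (2 * π / n) * ∑ l, ((((τ⁻¹ l : Fin n) : ℕ) : ℝ) + (k:ℝ)) := by
        rw [Finset.mul_sum]
        exact Finset.sum_congr rfl fun l _ => by ring
      rw [h3, Finset.sum_add_distrib, Finset.sum_const, Finset.card_univ, Fintype.card_fin,
        nsmul_eq_mul]
      field_simp
    rw [h2, hre, hgauss, hk]
    field_simp
    ring
  have hfloor : ∀ l m : Fin n, l ≠ m →
      ⌊(θ l - θ m) / (2 * π)⌋ = ⌊(φ l - φ m) / (2 * π)⌋ := by
    intro l m hlm
    set j : Fin n := τ⁻¹ l with hjdef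
    set j' : Fin n := τ⁻¹ m with hj'def
    have hjj' : j ≠ j' := fun hc => hlm (by
      have := congrArg τ hc
      simpa [hjdef, hj'def] using this)
    have hθl : θ l = (θ ∘ τ) j := by rw [hjdef]; simp
    have hθm : θ m = (θ ∘ τ) j' := by rw [hj'def]; simp
    have hargb1 : θ l ≤ π := Complex.arg_le_pi _
    have hargb2 : -π < θ l := Complex.neg_pi_lt_arg _
    have hargb3 : θ m ≤ π := Complex.arg_le_pi _
    have hargb4 : -π < θ m := Complex.neg_pi_lt_arg _
    have hφd : φ l - φ m = 2 * π * (((j:ℕ):ℝ) - ((j':ℕ):ℝ)) / n := by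
      simp only [hφdef, ← hjdef, ← hj'def]
      field_simp
      ring
    have hjb : ((j:ℕ):ℝ) < n := by exact_mod_cast j.isLt
    have hj'b : ((j':ℕ):ℝ) < n := by exact_mod_cast j'.isLt
    rcases lt_or_gt_of_ne hjj' with hlt | hgt
    · have hθlt : θ l < θ m := by rw [hθl, hθm]; exact hsm hlt
      have hjlt : ((j:ℕ):ℝ) < ((j':ℕ):ℝ) := by
        have h0 : (j:ℕ) < (j':ℕ) := hlt
        exact_mod_cast h0
      have hjnn : (0:ℝ) ≤ ((j:ℕ):ℝ) := by positivity
      have hnpos : (0:ℝ) < (n:ℝ) := by exact_mod_cast hn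
      have h2 : -(2*π) ≤ θ l - θ m := by linarith
      have h3 : θ l - θ m < 0 := by linarith
      have h4 : -(2*π) ≤ φ l - φ m := by
        rw [hφd, le_div_iff₀ hnpos]
        nlinarith [mul_nonneg (by positivity : (0:ℝ) ≤ 2*π)
          (by linarith : (0:ℝ) ≤ ((j:ℕ):ℝ) - ((j':ℕ):ℝ) + (n:ℝ))]
      have h5 : φ l - φ m < 0 := by
        rw [hφd]
        apply div_neg_of_neg_of_pos
        · exact mul_neg_of_pos_of_neg (by positivity) (by linarith)
        · exact hnpos
      rw [floor_div_two_pi_neg_one h2 h3, floor_div_two_pi_neg_one h4 h5]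
    · have hθgt : θ m < θ l := by rw [hθl, hθm]; exact hsm hgt
      have hjgt : ((j':ℕ):ℝ) < ((j:ℕ):ℝ) := by
        have h0 : (j':ℕ) < (j:ℕ) := hgt
        exact_mod_cast h0
      have hj'nn : (0:ℝ) ≤ ((j':ℕ):ℝ) := by positivity
      have hnpos : (0:ℝ) < (n:ℝ) := by exact_mod_cast hn
      have h2 : 0 ≤ θ l - θ m := by linarith
      have h3 : θ l - θ m < 2*π := by linarith
      have h4 : 0 ≤ φ l - φ m := by
        rw [hφd]
        apply div_nonneg _ hnpos.le
        exact mul_nonneg (by positivity) (by linarith)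
      have h5 : φ l - φ m < 2*π := by
        rw [hφd, div_lt_iff₀ hnpos]
        nlinarith [mul_pos (by positivity : (0:ℝ) < 2*π)
          (by linarith : (0:ℝ) < (n:ℝ) - (((j:ℕ):ℝ) - ((j':ℕ):ℝ)))]
      rw [floor_div_two_pi_zero h2 h3, floor_div_two_pi_zero h4 h5]
  exact joined_of_lifts z w θ φ hz hz' hsum hfloor

lemma act_continuous {n : ℕ} (σ : Equiv.Perm (Fin n)) :
    Continuous (permConfigAct n σ) := by
  apply Continuous.subtype_mk
  apply continuous_pi
  intro i
  exact (continuous_apply (σ⁻¹ i)).comp continuous_subtype_val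

lemma act_comp {n : ℕ} (σ₁ σ₂ : Equiv.Perm (Fin n)) (z : CircleConfigProdOne n) :
    permConfigAct n σ₁ (permConfigAct n σ₂ z) = permConfigAct n (σ₁ * σ₂) z := by
  apply Subtype.ext
  funext i
  show z.val (σ₂⁻¹ (σ₁⁻¹ i)) = z.val ((σ₁ * σ₂)⁻¹ i)
  rw [mul_inv_rev]
  rfl

/-- **Lemma.** For `n ≥ 1` the action of `Sₙ` on the set of path components of
`C^n(S¹)_{Π=1}` is simply transitive: it is transitive (any two points can be joined by a path
after acting by a suitable permutation) and free (a permutation whose action fixes some path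
component is the identity). -/
theorem permAction_on_pathComponents_simply_transitive (n : ℕ) (hn : 1 ≤ n) :
    (∀ z z' : CircleConfigProdOne n,
      ∃ σ : Equiv.Perm (Fin n), Joined (permConfigAct n σ z) z') ∧
    (∀ (σ : Equiv.Perm (Fin n)) (z : CircleConfigProdOne n),
      Joined (permConfigAct n σ z) z → σ = 1) := by
  have hn' : 0 < n := hn
  constructor
  · intro z z'
    obtain ⟨σ₁, h1⟩ := joined_std hn' z
    obtain ⟨σ₂, h2⟩ := joined_std hn' z'
    refine ⟨σ₂ * σ₁⁻¹, ?_⟩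
    have h1' : Joined (permConfigAct n (σ₂ * σ₁⁻¹) z)
        (permConfigAct n (σ₂ * σ₁⁻¹) (permConfigAct n σ₁ (stdCfg n hn'))) := by
      obtain ⟨γ⟩ := h1
      exact ⟨γ.map (act_continuous (σ₂ * σ₁⁻¹))⟩
    rw [act_comp] at h1'
    have : σ₂ * σ₁⁻¹ * σ₁ = σ₂ := by group
    rw [this] at h1'
    exact h1'.trans h2.symm
  · intro σ z h
    exact freeness_aux hn' σ z h
end

section
/- Let m ≥ 3 be a finite integer and let (W,S) be the dihedral Coxeter system I_2(m): W is generated by S = {r_1, r_2} with relations r_1² = r_2² = 1 and (r_1 r_2)^m = 1 (so W has order 2m), and let T be its set of reflections. Every T-Lipschitz self-map τ : W → W is either constant or a right translation (i.e., there exists w ∈ W with τ(x) = x·w for all x ∈ W). -/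
namespace DihedralReflAux

open CoxeterSystem DihedralGroup

variable {W : Type*} [Group W] {M : CoxeterMatrix (Fin 2)} (cs : CoxeterSystem M W)

local prefix:100 "σ" => cs.simple
local notation "ρ" => cs.simple 0 * cs.simple 1

lemma muls (k : ℤ) : σ 0 * ρ ^ k = ρ ^ (-k) * σ 0 := by
  have h : σ 0 * ρ * (σ 0)⁻¹ = ρ⁻¹ := by
    rw [cs.inv_simple, mul_inv_rev, cs.inv_simple, cs.inv_simple, ← mul_assoc,
      cs.simple_mul_simple_self, one_mul]
  have h2 : σ 0 * ρ ^ k * (σ 0)⁻¹ = (σ 0 * ρ * (σ 0)⁻¹) ^ k := by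
    simpa [MulAut.conj_apply, mul_assoc] using map_zpow (MulAut.conj (σ 0)) ρ k
  rw [h, inv_zpow, ← zpow_neg] at h2
  rw [← h2, cs.inv_simple, mul_assoc, cs.simple_mul_simple_self, mul_one]

lemma norm3 (a b : ℤ) (x : W) : ρ ^ a * (ρ ^ b * x) = ρ ^ (a + b) * x := by
  rw [← mul_assoc, ← zpow_add]

lemma norm2 (a b : ℤ) : (ρ ^ a * σ 0) * ρ ^ b = ρ ^ (a - b) * σ 0 := by
  rw [mul_assoc, muls, ← mul_assoc, ← zpow_add, sub_eq_add_neg]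

lemma norm1 (a b : ℤ) : (ρ ^ a * σ 0) * (ρ ^ b * σ 0) = ρ ^ (a - b) := by
  rw [← mul_assoc, norm2, mul_assoc, cs.simple_mul_simple_self, mul_one]

lemma inv1 (a : ℤ) : (ρ ^ a * σ 0)⁻¹ = ρ ^ a * σ 0 := by
  rw [mul_inv_rev, cs.inv_simple, ← zpow_neg, muls, neg_neg]

lemma s1eq : σ 1 = ρ ^ (-1 : ℤ) * σ 0 := by
  rw [zpow_neg_one, mul_inv_rev, cs.inv_simple, cs.inv_simple, mul_assoc,
    cs.simple_mul_simple_self, mul_one]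

lemma simple_form (i : Fin 2) : ∃ a : ℤ, σ i = ρ ^ a * σ 0 := by
  fin_cases i
  · refine ⟨0, ?_⟩
    show σ 0 = ρ ^ (0 : ℤ) * σ 0
    rw [zpow_zero, one_mul]
  · refine ⟨-1, ?_⟩
    show σ 1 = ρ ^ (-1 : ℤ) * σ 0
    exact s1eq cs

/-- Every element of the dihedral Coxeter group is `ρ^k` or `ρ^k * σ 0`. -/
lemma form (w : W) : ∃ k : ℤ, w = ρ ^ k ∨ w = ρ ^ k * σ 0 := by
  induction w using cs.simple_induction_left with
  | one => exact ⟨0, Or.inl (zpow_zero _).symm⟩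
  | mul_simple_left w i ih =>
    obtain ⟨a, ha⟩ := simple_form cs i
    obtain ⟨k, rfl | rfl⟩ := ih
    · exact ⟨a - k, Or.inr (by rw [ha, norm2])⟩
    · exact ⟨a - k, Or.inl (by rw [ha, norm1])⟩

lemma conj1 (w a : ℤ) : ρ ^ w * (ρ ^ a * σ 0) * (ρ ^ w)⁻¹ = ρ ^ (2 * w + a) * σ 0 := by
  rw [norm3, ← zpow_neg, norm2]
  congr 1
  ring

lemma conj2 (w a : ℤ) : (ρ ^ w * σ 0) * (ρ ^ a * σ 0) * (ρ ^ w * σ 0)⁻¹ = ρ ^ (2 * w - a) * σ 0 := by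
  rw [inv1, norm1, norm3]
  congr 1
  ring

lemma refl_of_odd (k : ℤ) : cs.IsReflection (ρ ^ k * σ 0) := by
  rcases Int.even_or_odd k with ⟨j, hj⟩ | ⟨j, hj⟩
  · refine ⟨ρ ^ j, 0, ?_⟩
    have h := conj1 cs j 0
    rw [zpow_zero, one_mul] at h
    have hexp : (2 : ℤ) * j + 0 = k := by omega
    rw [hexp] at h
    rw [h]
  · refine ⟨ρ ^ (j + 1), 1, ?_⟩
    have h := conj1 cs (j + 1) (-1)
    rw [← s1eq] at h
    have hexp : (2 : ℤ) * (j + 1) + -1 = k := by omega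
    rw [hexp] at h
    rw [h]

lemma refl_odd {t : W} (ht : cs.IsReflection t) : ∃ k : ℤ, t = ρ ^ k * σ 0 := by
  obtain ⟨w, i, rfl⟩ := ht
  obtain ⟨a, ha⟩ := simple_form cs i
  obtain ⟨k, rfl | rfl⟩ := form cs w
  · exact ⟨2 * k + a, by rw [ha, conj1]⟩
  · exact ⟨2 * k - a, by rw [ha, conj2]⟩

lemma refl_ne_one {t : W} (ht : cs.IsReflection t) : t ≠ 1 := by
  intro h
  have ho := ht.odd_length
  rw [h, cs.length_one] at ho
  simpa using ho

lemma edge (τ : W → W) (hτ : IsReflLipschitz cs τ) (x y : W)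
    (h : cs.IsReflection (y * x⁻¹)) : τ y = τ x ∨ τ y = y * x⁻¹ * τ x := by
  have := hτ x (y * x⁻¹) h
  rwa [inv_mul_cancel_right] at this

lemma rho_ne (m : ℕ) (hm : 3 ≤ m) (hM : M 0 1 = m) :
    (ρ : W) ≠ 1 ∧ (ρ : W) ^ (2 : ℤ) ≠ 1 := by
  haveI : NeZero m := ⟨by omega⟩
  have h01 : (DihedralGroup.sr (0 : ZMod m) * DihedralGroup.sr 1) = DihedralGroup.r 1 := by
    rw [DihedralGroup.sr_mul_sr, sub_zero]
  have hf : M.IsLiftable ![DihedralGroup.sr (0 : ZMod m), DihedralGroup.sr 1] := by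
    intro i i'
    fin_cases i <;> fin_cases i'
    · show (DihedralGroup.sr (0 : ZMod m) * DihedralGroup.sr 0) ^ M 0 0 = 1
      rw [M.diagonal 0, pow_one, DihedralGroup.sr_mul_sr, sub_self]; rfl
    · show (DihedralGroup.sr (0 : ZMod m) * DihedralGroup.sr 1) ^ M 0 1 = 1
      rw [h01, hM]
      exact DihedralGroup.r_one_pow_n
    · show (DihedralGroup.sr (1 : ZMod m) * DihedralGroup.sr 0) ^ M 1 0 = 1
      have hinv : DihedralGroup.sr (1 : ZMod m) * DihedralGroup.sr 0
          = (DihedralGroup.sr (0 : ZMod m) * DihedralGroup.sr 1)⁻¹ := by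
        rw [mul_inv_rev]
        congr 1 <;> rw [eq_inv_of_mul_eq_one_left (DihedralGroup.sr_mul_self _)]
      rw [hinv, inv_pow, ← M.symmetric 0 1, h01, hM, DihedralGroup.r_one_pow_n, inv_one]
    · show (DihedralGroup.sr (1 : ZMod m) * DihedralGroup.sr 1) ^ M 1 1 = 1
      rw [M.diagonal 1, pow_one, DihedralGroup.sr_mul_sr, sub_self]; rfl
  have hφρ : (cs.lift ⟨![DihedralGroup.sr (0 : ZMod m), DihedralGroup.sr 1], hf⟩) ρ
      = DihedralGroup.r 1 := by
    rw [map_mul, cs.lift_apply_simple, cs.lift_apply_simple]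
    exact h01
  have horder : orderOf (DihedralGroup.r (1 : ZMod m)) = m := DihedralGroup.orderOf_r_one
  constructor
  · intro h
    have : DihedralGroup.r (1 : ZMod m) = 1 := by rw [← hφρ, h, map_one]
    rw [this, orderOf_one] at horder
    omega
  · intro h
    have h2 : (DihedralGroup.r (1 : ZMod m)) ^ (2 : ℕ) = 1 := by
      have hz : (cs.lift ⟨![DihedralGroup.sr (0 : ZMod m), DihedralGroup.sr 1], hf⟩)
          ((cs.simple 0 * cs.simple 1) ^ (2 : ℤ)) = 1 := by rw [h, map_one]
      rw [map_zpow, hφρ] at hz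
      exact_mod_cast hz
    have := orderOf_dvd_of_pow_eq_one h2
    rw [horder] at this
    have := Nat.le_of_dvd (by norm_num) this
    omega

lemma no_mixed (m : ℕ) (hm : 3 ≤ m) (hM : M 0 1 = m)
    (τ : W → W) (hτ : IsReflLipschitz cs τ)
    (v p q : W) (hp : cs.IsReflection (p * v⁻¹)) (hq : cs.IsReflection (q * v⁻¹))
    (hτp : τ p = τ v) (hτq : τ q = q * v⁻¹ * τ v) : False := by
  obtain ⟨hρ1, hρ2⟩ := rho_ne cs m hm hM
  obtain ⟨i, hi⟩ := refl_odd cs hp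
  obtain ⟨j, hj⟩ := refl_odd cs hq
  have hvp : v * p⁻¹ = ρ ^ i * σ 0 := by
    have h : (p * v⁻¹)⁻¹ = v * p⁻¹ := by rw [mul_inv_rev, inv_inv]
    rw [← h, hi, inv1]
  have hvq : v * q⁻¹ = ρ ^ j * σ 0 := by
    have h : (q * v⁻¹)⁻¹ = v * q⁻¹ := by rw [mul_inv_rev, inv_inv]
    rw [← h, hj, inv1]
  have key : ∀ k : ℤ, (ρ : W) ^ k ≠ 1 → ρ ^ k * v = q * v⁻¹ * p := by
    intro k hk
    have hxp : (ρ ^ k * v) * p⁻¹ = ρ ^ (k + i) * σ 0 := by rw [mul_assoc, hvp, norm3]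
    have hxq : (ρ ^ k * v) * q⁻¹ = ρ ^ (k + j) * σ 0 := by rw [mul_assoc, hvq, norm3]
    have e1 := edge cs τ hτ p (ρ ^ k * v) (hxp ▸ refl_of_odd cs (k + i))
    have e2 := edge cs τ hτ q (ρ ^ k * v) (hxq ▸ refl_of_odd cs (k + j))
    rw [hτp] at e1
    rw [hτq] at e2
    rcases e1 with e1 | e1 <;> rcases e2 with e2 | e2
    · exfalso
      have h2 : τ v = q * v⁻¹ * τ v := e1.symm.trans e2
      exact refl_ne_one cs hq ((right_eq_mul).mp h2)
    · exfalso
      have heq : (ρ ^ k * v) * q⁻¹ * (q * v⁻¹ * τ v) = ρ ^ k * τ v := by group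
      rw [heq] at e2
      have h2 : τ v = ρ ^ k * τ v := e1.symm.trans e2
      exact hk ((right_eq_mul).mp h2)
    · have h3 : (ρ ^ k * v) * p⁻¹ * τ v = q * v⁻¹ * τ v := e1.symm.trans e2
      have h4 : (ρ ^ k * v) * p⁻¹ = q * v⁻¹ := mul_right_cancel h3
      calc ρ ^ k * v = (ρ ^ k * v) * p⁻¹ * p := by group
        _ = q * v⁻¹ * p := by rw [h4]
    · exfalso
      have heq : (ρ ^ k * v) * q⁻¹ * (q * v⁻¹ * τ v) = (ρ ^ k * v) * v⁻¹ * τ v := by group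
      rw [heq] at e2
      have h3 : (ρ ^ k * v) * p⁻¹ * τ v = (ρ ^ k * v) * v⁻¹ * τ v := e1.symm.trans e2
      have h4 : (ρ ^ k * v) * p⁻¹ = (ρ ^ k * v) * v⁻¹ := mul_right_cancel h3
      have h5 : p = v := inv_injective (mul_left_cancel h4)
      exact refl_ne_one cs hp (by rw [h5, mul_inv_cancel])
  have k1 := key 1 (by rwa [zpow_one])
  have k2 := key 2 hρ2
  have h12 : (ρ : W) ^ (1 : ℤ) = ρ ^ (2 : ℤ) := mul_right_cancel (k1.trans k2.symm)
  apply hρ1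
  have h2 : (ρ : W) ^ (2 : ℤ) = ρ ^ (1 : ℤ) * ρ ^ (1 : ℤ) := by
    rw [← zpow_add]; norm_num
  have : (ρ : W) ^ (1 : ℤ) = ρ ^ (1 : ℤ) * ρ ^ (1 : ℤ) := h12.trans h2
  have := (left_eq_mul).mp this
  rwa [zpow_one] at this

end DihedralReflAux

/-- **Lemma.** Let `3 ≤ m < ∞` and let `(W, {r₁, r₂})` be the dihedral Coxeter system `I₂(m)`,
i.e. the Coxeter system on two generators whose Coxeter matrix has off-diagonal entry `m`
(so `r₁² = r₂² = (r₁r₂)^m = 1` and `W` has order `2m`). Every `T`-Lipschitz self-map of `W`,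
for `T` the set of reflections, is either constant or a right translation. -/
theorem dihedral_reflLipschitz_constant_or_rightTranslation
    (m : ℕ) (hm : 3 ≤ m)
    {W : Type*} [Group W] (M : CoxeterMatrix (Fin 2)) (hM : M 0 1 = m)
    (cs : CoxeterSystem M W)
    (τ : W → W) (hτ : IsReflLipschitz cs τ) :
    (∃ c : W, ∀ x : W, τ x = c) ∨ (∃ w : W, ∀ x : W, τ x = x * w) := by
  classical
  by_cases H1 : ∀ x y : W, cs.IsReflection (y * x⁻¹) → τ y = τ x
  · left
    refine ⟨τ 1, fun x => ?_⟩
    obtain ⟨k, hk | hk⟩ := DihedralReflAux.form cs x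
    · have h1 : τ x = τ (cs.simple 0) := by
        apply H1
        rw [cs.inv_simple, hk]
        exact DihedralReflAux.refl_of_odd cs k
      have h2 : τ (cs.simple 0) = τ 1 := by
        apply H1
        rw [inv_one, mul_one]
        exact cs.isReflection_simple 0
      rw [h1, h2]
    · apply H1
      rw [inv_one, mul_one, hk]
      exact DihedralReflAux.refl_of_odd cs k
  · by_cases H2 : ∀ x y : W, cs.IsReflection (y * x⁻¹) → y⁻¹ * τ y = x⁻¹ * τ x
    · right
      refine ⟨τ 1, fun x => ?_⟩
      have hfx : x⁻¹ * τ x = τ 1 := by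
        obtain ⟨k, hk | hk⟩ := DihedralReflAux.form cs x
        · have h1 : x⁻¹ * τ x = (cs.simple 0)⁻¹ * τ (cs.simple 0) := by
            apply H2
            rw [cs.inv_simple, hk]
            exact DihedralReflAux.refl_of_odd cs k
          have h2 : (cs.simple 0)⁻¹ * τ (cs.simple 0) = 1⁻¹ * τ 1 := by
            apply H2
            rw [inv_one, mul_one]
            exact cs.isReflection_simple 0
          rw [h1, h2, inv_one, one_mul]
        · have h1 : x⁻¹ * τ x = 1⁻¹ * τ 1 := by
            apply H2
            rw [inv_one, mul_one, hk]
            exact DihedralReflAux.refl_of_odd cs k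
          rw [h1, inv_one, one_mul]
      rw [← hfx, ← mul_assoc, mul_inv_cancel, one_mul]
    · exfalso
      push_neg at H1 H2
      obtain ⟨a, b, hab, hne⟩ := H1
      obtain ⟨c, d, hcd, hfne⟩ := H2
      have hfab : τ b = b * a⁻¹ * τ a := by
        rcases DihedralReflAux.edge cs τ hτ a b hab with h | h
        · exact absurd h hne
        · exact h
      have hτcd : τ d = τ c := by
        rcases DihedralReflAux.edge cs τ hτ c d hcd with h | h
        · exact h
        · exfalso
          apply hfne
          rw [h]
          group
      obtain ⟨i, hi⟩ := DihedralReflAux.refl_odd cs hab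
      have habinv : cs.IsReflection (a * b⁻¹) := by
        have := hab.isReflection_inv
        rwa [mul_inv_rev, inv_inv] at this
      have hcdinv : cs.IsReflection (c * d⁻¹) := by
        have := hcd.isReflection_inv
        rwa [mul_inv_rev, inv_inv] at this
      obtain ⟨k, hk | hk⟩ := DihedralReflAux.form cs (d * a⁻¹)
      · -- d * a⁻¹ even
        have hbd : cs.IsReflection (b * d⁻¹) := by
          have hexp : b * d⁻¹ = (b * a⁻¹) * (d * a⁻¹)⁻¹ := by group
          rw [hexp, hi, hk, ← zpow_neg, DihedralReflAux.norm2]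
          exact DihedralReflAux.refl_of_odd cs _
        have hdbinv : cs.IsReflection (d * b⁻¹) := by
          have := hbd.isReflection_inv
          rwa [mul_inv_rev, inv_inv] at this
        rcases DihedralReflAux.edge cs τ hτ d b hbd with h | h
        · -- τ b = τ d : config at v := b, p := d, q := a
          refine DihedralReflAux.no_mixed cs m hm hM τ hτ b d a hdbinv habinv h.symm ?_
          rw [hfab]
          group
        · -- τ b = b d⁻¹ τ d : config at v := d, p := c, q := b
          exact DihedralReflAux.no_mixed cs m hm hM τ hτ d c b hcdinv hbd hτcd.symm h
      · -- d * a⁻¹ odd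
        have had : cs.IsReflection (d * a⁻¹) := by
          rw [hk]; exact DihedralReflAux.refl_of_odd cs k
        have hadinv : cs.IsReflection (a * d⁻¹) := by
          have := had.isReflection_inv
          rwa [mul_inv_rev, inv_inv] at this
        rcases DihedralReflAux.edge cs τ hτ a d had with h | h
        · -- τ d = τ a : config at v := a, p := d, q := b
          exact DihedralReflAux.no_mixed cs m hm hM τ hτ a d b had hab h hfab
        · -- τ d = d a⁻¹ τ a : config at v := d, p := c, q := a
          refine DihedralReflAux.no_mixed cs m hm hM τ hτ d c a hcdinv hadinv hτcd.symm ?_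
          rw [h]
          group
end

section
/- Let n ≥ 3 and 1 ≤ k ≤ n−1. For any two k-dimensional complex subspaces V, V' of ℂⁿ there exists a finite chain V = V_0, V_1, …, V_s = V' of k-dimensional subspaces of ℂⁿ such that consecutive members are weakly perpendicular: V_i ⊚ V_{i+1} for 0 ≤ i < s. -/
open Module

/-- Two subspaces `V, V'` of a Hermitian space are *weakly perpendicular*, `V ⊚ V'`, if the
orthogonal projections onto `V` and `V'` commute. -/
noncomputable def WeaklyPerp {n : ℕ} (V V' : Submodule ℂ (EuclideanSpace ℂ (Fin n))) : Prop :=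
  Commute (V.subtypeL.comp V.orthogonalProjectionOnto) (V'.subtypeL.comp V'.orthogonalProjectionOnto)

namespace ChainAux

variable {n : ℕ}

local notation "E" => EuclideanSpace ℂ (Fin n)

/-- projection onto a sum of orthogonal subspaces is sum of projections -/
lemma proj_sup (C A : Submodule ℂ E) (h : C ⟂ A) :
    (C ⊔ A).subtypeL.comp (Submodule.orthogonalProjectionOnto (C ⊔ A)) =
      C.subtypeL.comp (Submodule.orthogonalProjectionOnto C) + A.subtypeL.comp (Submodule.orthogonalProjectionOnto A) := by
  refine ContinuousLinearMap.ext fun x => ?_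
  simp only [ContinuousLinearMap.coe_comp', Function.comp_apply, Submodule.coe_subtypeL',
    Submodule.coe_subtype, ContinuousLinearMap.add_apply]
  apply Submodule.eq_starProjection_of_mem_orthogonal
  · exact Submodule.add_mem_sup (Submodule.orthogonalProjectionOnto C x).2 (Submodule.orthogonalProjectionOnto A x).2
  · rw [← Submodule.inf_orthogonal]
    constructor
    · have h1 : x - (Submodule.orthogonalProjectionOnto C x : EuclideanSpace ℂ (Fin n)) ∈ Cᗮ :=
        Submodule.sub_starProjection_mem_orthogonal x
      have h2 : (Submodule.orthogonalProjectionOnto A x : EuclideanSpace ℂ (Fin n)) ∈ Cᗮ :=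
        h.symm.le (Submodule.orthogonalProjectionOnto A x).2
      have := Cᗮ.sub_mem h1 h2
      simpa [sub_sub] using this
    · have h1 : x - (Submodule.orthogonalProjectionOnto A x : EuclideanSpace ℂ (Fin n)) ∈ Aᗮ :=
        Submodule.sub_starProjection_mem_orthogonal x
      have h2 : (Submodule.orthogonalProjectionOnto C x : EuclideanSpace ℂ (Fin n)) ∈ Aᗮ :=
        h.le (Submodule.orthogonalProjectionOnto C x).2
      have := Aᗮ.sub_mem h1 h2
      have e : x - ↑(Submodule.orthogonalProjectionOnto A x) - ↑(Submodule.orthogonalProjectionOnto C x)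
          = x - (↑(Submodule.orthogonalProjectionOnto C x) + ↑(Submodule.orthogonalProjectionOnto A x)) := by abel
      rwa [e] at this

lemma proj_mul_eq_zero (A B : Submodule ℂ E) (h : A ⟂ B) :
    (A.subtypeL.comp (Submodule.orthogonalProjectionOnto A)) * (B.subtypeL.comp (Submodule.orthogonalProjectionOnto B)) = 0 := by
  ext x
  simp only [ContinuousLinearMap.mul_apply, ContinuousLinearMap.coe_comp', Function.comp_apply,
    Submodule.coe_subtypeL', Submodule.coe_subtype, ContinuousLinearMap.zero_apply]
  have hmem : ((Submodule.orthogonalProjectionOnto B x : EuclideanSpace ℂ (Fin n))) ∈ Aᗮ :=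
    h.ge (Submodule.orthogonalProjectionOnto B x).2
  rw [Submodule.orthogonalProjectionOnto_apply_of_mem_orthogonal hmem]
  simp

lemma proj_mul_self (C : Submodule ℂ E) :
    (C.subtypeL.comp (Submodule.orthogonalProjectionOnto C)) * (C.subtypeL.comp (Submodule.orthogonalProjectionOnto C)) =
      C.subtypeL.comp (Submodule.orthogonalProjectionOnto C) := by
  exact C.isIdempotentElem_starProjection

lemma moveLemma (C A B : Submodule ℂ E) (hCA : C ⟂ A) (hCB : C ⟂ B) (hAB : A ⟂ B) :
    WeaklyPerp (C ⊔ A) (C ⊔ B) := by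
  unfold WeaklyPerp
  rw [Commute, SemiconjBy, proj_sup C A hCA, proj_sup C B hCB]
  rw [add_mul, add_mul, mul_add, mul_add, mul_add, mul_add, proj_mul_self,
    proj_mul_eq_zero _ _ hCB, proj_mul_eq_zero _ _ hCA.symm, proj_mul_eq_zero _ _ hAB,
    proj_mul_eq_zero _ _ hCA, proj_mul_eq_zero _ _ hCB.symm, proj_mul_eq_zero _ _ hAB.symm]


lemma weaklyPerp_orthogonal {A B : Submodule ℂ E} (h : WeaklyPerp A B) :
    WeaklyPerp Aᗮ Bᗮ := by
  unfold WeaklyPerp at *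
  have key : ∀ K : Submodule ℂ E, Kᗮ.subtypeL.comp (Submodule.orthogonalProjectionOnto Kᗮ)
      = 1 - K.subtypeL.comp (Submodule.orthogonalProjectionOnto K) := by
    intro K
    rw [eq_sub_iff_add_eq, add_comm, ContinuousLinearMap.one_def]
    exact (Submodule.id_eq_sum_starProjection_self_orthogonalComplement (K := K)).symm
  rw [key A, key B]
  exact (Commute.one_left _).sub_left ((Commute.one_right _).sub_right h)

lemma exists_ne_zero_mem {W : Submodule ℂ E} (h : 0 < finrank ℂ W) :
    ∃ b ∈ W, b ≠ 0 := by
  apply Submodule.exists_mem_ne_zero_of_ne_bot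
  rintro rfl
  simp [finrank_bot] at h

lemma exists_between {X Y : Submodule ℂ E} (hXY : X ≤ Y) :
    ∀ m, finrank ℂ X ≤ m → m ≤ finrank ℂ Y → ∃ C, X ≤ C ∧ C ≤ Y ∧ finrank ℂ C = m := by
  intro m hm
  induction m, hm using Nat.le_induction with
  | base => exact fun _ => ⟨X, le_rfl, hXY, rfl⟩
  | succ m hm ih =>
    intro hmY
    obtain ⟨C, hXC, hCY, hC⟩ := ih (by omega)
    have hlt : ∃ y ∈ Y, y ∉ C := by
      by_contra hcon
      push_neg at hcon
      have : finrank ℂ Y ≤ finrank ℂ C := Submodule.finrank_mono hcon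
      omega
    obtain ⟨y, hyY, hyC⟩ := hlt
    have hy0 : y ≠ 0 := fun h => hyC (h ▸ C.zero_mem)
    have hdisj : C ⊓ (ℂ ∙ y) = ⊥ := by
      rw [Submodule.eq_bot_iff]
      rintro z ⟨hzC, hz⟩
      obtain ⟨a, rfl⟩ := Submodule.mem_span_singleton.1 hz
      rcases eq_or_ne a 0 with rfl | ha
      · simp
      · exact absurd (by simpa [ha] using C.smul_mem a⁻¹ hzC) hyC
    have hsum := Submodule.finrank_sup_add_finrank_inf_eq C (ℂ ∙ y)
    rw [hdisj, finrank_span_singleton hy0] at hsum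
    simp only [finrank_bot, add_zero] at hsum
    exact ⟨C ⊔ ℂ ∙ y, hXC.trans le_sup_left,
      sup_le hCY ((Submodule.span_singleton_le_iff_mem _ _).2 hyY), by omega⟩

def Linked (k : ℕ) (V V' : Submodule ℂ E) : Prop :=
  ∃ (s : ℕ) (c : Fin (s + 1) → Submodule ℂ E),
    c 0 = V ∧ c (Fin.last s) = V' ∧ (∀ i, finrank ℂ (c i) = k) ∧
    (∀ i : Fin s, WeaklyPerp (c i.castSucc) (c i.succ))

lemma Linked.refl {k : ℕ} {V : Submodule ℂ E} (h : finrank ℂ V = k) : Linked k V V :=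
  ⟨0, fun _ => V, rfl, rfl, fun _ => h, fun i => i.elim0⟩

lemma Linked.cons {k : ℕ} {V W V' : Submodule ℂ E} (hV : finrank ℂ V = k)
    (h : WeaklyPerp V W) (hL : Linked k W V') : Linked k V V' := by
  obtain ⟨s, c, hc0, hcl, hdim, hperp⟩ := hL
  refine ⟨s + 1, Fin.cons V c, Fin.cons_zero _ _, ?_, ?_, ?_⟩
  · rw [← Fin.succ_last, Fin.cons_succ, hcl]
  · intro i
    induction i using Fin.cases with
    | zero => exact hV
    | succ j => exact hdim j
  · intro i
    induction i using Fin.cases with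
    | zero =>
      simp only [Fin.castSucc_zero, Fin.cons_zero, Fin.succ_zero_eq_one]
      have h1 : (1 : Fin (s + 2)) = Fin.succ 0 := by
        simp [Fin.ext_iff]
      rw [h1, Fin.cons_succ, hc0]
      exact h
    | succ j =>
      rw [← Fin.succ_castSucc, Fin.cons_succ, Fin.cons_succ]
      exact hperp j


lemma rank_count (A B : Submodule ℂ E) :
    finrank ℂ (A ⊔ B : Submodule ℂ E) + finrank ℂ (A ⊓ B : Submodule ℂ E)
      = finrank ℂ A + finrank ℂ B :=
  Submodule.finrank_sup_add_finrank_inf_eq A B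

lemma rank_orth (A : Submodule ℂ E) : finrank ℂ A + finrank ℂ Aᗮ = n := by
  simpa using Submodule.finrank_add_finrank_orthogonal A

lemma rank_le (A : Submodule ℂ E) : finrank ℂ A ≤ n := by
  simpa using Submodule.finrank_le A

lemma linked_of (k : ℕ) (hk1 : 1 ≤ k) (hkn : k + 2 ≤ n) :
    ∀ m (V V' : Submodule ℂ E), finrank ℂ V = k → finrank ℂ V' = k →
      k ≤ finrank ℂ (V ⊓ V' : Submodule ℂ E) + m → Linked k V V' := by
  intro m
  induction m with
  | zero =>
    intro V V' hV hV' hb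
    have h1 : finrank ℂ (V ⊓ V' : Submodule ℂ E) ≤ k := hV ▸ Submodule.finrank_mono inf_le_left
    have h2 : V ⊓ V' = V := Submodule.eq_of_le_of_finrank_eq inf_le_left (by omega)
    have h3 : V ⊓ V' = V' := Submodule.eq_of_le_of_finrank_eq inf_le_right (by rw [hV']; omega)
    rw [← h2, h3]
    exact Linked.refl hV'
  | succ m ih =>
    intro V V' hV hV' hb
    by_cases hVV : V = V'
    · rw [hVV]; exact Linked.refl hV'
    set d := finrank ℂ (V ⊓ V' : Submodule ℂ E) with hd
    have hdk : d ≤ k := hV ▸ Submodule.finrank_mono inf_le_left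
    have hdlt : d < k := by
      rcases eq_or_lt_of_le hdk with he | h
      · exfalso
        have h2 : V ⊓ V' = V := Submodule.eq_of_le_of_finrank_eq inf_le_left (by omega)
        have h3 : V ⊓ V' = V' := Submodule.eq_of_le_of_finrank_eq inf_le_right (by rw [hV']; omega)
        exact hVV (h2 ▸ h3)
      · exact h
    -- choose b ∈ V' orthogonal to V ⊓ V', b ≠ 0
    have hbpos : 0 < finrank ℂ (V' ⊓ (V ⊓ V')ᗮ : Submodule ℂ E) := by
      have c1 := rank_count V' (V ⊓ V')ᗮ
      have c2 := rank_orth (V ⊓ V' : Submodule ℂ E)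
      have c3 := rank_le (V' ⊔ (V ⊓ V')ᗮ : Submodule ℂ E)
      omega
    obtain ⟨b, hbmem, hb0⟩ := exists_ne_zero_mem hbpos
    have hbV' : b ∈ V' := hbmem.1
    have hbO : b ∈ (V ⊓ V')ᗮ := hbmem.2
    -- the subspace C with V ⊓ V' ≤ C ≤ V ⊓ (ℂ ∙ b)ᗮ, finrank C = k - 1
    have hbspan : (ℂ ∙ b) ≤ (V ⊓ V')ᗮ := (Submodule.span_singleton_le_iff_mem _ _).2 hbO
    have hsub : V ⊓ V' ≤ V ⊓ (ℂ ∙ b)ᗮ := by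
      refine le_inf inf_le_left fun x hx => ?_
      have : V ⊓ V' ≤ (ℂ ∙ b)ᗮ :=
        (Submodule.le_orthogonal_orthogonal _).trans (Submodule.orthogonal_le hbspan)
      exact this hx
    have hrb : finrank ℂ (ℂ ∙ b) = 1 := finrank_span_singleton hb0
    have hVb : k - 1 ≤ finrank ℂ (V ⊓ (ℂ ∙ b)ᗮ : Submodule ℂ E) := by
      have c1 := rank_count V (ℂ ∙ b)ᗮ
      have c2 := rank_orth (ℂ ∙ b)
      have c3 := rank_le (V ⊔ (ℂ ∙ b)ᗮ : Submodule ℂ E)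
      omega
    obtain ⟨C, hVVC, hCle, hC⟩ := exists_between hsub (k - 1) (by omega) hVb
    have hCV : C ≤ V := hCle.trans inf_le_left
    have hCb : C ⟂ (ℂ ∙ b) := Submodule.isOrtho_iff_le.2 (hCle.trans inf_le_right)
    -- choose f orthogonal to V and b
    have hfpos : 0 < finrank ℂ ((V ⊔ ℂ ∙ b)ᗮ : Submodule ℂ E) := by
      have c1 := rank_orth (V ⊔ ℂ ∙ b : Submodule ℂ E)
      have c2 := rank_count V (ℂ ∙ b)
      omega
    obtain ⟨f, hfO, hf0⟩ := exists_ne_zero_mem hfpos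
    have hfV : (ℂ ∙ f) ⟂ V := by
      refine Submodule.isOrtho_iff_le.2 ((Submodule.span_singleton_le_iff_mem _ _).2 ?_)
      exact Submodule.orthogonal_le le_sup_left hfO
    have hfb : (ℂ ∙ f) ⟂ (ℂ ∙ b) := by
      refine Submodule.isOrtho_iff_le.2 ((Submodule.span_singleton_le_iff_mem _ _).2 ?_)
      exact Submodule.orthogonal_le le_sup_right hfO
    have hCf : C ⟂ (ℂ ∙ f) := (hfV.symm).mono_left hCV
    -- the two moves
    have hVdecomp : C ⊔ (Cᗮ ⊓ V) = V := Submodule.sup_orthogonal_inf_of_hasOrthogonalProjection hCV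
    have move1 : WeaklyPerp V (C ⊔ ℂ ∙ f) := by
      rw [← hVdecomp]
      exact moveLemma C (Cᗮ ⊓ V) (ℂ ∙ f)
        ((Submodule.isOrtho_orthogonal_right C).mono_right inf_le_left)
        hCf ((hfV.symm).mono_left inf_le_right)
    have move2 : WeaklyPerp (C ⊔ ℂ ∙ f) (C ⊔ ℂ ∙ b) := moveLemma C (ℂ ∙ f) (ℂ ∙ b) hCf hCb hfb
    -- dimensions of the new subspaces
    have hrf : finrank ℂ (ℂ ∙ f) = 1 := finrank_span_singleton hf0
    have hW1 : finrank ℂ (C ⊔ ℂ ∙ f : Submodule ℂ E) = k := by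
      have c1 := rank_count C (ℂ ∙ f)
      rw [disjoint_iff.1 hCf.disjoint, finrank_bot] at c1
      omega
    have hW2 : finrank ℂ (C ⊔ ℂ ∙ b : Submodule ℂ E) = k := by
      have c1 := rank_count C (ℂ ∙ b)
      rw [disjoint_iff.1 hCb.disjoint, finrank_bot] at c1
      omega
    -- progress
    have hprog : d + 1 ≤ finrank ℂ ((C ⊔ ℂ ∙ b) ⊓ V' : Submodule ℂ E) := by
      have hXle : (V ⊓ V') ⊔ (ℂ ∙ b) ≤ (C ⊔ ℂ ∙ b) ⊓ V' :=
        le_inf (sup_le (hVVC.trans le_sup_left) le_sup_right)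
          (sup_le inf_le_right ((Submodule.span_singleton_le_iff_mem _ _).2 hbV'))
      have hdisj : (V ⊓ V') ⊓ (ℂ ∙ b) = ⊥ :=
        disjoint_iff.1 (Submodule.isOrtho_iff_le.2 hbspan).symm.disjoint
      have c1 := rank_count (V ⊓ V' : Submodule ℂ E) (ℂ ∙ b)
      rw [hdisj, finrank_bot] at c1
      have := Submodule.finrank_mono hXle
      omega
    -- conclude
    refine Linked.cons hV move1 (Linked.cons hW1 move2 (ih (C ⊔ ℂ ∙ b) V' hW2 hV' ?_))
    omega


end ChainAux

open ChainAux in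
/-- **Lemma.** For `n ≥ 3` and `1 ≤ k ≤ n − 1`, any two `k`-dimensional subspaces `V, V'` of
`ℂⁿ` can be linked by a finite chain `V = V₀ ⊚ V₁ ⊚ ⋯ ⊚ V_s = V'` of `k`-dimensional subspaces
in which consecutive members are weakly perpendicular. -/
theorem chain_of_weakly_perpendicular_subspaces
    (n k : ℕ) (hn : 3 ≤ n) (hk1 : 1 ≤ k) (hkn : k ≤ n - 1)
    (V V' : Submodule ℂ (EuclideanSpace ℂ (Fin n)))
    (hV : finrank ℂ V = k) (hV' : finrank ℂ V' = k) :
    ∃ (s : ℕ) (c : Fin (s + 1) → Submodule ℂ (EuclideanSpace ℂ (Fin n))),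
      c 0 = V ∧ c (Fin.last s) = V' ∧
      (∀ i, finrank ℂ (c i) = k) ∧
      (∀ i : Fin s, WeaklyPerp (c i.castSucc) (c i.succ)) := by
  by_cases hc : k + 2 ≤ n
  · exact linked_of k hk1 hc k V V' hV hV' (by omega)
  · -- k = n - 1; pass to orthogonal complements, which have dimension 1 ≤ n - 2
    have hVo : finrank ℂ (Vᗮ) = n - k := by have := rank_orth V; omega
    have hVo' : finrank ℂ (V'ᗮ) = n - k := by have := rank_orth V'; omega
    obtain ⟨s, c, h0, hl, hdim, hperp⟩ :=
      linked_of (n - k) (by omega) (by omega) (n - k) Vᗮ V'ᗮ hVo hVo' (by omega)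
    refine ⟨s, fun i => (c i)ᗮ, ?_, ?_, ?_, fun i => weaklyPerp_orthogonal (hperp i)⟩
    · show (c 0)ᗮ = V
      rw [h0, Submodule.orthogonal_orthogonal]
    · show (c (Fin.last s))ᗮ = V'
      rw [hl, Submodule.orthogonal_orthogonal]
    · intro i
      show finrank ℂ ((c i)ᗮ) = k
      have := rank_orth (c i)
      have := hdim i
      omega
end

section
/- Let n ≥ 3. Every continuous CS-preserving map φ : U(n) → M_n(ℂ) on the unitary group is homogeneous with respect to unit scalars: φ(zX) = z·φ(X) for every z ∈ ℂ with |z| = 1 and every X ∈ U(n). -/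
open Matrix Polynomial Module

namespace UnitaryCSHelper



variable {n : ℕ}

lemma eval_charpoly (M : Matrix (Fin n) (Fin n) ℂ) (t : ℂ) :
    (M.charpoly).eval t = (t • (1 : Matrix (Fin n) (Fin n) ℂ) - M).det := by
  rw [Matrix.charpoly, ← Polynomial.coe_evalRingHom, RingHom.map_det]
  congr 1
  ext i j
  by_cases h : i = j
  · subst h
    simp [Matrix.charmatrix_apply_eq, Matrix.one_apply]
  · simp [Matrix.charmatrix_apply_ne _ _ _ h, Matrix.one_apply, h]

lemma charpoly_conj (U D V : Matrix (Fin n) (Fin n) ℂ) (h1 : U * V = 1) :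
    (U * D * V).charpoly = D.charpoly := by
  have h2 : V * U = 1 := mul_eq_one_comm.mp h1
  set f : Matrix (Fin n) (Fin n) ℂ →+* Matrix (Fin n) (Fin n) ℂ[X] :=
    (Polynomial.C : ℂ →+* ℂ[X]).mapMatrix with hf
  have key : charmatrix (U * D * V) = f U * charmatrix D * f V := by
    rw [charmatrix, charmatrix, Matrix.mul_sub, Matrix.sub_mul]
    congr 1
    · refine Eq.symm ?_
      calc f U * Matrix.scalar (Fin n) (X : ℂ[X]) * f V
          = Matrix.scalar (Fin n) (X : ℂ[X]) * (f U * f V) := by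
            rw [← (Matrix.scalar_commute (X : ℂ[X]) (fun r' => Commute.all _ _) (f U)).eq,
              Matrix.mul_assoc]
        _ = Matrix.scalar (Fin n) (X : ℂ[X]) := by
            rw [← map_mul f, h1, _root_.map_one f, Matrix.mul_one]
    · show f (U * D * V) = f U * f D * f V
      rw [_root_.map_mul, _root_.map_mul]
  rw [Matrix.charpoly, Matrix.charpoly, key, Matrix.det_mul, Matrix.det_mul,
    mul_comm, ← mul_assoc, ← Matrix.det_mul, ← map_mul f, h2, _root_.map_one f,
    Matrix.det_one, one_mul]

lemma charpoly_diagonal (d : Fin n → ℂ) :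
    (Matrix.diagonal d).charpoly = ∏ i, (X - C (d i)) := by
  rw [Matrix.charpoly_of_upperTriangular _ (Matrix.blockTriangular_diagonal d)]
  simp

/-- A continuous function on a preconnected space with values in a finite set is constant. -/
lemma const_of_finite {α : Type*} [TopologicalSpace α] [PreconnectedSpace α]
    {g : α → ℂ} (hg : Continuous g) {F : Set ℂ} (hF : F.Finite) (hmaps : ∀ s, g s ∈ F)
    (x y : α) : g x = g y := by
  set ι := {w : ℂ // w ∈ F ∧ (g ⁻¹' {w}).Nonempty} with hι
  have hfin : Finite ι := by
    have : {w : ℂ | w ∈ F ∧ (g ⁻¹' {w}).Nonempty}.Finite :=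
      hF.subset (fun w hw => hw.1)
    exact this.to_subtype
  have hsub : Subsingleton ι := by
    refine subsingleton_of_disjoint_isClosed_iUnion_eq_univ
      (s := fun w : ι => g ⁻¹' {w.val}) (fun i => i.2.2) ?_
      (fun i => (isClosed_singleton).preimage hg) ?_
    · intro i j hij
      refine Set.disjoint_left.mpr (fun a hai haj => ?_)
      apply hij
      apply Subtype.ext
      simp only [Set.mem_preimage, Set.mem_singleton_iff] at hai haj
      rw [← hai, ← haj]
    · ext a
      simp only [Set.mem_iUnion, Set.mem_univ, iff_true]
      exact ⟨⟨g a, hmaps a, ⟨a, rfl⟩⟩, rfl⟩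
  have := hsub.elim ⟨g x, hmaps x, ⟨x, rfl⟩⟩ ⟨g y, hmaps y, ⟨y, rfl⟩⟩
  exact congrArg Subtype.val this



section Abstract

variable {E : Type*} [NormedAddCommGroup E] [InnerProductSpace ℂ E] [FiniteDimensional ℂ E]

local notation "⟪" x ", " y "⟫" => @inner ℂ E _ x y

/-- Spectral theorem for inner-product-preserving operators on a finite-dimensional
complex inner product space: there is an orthonormal basis of eigenvectors, with
unit-modulus eigenvalues. -/
theorem unitary_orthobasis {n : ℕ} (hn : Module.finrank ℂ E = n) (T : E →ₗ[ℂ] E)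
    (hTinner : ∀ x y : E, ⟪T x, T y⟫ = ⟪x, y⟫) (hTinj : Function.Injective T) :
    ∃ (b : OrthonormalBasis (Fin n) ℂ E) (d : Fin n → ℂ),
      (∀ i, star (d i) * d i = 1) ∧ ∀ i, T (b i) = d i • b i := by
  classical
  -- eigenspace orthogonal complement invariance
  have hEinv : ∀ (μ : ℂ), ∀ v ∈ (End.eigenspace T μ)ᗮ, T v ∈ (End.eigenspace T μ)ᗮ := by
    intro μ v hv
    rw [Submodule.mem_orthogonal] at hv ⊢
    intro w hw
    by_cases hμ : μ = 0
    · have hw0 : w = 0 := by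
        have hTw : T w = 0 := by
          rw [End.mem_eigenspace_iff] at hw
          rw [hw, hμ, zero_smul]
        exact hTinj (by rw [hTw, map_zero])
      simp [hw0]
    · have hw' : (μ⁻¹ • w) ∈ End.eigenspace T μ := Submodule.smul_mem _ _ hw
      have hTw' : T (μ⁻¹ • w) = w := by
        rw [_root_.map_smul]
        rw [End.mem_eigenspace_iff] at hw
        rw [hw, smul_smul, inv_mul_cancel₀ hμ, one_smul]
      calc ⟪w, T v⟫ = ⟪T (μ⁻¹ • w), T v⟫ := by rw [hTw']
        _ = ⟪μ⁻¹ • w, v⟫ := hTinner _ _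
        _ = 0 := hv _ hw'
  have hWinv : ∀ v ∈ (⨆ μ : ℂ, End.eigenspace T μ)ᗮ, T v ∈ (⨆ μ : ℂ, End.eigenspace T μ)ᗮ := by
    intro v hv
    rw [← Submodule.iInf_orthogonal] at hv ⊢
    exact T.iInf_invariant hEinv v hv
  -- the orthogonal complement of the eigenspaces is trivial
  have hW_bot : (⨆ μ : ℂ, End.eigenspace T μ)ᗮ = ⊥ := by
    by_contra h
    haveI : Nontrivial ↥((⨆ μ : ℂ, End.eigenspace T μ)ᗮ) :=
      Submodule.nontrivial_iff_ne_bot.mpr h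
    obtain ⟨μ, hμ⟩ := Module.End.exists_eigenvalue (T.restrict hWinv)
    have hdisj : Disjoint (End.eigenspace T μ) ((⨆ μ : ℂ, End.eigenspace T μ)ᗮ) :=
      (Submodule.orthogonal_disjoint _).mono_left (le_iSup _ μ)
    exact hμ (End.eigenspace_restrict_eq_bot hWinv hdisj)
  -- eigenvalues are unit scalars
  have hUnit : ∀ (μ : ℂ) (v : E),
      v ∈ End.eigenspace T μ → v ≠ 0 → star μ * μ = 1 := by
    intro μ v hv hv0
    rw [End.mem_eigenspace_iff] at hv
    have h1 : ⟪v, v⟫ = (star μ * μ) * ⟪v, v⟫ := by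
      conv_lhs => rw [← hTinner v v, hv]
      rw [inner_smul_left, inner_smul_right, RCLike.star_def]
      ring
    have h2 : ⟪v, v⟫ ≠ 0 := inner_self_ne_zero.mpr hv0
    exact mul_right_cancel₀ h2 (h1.symm.trans (one_mul _).symm)
  -- orthogonal family
  have orthFam : OrthogonalFamily ℂ (fun μ : End.Eigenvalues T => End.eigenspace T μ)
      (fun μ => (End.eigenspace T μ).subtypeₗᵢ) := by
    rintro μ ν hμν ⟨v, hv⟩ ⟨w, hw⟩
    show ⟪v, w⟫ = 0
    by_cases hv0 : v = 0
    · simp [hv0]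
    by_cases hw0 : w = 0
    · simp [hw0]
    by_contra hinner
    have hv' := hv; have hw' := hw
    rw [End.mem_eigenspace_iff] at hv' hw'
    have h1 : ⟪v, w⟫ = (star (μ : ℂ) * (ν : ℂ)) * ⟪v, w⟫ := by
      conv_lhs => rw [← hTinner v w, hv', hw']
      rw [inner_smul_left, inner_smul_right, RCLike.star_def]
      ring
    have h2 : star (μ : ℂ) * (ν : ℂ) = 1 :=
      mul_right_cancel₀ hinner (h1.symm.trans (one_mul _).symm)
    have h3 : star (μ : ℂ) * (μ : ℂ) = 1 := hUnit _ v hv hv0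
    have h4 : star (μ : ℂ) ≠ 0 := fun h => by simp [h] at h3
    have : (ν : ℂ) = (μ : ℂ) := mul_left_cancel₀ h4 (h2.trans h3.symm)
    exact hμν (Subtype.ext this.symm)
  have internal : DirectSum.IsInternal (fun μ : End.Eigenvalues T => End.eigenspace T μ) :=
    orthFam.isInternal_iff.mpr
      (show (⨆ μ : {μ : ℂ // End.eigenspace T μ ≠ ⊥}, End.eigenspace T μ)ᗮ = ⊥ by
        rw [iSup_ne_bot_subtype, hW_bot])
  set b := internal.subordinateOrthonormalBasis hn orthFam with hb
  set d : Fin n → ℂ := fun i => Module.End.UnifEigenvalues.val T 1 (internal.subordinateOrthonormalBasisIndex hn i orthFam)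
    with hd
  have hmem : ∀ i, b i ∈ End.eigenspace T (d i) := fun i =>
    internal.subordinateOrthonormalBasis_subordinate hn i orthFam
  have hbd : ∀ i, T (b i) = d i • b i := by
    intro i
    have := hmem i
    rwa [End.mem_eigenspace_iff] at this
  have hb0 : ∀ i, b i ≠ 0 := by
    intro i
    simpa using b.toBasis.ne_zero i
  exact ⟨b, d, fun i => hUnit _ (b i) (hmem i) (hb0 i), hbd⟩

end Abstract







theorem unitary_spectral (A : Matrix (Fin n) (Fin n) ℂ)
    (hA : A ∈ Matrix.unitaryGroup (Fin n) ℂ) :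
    ∃ U ∈ Matrix.unitaryGroup (Fin n) ℂ, ∃ d : Fin n → ℂ,
      (∀ i, star (d i) * d i = 1) ∧ A = U * Matrix.diagonal d * star U := by
  classical
  have hA1 : star A * A = 1 := Matrix.mem_unitaryGroup_iff'.mp hA
  have hA2 : A * star A = 1 := mul_eq_one_comm.mp hA1
  set T : EuclideanSpace ℂ (Fin n) →ₗ[ℂ] EuclideanSpace ℂ (Fin n) :=
    Matrix.toEuclideanLin A with hT
  have hTinner : ∀ x y : EuclideanSpace ℂ (Fin n), inner ℂ (T x) (T y) = (inner ℂ x y : ℂ) := by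
    intro x y
    rw [PiLp.inner_apply, PiLp.inner_apply]
    have : ∀ (u v : EuclideanSpace ℂ (Fin n)),
        ∑ i, inner ℂ (u i) (v i) = star (WithLp.equiv 2 (Fin n → ℂ) u) ⬝ᵥ
          (WithLp.equiv 2 (Fin n → ℂ) v) := by
      intro u v
      simp [dotProduct, RCLike.inner_apply, Pi.star_apply, mul_comm]
    rw [this, this]
    have happ : ∀ (w : EuclideanSpace ℂ (Fin n)),
        WithLp.equiv 2 (Fin n → ℂ) (T w) = A *ᵥ (WithLp.equiv 2 (Fin n → ℂ) w) := fun _ => rfl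
    rw [happ, happ, Matrix.star_mulVec, ← Matrix.dotProduct_mulVec,
      Matrix.mulVec_mulVec, ← Matrix.star_eq_conjTranspose, hA1, Matrix.one_mulVec]
  have hTinj : Function.Injective T := by
    intro x y hxy
    have h1 : ∀ w : EuclideanSpace ℂ (Fin n), Matrix.toEuclideanLin (star A) (T w) = w := by
      intro w
      show (WithLp.equiv 2 (Fin n → ℂ)).symm
        (star A *ᵥ (A *ᵥ (WithLp.equiv 2 (Fin n → ℂ) w))) = w
      rw [Matrix.mulVec_mulVec, hA1, Matrix.one_mulVec]
      exact (WithLp.equiv 2 (Fin n → ℂ)).symm_apply_apply w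
    rw [← h1 x, ← h1 y, hxy]
  obtain ⟨b, d, hdu, hbd⟩ := unitary_orthobasis (E := EuclideanSpace ℂ (Fin n))
    finrank_euclideanSpace_fin T hTinner hTinj
  have hb0 : ∀ i, b i ≠ 0 := fun i => by simpa using b.toBasis.ne_zero i
  set U : Matrix (Fin n) (Fin n) ℂ := Matrix.of (fun i j => b j i) with hU
  have hUU : star U * U = 1 := by
    ext j k
    have horth := orthonormal_iff_ite.mp b.orthonormal j k
    rw [PiLp.inner_apply] at horth
    simp only [Matrix.mul_apply, Matrix.star_apply, Matrix.one_apply, hU, Matrix.of_apply]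
    rw [← horth]
    congr 1
    funext i
    simp [RCLike.inner_apply, mul_comm]
  have hUmem : U ∈ Matrix.unitaryGroup (Fin n) ℂ := Matrix.mem_unitaryGroup_iff'.mpr hUU
  have hUU2 : U * star U = 1 := mul_eq_one_comm.mp hUU
  have hAU : A * U = U * Matrix.diagonal d := by
    ext i j
    have h1 : (A * U) i j = (T (b j)) i := by
      simp only [Matrix.mul_apply, hU, Matrix.of_apply]
      rfl
    rw [h1, hbd j, Matrix.mul_diagonal]
    simp only [hU, Matrix.of_apply]
    rw [PiLp.smul_apply, smul_eq_mul, mul_comm]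
  refine ⟨U, hUmem, d, hdu, ?_⟩
  calc A = A * (U * star U) := by rw [hUU2, Matrix.mul_one]
    _ = (A * U) * star U := by rw [Matrix.mul_assoc]
    _ = U * Matrix.diagonal d * star U := by rw [hAU]





/-- `X` has distinct eigenvalues, witnessed by a factorization of the charpoly. -/
def distinctSpec (A : ↥(Matrix.unitaryGroup (Fin n) ℂ)) : Prop :=
  ∃ c : Fin n → ℂ, Function.Injective c ∧
    Matrix.charpoly (A : Matrix (Fin n) (Fin n) ℂ) = ∏ i, (X - C (c i))




theorem dense_distinct : Dense {X : ↥(Matrix.unitaryGroup (Fin n) ℂ) | distinctSpec X} := by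
  intro X
  obtain ⟨U, hU, d, hdu, hAdU⟩ := unitary_spectral (X : Matrix (Fin n) (Fin n) ℂ) X.2
  set c : ℝ → Fin n → ℂ := fun t k => Complex.exp (Complex.I * t * k) * d k with hc
  have hstarexp : ∀ (x : ℝ), star (Complex.exp (Complex.I * x)) = Complex.exp (-(Complex.I * x)) := by
    intro x
    rw [Complex.star_def, ← Complex.exp_conj]
    congr 1
    simp [Complex.conj_I]
  have hcu : ∀ t k, star (c t k) * c t k = 1 := by
    intro t k
    have expand : star (c t k) * c t k =
        (star (Complex.exp (Complex.I * t * k)) * Complex.exp (Complex.I * t * k)) *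
          (star (d k) * d k) := by
      simp only [hc, star_mul']
      ring
    have hIcast : Complex.I * t * k = Complex.I * ((t * (k : ℝ) : ℝ) : ℂ) := by
      push_cast
      ring
    rw [expand, hIcast, hstarexp, ← Complex.exp_add, hdu k]
    simp
  have hdiagmem : ∀ t, Matrix.diagonal (c t) ∈ Matrix.unitaryGroup (Fin n) ℂ := by
    intro t
    rw [Matrix.mem_unitaryGroup_iff', Matrix.star_eq_conjTranspose,
      Matrix.diagonal_conjTranspose, Matrix.diagonal_mul_diagonal]
    rw [show (fun i => star (c t) i * c t i) = fun _ => (1 : ℂ) from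
      funext fun k => hcu t k, Matrix.diagonal_one]
  set Uu : ↥(Matrix.unitaryGroup (Fin n) ℂ) := ⟨U, hU⟩ with hUu
  set F : ℝ → ↥(Matrix.unitaryGroup (Fin n) ℂ) :=
    fun t => Uu * ⟨Matrix.diagonal (c t), hdiagmem t⟩ * star Uu with hF
  have hFcoe : ∀ t, (F t : Matrix (Fin n) (Fin n) ℂ) = U * Matrix.diagonal (c t) * star U := by
    intro t
    rfl
  have hc0 : c 0 = d := by
    funext k
    simp [hc]
  have hF0 : F 0 = X := by
    apply Subtype.ext
    rw [hFcoe, hc0]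
    exact hAdU.symm
  have hFcont : Continuous F := by
    rw [continuous_induced_rng]
    show Continuous fun t => (F t : Matrix (Fin n) (Fin n) ℂ)
    simp only [hFcoe]
    refine Continuous.matrix_mul (Continuous.matrix_mul continuous_const ?_) continuous_const
    refine Continuous.matrix_diagonal ?_
    refine continuous_pi fun k => ?_
    exact (Complex.continuous_exp.comp
      ((continuous_const.mul Complex.continuous_ofReal).mul continuous_const)).mul
      continuous_const
  have htend : Filter.Tendsto F (nhdsWithin 0 (Set.Ioi 0)) (nhds X) := by
    rw [← hF0]
    exact (hFcont.tendsto 0).mono_left nhdsWithin_le_nhds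
  have hinj : ∀ᶠ t in nhdsWithin 0 (Set.Ioi 0), ∀ k l : Fin n, k ≠ l → c t k ≠ c t l := by
    rw [Filter.eventually_all]
    intro k
    rw [Filter.eventually_all]
    intro l
    by_cases hkl : k = l
    · exact Filter.Eventually.of_forall fun t h => absurd hkl h
    · refine Filter.Eventually.mono ?_ (fun t h _ => h)
      by_cases hd : d k = d l
      · -- need exp(Itk) ≠ exp(Itl) for small positive t
        have hnpos : (0 : ℝ) < n := by exact_mod_cast k.pos
        have hbound : Set.Ioo (0 : ℝ) (2 * Real.pi / n) ∈ nhdsWithin 0 (Set.Ioi 0) := by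
          refine Ioo_mem_nhdsGT_of_mem ⟨le_refl _, ?_⟩
          exact div_pos (by positivity) hnpos
        refine Filter.mem_of_superset hbound ?_
        intro t ht heq
        simp only [hc, hd] at heq
        have hd0 : d l ≠ 0 := by
          intro h0
          have := hdu l
          rw [h0, mul_zero] at this
          exact zero_ne_one this
        have hexp : Complex.exp (Complex.I * t * k) = Complex.exp (Complex.I * t * l) :=
          mul_right_cancel₀ hd0 heq
        have hone : Complex.exp (Complex.I * t * k - Complex.I * t * l) = 1 := by
          rw [Complex.exp_sub, hexp, div_self (Complex.exp_ne_zero _)]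
        rw [Complex.exp_eq_one_iff] at hone
        obtain ⟨m, hm⟩ := hone
        -- I * t * k - I * t * l = m * (2 * π * I)
        have hreal : t * ((k : ℝ) - (l : ℝ)) = (m : ℝ) * (2 * Real.pi) := by
          have : ((t * ((k : ℝ) - (l : ℝ)) : ℝ) : ℂ) * Complex.I
              = (((m : ℝ) * (2 * Real.pi) : ℝ) : ℂ) * Complex.I := by
            push_cast
            linear_combination hm
          have := mul_right_cancel₀ Complex.I_ne_zero this
          exact_mod_cast this
        have hlt : |t * ((k : ℝ) - (l : ℝ))| < 2 * Real.pi := by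
          rw [abs_mul]
          have hkn : |(k : ℝ) - (l : ℝ)| < n := by
            rw [abs_sub_lt_iff]
            constructor
            · have : (k : ℝ) < n := by exact_mod_cast k.2
              have : (0:ℝ) ≤ (l : ℝ) := by positivity
              linarith [show (k : ℝ) < n from by exact_mod_cast k.2]
            · linarith [show (l : ℝ) < n from by exact_mod_cast l.2,
                show (0:ℝ) ≤ (k : ℝ) from by positivity]
          have ht0 : |t| = t := abs_of_pos ht.1
          have hn0 : 0 < (n : ℝ) := hnpos
          calc |t| * |(k : ℝ) - (l : ℝ)| ≤ |t| * n := by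
                refine mul_le_mul_of_nonneg_left hkn.le (abs_nonneg t)
            _ < (2 * Real.pi / n) * n := by
                refine mul_lt_mul_of_pos_right ?_ hn0
                rw [ht0]; exact ht.2
            _ = 2 * Real.pi := by field_simp
        rw [hreal, abs_mul, abs_of_pos (by positivity : (0:ℝ) < 2 * Real.pi)] at hlt
        have hm0 : m = 0 := by
          have h1 : |(m : ℝ)| < 1 := by
            nlinarith [Real.pi_pos, abs_nonneg ((m : ℝ))]
          have h2 : ((|m| : ℤ) : ℝ) < 1 := by rwa [Int.cast_abs]
          have h3 : |m| < 1 := by exact_mod_cast h2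
          exact Int.abs_lt_one_iff.mp h3
        rw [hm0] at hreal
        simp at hreal
        rcases hreal with h | h
        · exact absurd h (ne_of_gt ht.1)
        · have : (k : ℝ) = (l : ℝ) := by linarith
          exact hkl (Fin.ext (by exact_mod_cast this))
      · -- continuity case
        have hcont : ContinuousAt (fun t : ℝ => c t k - c t l) 0 := by
          refine ContinuousAt.sub ?_ ?_ <;>
          · refine ContinuousAt.mul ?_ continuousAt_const
            refine Complex.continuous_exp.continuousAt.comp ?_
            exact ((continuousAt_const.mul Complex.continuous_ofReal.continuousAt).mul
              continuousAt_const)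
        have hne : (fun t : ℝ => c t k - c t l) 0 ≠ 0 := by
          simp only [hc]
          push_cast
          simp only [Complex.ofReal_zero, mul_zero, zero_mul, Complex.exp_zero, one_mul]
          exact sub_ne_zero.mpr hd
        have := hcont.eventually_ne hne
        refine Filter.Eventually.mono (this.filter_mono nhdsWithin_le_nhds) ?_
        intro t h heq
        exact h (sub_eq_zero.mpr heq)
  have hmem : ∀ᶠ t in nhdsWithin 0 (Set.Ioi 0),
      F t ∈ {X : ↥(Matrix.unitaryGroup (Fin n) ℂ) | distinctSpec X} := by
    refine Filter.Eventually.mono hinj ?_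
    intro t ht
    refine ⟨c t, ?_, ?_⟩
    · intro k l hkl
      by_contra hne
      exact ht k l hne hkl
    · rw [hFcoe]
      have hUV : U * star U = 1 := mul_eq_one_comm.mp (Matrix.mem_unitaryGroup_iff'.mp hU)
      rw [charpoly_conj U _ (star U) hUV, charpoly_diagonal]
  exact mem_closure_of_tendsto htend hmem








/-- membership of `z • A` in the unitary group for `‖z‖ = 1`. -/
lemma smul_mem_unitaryGroup (z : ℂ) (hz : ‖z‖ = 1)
    (A : Matrix (Fin n) (Fin n) ℂ) (hA : A ∈ Matrix.unitaryGroup (Fin n) ℂ) :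
    z • A ∈ Matrix.unitaryGroup (Fin n) ℂ := by
  have hzz : star z * z = 1 := by
    rw [Complex.star_def, mul_comm, Complex.mul_conj]
    norm_cast
    rw [Complex.normSq_eq_norm_sq, hz]
    norm_num
  rw [Matrix.mem_unitaryGroup_iff'] at hA ⊢
  rw [star_smul, Matrix.smul_mul, Matrix.mul_smul, smul_smul, hzz, hA, one_smul]

theorem core (hn : 3 ≤ n)
    (φ : ↥(Matrix.unitaryGroup (Fin n) ℂ) → Matrix (Fin n) (Fin n) ℂ)
    (hcont : Continuous φ)
    (hcomm : ∀ A B : ↥(Matrix.unitaryGroup (Fin n) ℂ),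
      (A : Matrix (Fin n) (Fin n) ℂ) * (B : Matrix (Fin n) (Fin n) ℂ) =
        (B : Matrix (Fin n) (Fin n) ℂ) * (A : Matrix (Fin n) (Fin n) ℂ) →
      φ A * φ B = φ B * φ A)
    (hspec : ∀ A : ↥(Matrix.unitaryGroup (Fin n) ℂ),
      Matrix.charpoly (φ A) = Matrix.charpoly (A : Matrix (Fin n) (Fin n) ℂ))
    (Xu : ↥(Matrix.unitaryGroup (Fin n) ℂ)) (hX : distinctSpec Xu)
    (z : ℂ) (hz : ‖z‖ = 1) (Y : ↥(Matrix.unitaryGroup (Fin n) ℂ))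
    (hYX : (Y : Matrix (Fin n) (Fin n) ℂ) = z • (Xu : Matrix (Fin n) (Fin n) ℂ)) :
    φ Y = z • φ Xu := by
  classical
  haveI : Nonempty (Fin n) := ⟨⟨0, by omega⟩⟩
  obtain ⟨c, hcinj, hcp⟩ := hX
  set A : Matrix (Fin n) (Fin n) ℂ := (Xu : Matrix (Fin n) (Fin n) ℂ) with hA
  set B : Matrix (Fin n) (Fin n) ℂ := φ Xu with hB
  have hBcp : B.charpoly = ∏ i, (Polynomial.X - C (c i)) := by rw [hB, hspec Xu, ← hA, hcp]
  -- eigenvectors of B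
  have hex : ∀ i : Fin n, ∃ v : Fin n → ℂ, v ≠ 0 ∧ B *ᵥ v = c i • v := by
    intro i
    have hdet : ((c i) • (1 : Matrix (Fin n) (Fin n) ℂ) - B).det = 0 := by
      rw [← eval_charpoly, hBcp, eval_prod]
      refine Finset.prod_eq_zero (Finset.mem_univ i) ?_
      simp
    obtain ⟨v, hv0, hv⟩ := Matrix.exists_mulVec_eq_zero_iff.mpr hdet
    refine ⟨v, hv0, ?_⟩
    rw [Matrix.sub_mulVec, Matrix.smul_mulVec, Matrix.one_mulVec, sub_eq_zero] at hv
    exact hv.symm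
  choose v hv0 hBv using hex
  -- they form a basis
  have heig : ∀ i, Module.End.HasEigenvector (Matrix.mulVecLin B) (c i) (v i) := by
    intro i
    refine ⟨Module.End.mem_eigenspace_iff.mpr ?_, hv0 i⟩
    rw [Matrix.mulVecLin_apply]
    exact hBv i
  have hli : LinearIndependent ℂ v :=
    Module.End.eigenvectors_linearIndependent' (Matrix.mulVecLin B) c hcinj v heig
  set bV : Basis (Fin n) ℂ (Fin n → ℂ) :=
    basisOfLinearIndependentOfCardEqFinrank hli
      (by rw [Fintype.card_fin, Module.finrank_fin_fun]) with hbV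
  have hcoe : ∀ i, bV i = v i := by
    intro i
    rw [hbV, coe_basisOfLinearIndependentOfCardEqFinrank]
  -- coefficients of eigen-equation solutions
  have hrepr : ∀ (μ : ℂ) (w : Fin n → ℂ), B *ᵥ w = μ • w →
      ∀ j, c j ≠ μ → bV.repr w j = 0 := by
    intro μ w hw j hj
    have h1 : ∀ k, bV.repr (B *ᵥ w) k = c k * bV.repr w k := by
      intro k
      conv_lhs => rw [← bV.sum_repr w]
      have hsum : B *ᵥ (∑ i, bV.repr w i • bV i) = ∑ i, (c i * bV.repr w i) • bV i := by
        have := map_sum (Matrix.mulVecLin B) (fun i => bV.repr w i • bV i) Finset.univ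
        rw [Matrix.mulVecLin_apply] at this
        rw [this]
        refine Finset.sum_congr rfl (fun i _ => ?_)
        rw [_root_.map_smul, Matrix.mulVecLin_apply, hcoe i, hBv i, smul_smul, mul_comm]
      rw [hsum, map_sum, Finsupp.finset_sum_apply]
      simp only [_root_.map_smul, Basis.repr_self, Finsupp.smul_single, smul_eq_mul, mul_one,
        Finsupp.single_apply]
      rw [Finset.sum_ite_eq' Finset.univ k (fun i => c i * bV.repr w i)]
      simp
    have h2 : bV.repr (B *ᵥ w) j = μ * bV.repr w j := by
      rw [hw, _root_.map_smul]
      simp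
    have h3 := (h1 j).symm.trans h2
    by_contra h0
    exact hj (mul_right_cancel₀ h0 h3)
  -- commuting matrices act diagonally on the v i
  have hdiag : ∀ (M : Matrix (Fin n) (Fin n) ℂ), B * M = M * B →
      ∀ i, M *ᵥ v i = (bV.repr (M *ᵥ v i) i) • v i := by
    intro M hM i
    set w : Fin n → ℂ := M *ᵥ v i with hw
    have hBw : B *ᵥ w = c i • w := by
      rw [hw, Matrix.mulVec_mulVec, hM, ← Matrix.mulVec_mulVec, hBv i, Matrix.mulVec_smul]
    have hzero : ∀ j, j ≠ i → bV.repr w j = 0 := by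
      intro j hj
      exact hrepr (c i) w hBw j (fun h => hj (hcinj h))
    conv_lhs => rw [← bV.sum_repr w]
    rw [Finset.sum_eq_single i]
    · rw [hcoe i]
    · intro b _ hb
      rw [hzero b hb, zero_smul]
    · intro hk
      exact absurd (Finset.mem_univ i) hk
  -- the unit circle
  haveI hconn : PreconnectedSpace ↥(Metric.sphere (0:ℂ) 1) := by
    refine Subtype.preconnectedSpace ?_
    refine (isConnected_sphere ?_ (0:ℂ) zero_le_one).isPreconnected
    rw [Complex.rank_real_complex]
    norm_num
  have hsphere_norm : ∀ w : ↥(Metric.sphere (0:ℂ) 1), ‖(w : ℂ)‖ = 1 := by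
    intro w
    have := w.2
    rw [mem_sphere_zero_iff_norm] at this
    exact this
  have hsphere_ne : ∀ w : ↥(Metric.sphere (0:ℂ) 1), (w : ℂ) ≠ 0 := by
    intro w h0
    have := hsphere_norm w
    rw [h0] at this
    simp at this
  set Z : ↥(Metric.sphere (0:ℂ) 1) → ↥(Matrix.unitaryGroup (Fin n) ℂ) :=
    fun w => ⟨(w : ℂ) • A, smul_mem_unitaryGroup _ (hsphere_norm w) A Xu.2⟩ with hZ
  have hZcont : Continuous Z := by
    rw [continuous_induced_rng]
    exact continuous_subtype_val.smul continuous_const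
  have hZcomm : ∀ w, B * φ (Z w) = φ (Z w) * B := by
    intro w
    refine hcomm Xu (Z w) ?_
    show A * ((w : ℂ) • A) = ((w : ℂ) • A) * A
    rw [Matrix.mul_smul, Matrix.smul_mul]
  -- the coefficient functionals
  set ℓ : Fin n → ((Fin n → ℂ) →ₗ[ℂ] ℂ) :=
    fun i => (Finsupp.lapply i).comp (bV.repr : (Fin n → ℂ) →ₗ[ℂ] (Fin n →₀ ℂ)) with hℓ
  have hℓ_apply : ∀ i x, ℓ i x = bV.repr x i := fun i x => rfl
  have hℓcont : ∀ i, Continuous (ℓ i) := fun i =>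
    LinearMap.continuous_of_finiteDimensional (ℓ i)
  -- the normalized eigenvalue functions on the circle
  set g : Fin n → ↥(Metric.sphere (0:ℂ) 1) → ℂ :=
    fun i w => (w : ℂ)⁻¹ * ℓ i (φ (Z w) *ᵥ v i) with hg
  have hgcont : ∀ i, Continuous (g i) := by
    intro i
    refine Continuous.mul (Continuous.inv₀ continuous_subtype_val hsphere_ne) ?_
    exact (hℓcont i).comp ((hcont.comp hZcont).matrix_mulVec continuous_const)
  -- each g i w is an eigenvalue of X
  have hgval : ∀ i w, φ (Z w) *ᵥ v i = (ℓ i (φ (Z w) *ᵥ v i)) • v i := by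
    intro i w
    rw [hℓ_apply]
    exact hdiag (φ (Z w)) (hZcomm w) i
  have hgmem : ∀ i w, g i w ∈ Set.range c := by
    intro i w
    set f : ℂ := ℓ i (φ (Z w) *ᵥ v i) with hf
    have hev : ((f • (1 : Matrix (Fin n) (Fin n) ℂ) - φ (Z w))).det = 0 := by
      rw [← Matrix.exists_mulVec_eq_zero_iff]
      refine ⟨v i, hv0 i, ?_⟩
      rw [Matrix.sub_mulVec, Matrix.smul_mulVec, Matrix.one_mulVec, hf,
        ← hgval i w, sub_self]
    have hcp2 : (φ (Z w)).charpoly = ((w : ℂ) • A).charpoly := hspec (Z w)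
    have heval : (((w : ℂ) • A).charpoly).eval f = 0 := by
      rw [← hcp2, eval_charpoly, hev]
    -- factor out w
    have hfactor : f • (1 : Matrix (Fin n) (Fin n) ℂ) - (w : ℂ) • A
        = (w : ℂ) • ((((w : ℂ)⁻¹ * f) • (1 : Matrix (Fin n) (Fin n) ℂ)) - A) := by
      rw [smul_sub, smul_smul, mul_inv_cancel_left₀ (hsphere_ne w)]
    have heval2 : (A.charpoly).eval ((w : ℂ)⁻¹ * f) = 0 := by
      have h1 := heval
      rw [eval_charpoly, hfactor, Matrix.det_smul, ← eval_charpoly] at h1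
      have hw0 : ((w : ℂ)) ^ (Fintype.card (Fin n)) ≠ 0 := pow_ne_zero _ (hsphere_ne w)
      exact (mul_eq_zero.mp h1).resolve_left hw0
    rw [hcp, eval_prod] at heval2
    obtain ⟨j, _, hj⟩ := Finset.prod_eq_zero_iff.mp heval2
    simp only [eval_sub, eval_X, eval_C, sub_eq_zero] at hj
    exact ⟨j, hj.symm⟩
  -- g i is constant, with value c i at w = 1
  have hone : (1 : ℂ) ∈ Metric.sphere (0:ℂ) 1 := by
    rw [mem_sphere_zero_iff_norm]
    simp
  have hZone : Z ⟨1, hone⟩ = Xu := by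
    apply Subtype.ext
    show (1 : ℂ) • A = A
    rw [one_smul]
  have hgone : ∀ i, g i ⟨1, hone⟩ = c i := by
    intro i
    rw [hg]
    simp only [hZone]
    rw [hℓ_apply]
    show (1:ℂ)⁻¹ * bV.repr (B *ᵥ v i) i = c i
    rw [hBv i, _root_.map_smul, inv_one, one_mul]
    have : bV.repr (v i) i = 1 := by
      rw [← hcoe i, Basis.repr_self]
      simp
    simp [this]
  have hgconst : ∀ i w, g i w = c i := by
    intro i w
    rw [← hgone i]
    exact const_of_finite (hgcont i) (Set.finite_range c) (hgmem i) w ⟨1, hone⟩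
  -- conclude
  have hfin : ∀ w i, φ (Z w) *ᵥ v i = ((w : ℂ) • B) *ᵥ v i := by
    intro w i
    rw [hgval i w]
    have hf : ℓ i (φ (Z w) *ᵥ v i) = (w : ℂ) * c i := by
      have h := hgconst i w
      simp only [hg] at h
      exact (inv_mul_eq_iff_eq_mul₀ (hsphere_ne w)).mp h
    rw [hf, Matrix.smul_mulVec, hBv i, smul_smul]
  have hmat : ∀ w, φ (Z w) = (w : ℂ) • B := by
    intro w
    have : Matrix.toLin' (φ (Z w)) = Matrix.toLin' ((w : ℂ) • B) := by
      refine bV.ext fun i => ?_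
      rw [Matrix.toLin'_apply, Matrix.toLin'_apply, hcoe i]
      exact hfin w i
    exact Matrix.toLin'.injective this
  -- specialize to z
  have hzs : z ∈ Metric.sphere (0:ℂ) 1 := by
    rw [mem_sphere_zero_iff_norm]
    exact hz
  have hYZ : Y = Z ⟨z, hzs⟩ := by
    apply Subtype.ext
    rw [hYX]
  rw [hYZ, hmat ⟨z, hzs⟩]


end UnitaryCSHelper

/-- **Lemma.** For `n ≥ 3`, every continuous CS-preserving map `φ : U(n) → M_n(ℂ)` is
homogeneous with respect to unit scalars: `φ(zX) = z·φ(X)` whenever `|z| = 1`.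
(The element `zX` of `U(n)` is represented by any `Y ∈ U(n)` whose underlying matrix is
`z • X`.) -/
theorem unitary_CS_preserving_homogeneous
    (n : ℕ) (hn : 3 ≤ n)
    (φ : ↥(Matrix.unitaryGroup (Fin n) ℂ) → Matrix (Fin n) (Fin n) ℂ)
    (hcont : Continuous φ)
    (hcomm : ∀ A B : ↥(Matrix.unitaryGroup (Fin n) ℂ),
      (A : Matrix (Fin n) (Fin n) ℂ) * (B : Matrix (Fin n) (Fin n) ℂ) =
        (B : Matrix (Fin n) (Fin n) ℂ) * (A : Matrix (Fin n) (Fin n) ℂ) →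
      φ A * φ B = φ B * φ A)
    (hspec : ∀ A : ↥(Matrix.unitaryGroup (Fin n) ℂ),
      Matrix.charpoly (φ A) = Matrix.charpoly (A : Matrix (Fin n) (Fin n) ℂ)) :
    ∀ (z : ℂ), ‖z‖ = 1 →
      ∀ X Y : ↥(Matrix.unitaryGroup (Fin n) ℂ),
        (Y : Matrix (Fin n) (Fin n) ℂ) = z • (X : Matrix (Fin n) (Fin n) ℂ) →
        φ Y = z • φ X := by
  intro z hz X Y hYX
  classical
  set Zf : ↥(Matrix.unitaryGroup (Fin n) ℂ) → ↥(Matrix.unitaryGroup (Fin n) ℂ) :=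
    fun W => ⟨z • (W : Matrix (Fin n) (Fin n) ℂ),
      UnitaryCSHelper.smul_mem_unitaryGroup z hz _ W.2⟩ with hZf
  have hZfcont : Continuous Zf := by
    rw [continuous_induced_rng]
    exact continuous_subtype_val.const_smul z
  set C : Set ↥(Matrix.unitaryGroup (Fin n) ℂ) := {W | φ (Zf W) - z • φ W = 0} with hC
  have hCclosed : IsClosed C := by
    have : C = (fun W => φ (Zf W) - z • φ W) ⁻¹' {0} := by
      ext W
      simp [hC]
    rw [this]
    exact IsClosed.preimage ((hcont.comp hZfcont).sub (hcont.const_smul z)) isClosed_singleton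
  have hDC : {W : ↥(Matrix.unitaryGroup (Fin n) ℂ) | UnitaryCSHelper.distinctSpec W} ⊆ C := by
    intro W hW
    have := UnitaryCSHelper.core hn φ hcont hcomm hspec W hW z hz (Zf W) rfl
    show φ (Zf W) - z • φ W = 0
    rw [this, sub_self]
  have hXC : X ∈ C :=
    hCclosed.closure_eq ▸ (closure_mono hDC) (UnitaryCSHelper.dense_distinct X)
  have hYZf : Y = Zf X := Subtype.ext hYX
  have hX0 : φ (Zf X) - z • φ X = 0 := hXC
  rw [hYZf]
  exact sub_eq_zero.mp hX0
end

section
/- There exists a continuous map φ from the space of real diagonal 3×3 matrices to itself such that for every X the matrix φ(X) has the same characteristic polynomial as X (its diagonal entries are a permutation of those of X), but φ is neither of conjugation type nor of ordered-spectrum type: there is no T ∈ GL(3,ℂ) with φ(X) = T X T⁻¹ for all X, and no T ∈ GL(3,ℂ) with φ(X) = T · diag(η_1(X), η_2(X), η_3(X)) · T⁻¹ for all X, where η_1(X) ≤ η_2(X) ≤ η_3(X) is the non-decreasing enumeration of the diagonal entries of X. -/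
open Matrix Polynomial

/-- The space of real diagonal `3×3` matrices, as a subspace of `M₃(ℂ)`. -/
abbrev RealDiag3 : Type :=
  {X : Matrix (Fin 3) (Fin 3) ℂ // X.IsDiag ∧ ∀ i, (X i i).im = 0}

/-- The hybrid map: sort the first two diagonal entries, leave the third in place. -/
noncomputable def phiFun (X : RealDiag3) : RealDiag3 :=
  ⟨Matrix.diagonal ![((min (X.1 0 0).re (X.1 1 1).re : ℝ) : ℂ),
      ((max (X.1 0 0).re (X.1 1 1).re : ℝ) : ℂ), (((X.1 2 2).re : ℝ) : ℂ)],
    Matrix.isDiag_diagonal _, by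
      intro i
      fin_cases i <;> simp⟩

lemma phiCont : Continuous phiFun := by
  apply Continuous.subtype_mk
  apply continuous_matrix
  intro i j
  by_cases h : i = j
  · subst h
    have h00 : Continuous fun X : RealDiag3 => (X.1 0 0).re :=
      Complex.continuous_re.comp ((continuous_apply (0 : Fin 3)).comp
        ((continuous_apply (0 : Fin 3)).comp continuous_subtype_val))
    have h11 : Continuous fun X : RealDiag3 => (X.1 1 1).re :=
      Complex.continuous_re.comp ((continuous_apply (1 : Fin 3)).comp
        ((continuous_apply (1 : Fin 3)).comp continuous_subtype_val))
    have h22 : Continuous fun X : RealDiag3 => (X.1 2 2).re :=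
      Complex.continuous_re.comp ((continuous_apply (2 : Fin 3)).comp
        ((continuous_apply (2 : Fin 3)).comp continuous_subtype_val))
    fin_cases i <;> simp only [Matrix.diagonal_apply_eq] <;>
      [ exact Complex.continuous_ofReal.comp (h00.min h11);
        exact Complex.continuous_ofReal.comp (h00.max h11);
        exact Complex.continuous_ofReal.comp h22 ]
  · simp only [Matrix.diagonal_apply_ne _ h]
    exact continuous_const

lemma charpoly_diag3 (d : Fin 3 → ℂ) :
    (Matrix.diagonal d).charpoly = ∏ i, (X - C (d i)) := by
  rw [Matrix.charpoly_of_upperTriangular _ (Matrix.blockTriangular_diagonal d)]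
  simp

lemma charpoly_X3 (Y : RealDiag3) :
    (Y.1).charpoly = ∏ i, (X - C (((Y.1 i i).re : ℂ))) := by
  have h1 : Matrix.diagonal (Y.1).diag = Y.1 := Y.2.1.diagonal_diag
  have h2 : ∀ i, Y.1 i i = (((Y.1 i i).re : ℝ) : ℂ) := by
    intro i
    exact Complex.ext (by simp) (by simp [Y.2.2 i])
  conv_lhs => rw [← h1]
  rw [charpoly_diag3]
  refine Finset.prod_congr rfl fun i _ => ?_
  rw [Matrix.diag_apply]
  conv_lhs => rw [h2 i]

lemma prod_minmax (a b c : ℝ) :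
    (X - C ((min a b : ℝ) : ℂ)) * (X - C ((max a b : ℝ) : ℂ)) * (X - C ((c : ℝ) : ℂ)) =
      (X - C ((a : ℝ) : ℂ)) * (X - C ((b : ℝ) : ℂ)) * (X - C ((c : ℝ) : ℂ)) := by
  rcases le_total a b with h | h
  · rw [min_eq_left h, max_eq_right h]
  · rw [min_eq_right h, max_eq_left h]; ring

lemma sortedUnique (r : Fin 3 → ℝ) (hm : Monotone r)
    (h : (∏ j, (X - C ((r j : ℝ) : ℂ))) = ∏ j, (X - C ((![0,1,2] : Fin 3 → ℂ) j))) :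
    r = ![(0:ℝ), 1, 2] := by
  have key : ∀ i : Fin 3, r i = 0 ∨ r i = 1 ∨ r i = 2 := by
    intro i
    have h1 := congrArg (Polynomial.eval ((r i : ℝ) : ℂ)) h
    rw [Polynomial.eval_prod, Polynomial.eval_prod] at h1
    rw [Finset.prod_eq_zero (Finset.mem_univ i) (by simp)] at h1
    rw [Fin.prod_univ_three] at h1
    simp at h1
    rcases h1 with (h1 | h1) | h1
    · left; exact_mod_cast h1
    · right; left; have : r i - 1 = 0 := by exact_mod_cast h1
      linarith
    · right; right; have : r i - 2 = 0 := by exact_mod_cast h1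
      linarith
  have ev : ∀ v : ℂ, v * ((v - 1) * (v - 2)) = 0 →
      (v - (r 0 : ℂ)) * ((v - (r 1 : ℂ)) * (v - (r 2 : ℂ))) = 0 := by
    intro v hv
    have h1 := congrArg (Polynomial.eval v) h
    rw [Polynomial.eval_prod, Polynomial.eval_prod, Fin.prod_univ_three,
      Fin.prod_univ_three] at h1
    simp only [eval_sub, eval_X, eval_C] at h1
    have h2 : (v - (r 0 : ℂ)) * (v - (r 1 : ℂ)) * (v - (r 2 : ℂ)) = 0 := by
      rw [h1, show ((![0,1,2] : Fin 3 → ℂ) 0) = 0 from rfl,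
        show ((![0,1,2] : Fin 3 → ℂ) 1) = 1 from rfl,
        show ((![0,1,2] : Fin 3 → ℂ) 2) = 2 from rfl]
      linear_combination hv
    linear_combination h2
  have root : ∀ v : ℝ, ((v : ℂ) * (((v:ℂ) - 1) * ((v:ℂ) - 2)) = 0) → ∃ j, r j = v := by
    intro v hv
    have h1 := ev v hv
    rcases mul_eq_zero.mp h1 with h1 | h1
    · exact ⟨0, by have := sub_eq_zero.mp h1; exact_mod_cast this.symm⟩
    rcases mul_eq_zero.mp h1 with h1 | h1
    · exact ⟨1, by have := sub_eq_zero.mp h1; exact_mod_cast this.symm⟩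
    · exact ⟨2, by have := sub_eq_zero.mp h1; exact_mod_cast this.symm⟩
  obtain ⟨j0, hj0⟩ := root 0 (by norm_num)
  obtain ⟨j1, hj1⟩ := root 1 (by norm_num)
  obtain ⟨j2, hj2⟩ := root 2 (by norm_num)
  have hr0 : r 0 = 0 := by
    have hle : r 0 ≤ 0 := hj0 ▸ hm (Fin.zero_le j0)
    rcases key 0 with h' | h' | h' <;> linarith
  have hr2 : r 2 = 2 := by
    have hge : 2 ≤ r 2 := hj2 ▸ hm (Fin.le_last j2)
    rcases key 2 with h' | h' | h' <;> linarith
  have hr1 : r 1 = 1 := by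
    fin_cases j1 <;> simp_all
  funext i
  fin_cases i <;> simpa using by assumption

/-- The matrix `diag(0,1,2)` as an element of `RealDiag3`. -/
noncomputable def XA : RealDiag3 :=
  ⟨Matrix.diagonal ![(0:ℂ), 1, 2], Matrix.isDiag_diagonal _, by
    intro i; fin_cases i <;> simp⟩

/-- The matrix `diag(2,1,0)` as an element of `RealDiag3`. -/
noncomputable def XB : RealDiag3 :=
  ⟨Matrix.diagonal ![(2:ℂ), 1, 0], Matrix.isDiag_diagonal _, by
    intro i; fin_cases i <;> simp⟩

lemma dA_ne : ∀ i j : Fin 3, i ≠ j → (![(0:ℂ),1,2]) i ≠ (![(0:ℂ),1,2]) j := by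
  intro i j hij
  fin_cases i <;> fin_cases j <;> simp_all <;> norm_num

lemma phiXA : (phiFun XA).1 = Matrix.diagonal ![(0:ℂ), 1, 2] := by
  show Matrix.diagonal _ = Matrix.diagonal _
  congr 1
  funext i
  fin_cases i <;> norm_num [XA, Matrix.diagonal_apply_eq, Matrix.cons_val_two, Matrix.tail_cons, Matrix.head_cons]

lemma phiXB : (phiFun XB).1 = Matrix.diagonal ![(1:ℂ), 2, 0] := by
  show Matrix.diagonal _ = Matrix.diagonal _
  congr 1
  funext i
  fin_cases i <;> norm_num [XB, Matrix.diagonal_apply_eq, Matrix.cons_val_two, Matrix.tail_cons, Matrix.head_cons]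

/-- **Example.** There is a continuous self-map `φ` of the space of real diagonal `3×3`
matrices preserving characteristic polynomials (so the diagonal entries of `φ(X)` are a
permutation of those of `X`) which is neither of conjugation type (`φ(X) = T X T⁻¹` for a fixed
`T ∈ GL(3,ℂ)`) nor of ordered-spectrum type (`φ(X) = T ⬝ diag(η₁(X),η₂(X),η₃(X)) ⬝ T⁻¹` for a
fixed `T ∈ GL(3,ℂ)`, `η₁(X) ≤ η₂(X) ≤ η₃(X)` being the non-decreasing enumeration of the
diagonal entries of `X`, characterized by monotonicity together with
`charpoly X = ∏ (t - ηⱼ(X))`). -/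
theorem exists_hybrid_spectrum_preserving_diagonal_map :
    ∃ φ : RealDiag3 → RealDiag3,
      Continuous φ ∧
      (∀ X : RealDiag3,
        Matrix.charpoly ((φ X : Matrix (Fin 3) (Fin 3) ℂ)) =
          Matrix.charpoly ((X : Matrix (Fin 3) (Fin 3) ℂ))) ∧
      ¬ (∃ T : GL (Fin 3) ℂ, ∀ X : RealDiag3,
          (φ X : Matrix (Fin 3) (Fin 3) ℂ) =
            (T : Matrix (Fin 3) (Fin 3) ℂ) * (X : Matrix (Fin 3) (Fin 3) ℂ) *
              ((T⁻¹ : GL (Fin 3) ℂ) : Matrix (Fin 3) (Fin 3) ℂ)) ∧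
      (∀ η : RealDiag3 → Fin 3 → ℝ,
        (∀ X : RealDiag3, Monotone (η X) ∧
          Matrix.charpoly ((X : Matrix (Fin 3) (Fin 3) ℂ)) =
            ∏ j, (Polynomial.X - Polynomial.C ((η X j : ℂ)))) →
        ¬ (∃ T : GL (Fin 3) ℂ, ∀ X : RealDiag3,
            (φ X : Matrix (Fin 3) (Fin 3) ℂ) =
              (T : Matrix (Fin 3) (Fin 3) ℂ) *
                Matrix.diagonal (fun j => ((η X j : ℂ))) *
                ((T⁻¹ : GL (Fin 3) ℂ) : Matrix (Fin 3) (Fin 3) ℂ))) := by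
  refine ⟨phiFun, phiCont, ?_, ?_, ?_⟩
  · -- charpoly preservation
    intro Y
    rw [show ((phiFun Y : Matrix (Fin 3) (Fin 3) ℂ)) =
      Matrix.diagonal ![((min (Y.1 0 0).re (Y.1 1 1).re : ℝ) : ℂ),
        ((max (Y.1 0 0).re (Y.1 1 1).re : ℝ) : ℂ), (((Y.1 2 2).re : ℝ) : ℂ)] from rfl,
      charpoly_diag3, charpoly_X3 Y, Fin.prod_univ_three, Fin.prod_univ_three]
    simp only [Matrix.cons_val_zero, Matrix.cons_val_one, Matrix.head_cons,
      Matrix.cons_val_two, Matrix.tail_cons]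
    exact prod_minmax _ _ _
  · -- not conjugation type
    rintro ⟨T, hT⟩
    set M : Matrix (Fin 3) (Fin 3) ℂ := (T : Matrix (Fin 3) (Fin 3) ℂ) with hM
    set N : Matrix (Fin 3) (Fin 3) ℂ := ((T⁻¹ : GL (Fin 3) ℂ) : Matrix (Fin 3) (Fin 3) ℂ)
      with hN
    have hMN : M * N = 1 := T.mul_inv
    have hNM : N * M = 1 := T.inv_mul
    have hA := (hT XA).symm
    rw [phiXA] at hA
    -- hA : M * XA * N = diagonal ![0,1,2]
    have comm : M * Matrix.diagonal ![(0:ℂ),1,2] = Matrix.diagonal ![(0:ℂ),1,2] * M := by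
      calc M * Matrix.diagonal ![(0:ℂ),1,2]
          = M * Matrix.diagonal ![(0:ℂ),1,2] * (N * M) := by rw [hNM, mul_one]
        _ = (M * (XA : Matrix (Fin 3) (Fin 3) ℂ) * N) * M := by
            rw [show ((XA : Matrix (Fin 3) (Fin 3) ℂ)) = Matrix.diagonal ![(0:ℂ),1,2] from rfl]
            rw [mul_assoc (M * Matrix.diagonal ![(0:ℂ),1,2]) N M]
        _ = Matrix.diagonal ![(0:ℂ),1,2] * M := by rw [hA]
    have offdiag : ∀ i j : Fin 3, i ≠ j → M i j = 0 := by
      intro i j hij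
      have h1 := congrFun (congrFun comm i) j
      rw [Matrix.mul_diagonal, Matrix.diagonal_mul] at h1
      have hd : (![(0:ℂ),1,2]) i ≠ (![(0:ℂ),1,2]) j := dA_ne i j hij
      have h2 : M i j * ((![(0:ℂ),1,2]) j - (![(0:ℂ),1,2]) i) = 0 := by
        linear_combination h1
      rcases mul_eq_zero.mp h2 with h3 | h3
      · exact h3
      · exact absurd (sub_eq_zero.mp h3).symm hd
    have commB : M * Matrix.diagonal ![(2:ℂ),1,0] = Matrix.diagonal ![(2:ℂ),1,0] * M := by
      ext i j
      by_cases hij : i = j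
      · subst hij
        rw [Matrix.mul_diagonal, Matrix.diagonal_mul, mul_comm]
      · rw [Matrix.mul_diagonal, Matrix.diagonal_mul, offdiag i j hij]
        ring
    have hB := (hT XB).symm
    rw [phiXB, show ((XB : Matrix (Fin 3) (Fin 3) ℂ)) = Matrix.diagonal ![(2:ℂ),1,0] from rfl,
      commB, mul_assoc, hMN, mul_one] at hB
    -- hB : diagonal ![2,1,0] = diagonal ![1,2,0]
    have := congrFun (congrFun hB 0) 0
    simp [Matrix.diagonal_apply_eq] at this
  · -- not ordered-spectrum type
    intro η hη
    rintro ⟨T, hT⟩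
    have eA : η XA = ![(0:ℝ),1,2] := by
      refine sortedUnique _ (hη XA).1 ?_
      rw [← (hη XA).2,
        show ((XA : Matrix (Fin 3) (Fin 3) ℂ)) = Matrix.diagonal ![(0:ℂ),1,2] from rfl,
        charpoly_diag3]
    have eB : η XB = ![(0:ℝ),1,2] := by
      refine sortedUnique _ (hη XB).1 ?_
      rw [← (hη XB).2,
        show ((XB : Matrix (Fin 3) (Fin 3) ℂ)) = Matrix.diagonal ![(2:ℂ),1,0] from rfl,
        charpoly_diag3, Fin.prod_univ_three, Fin.prod_univ_three]
      rw [show ((![(2:ℂ),1,0]) 0) = 2 from rfl, show ((![(2:ℂ),1,0]) 1) = 1 from rfl,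
        show ((![(2:ℂ),1,0]) 2) = 0 from rfl, show ((![(0:ℂ),1,2]) 0) = 0 from rfl,
        show ((![(0:ℂ),1,2]) 1) = 1 from rfl, show ((![(0:ℂ),1,2]) 2) = 2 from rfl]
      ring
    have hphi : (phiFun XA : Matrix (Fin 3) (Fin 3) ℂ) =
        (phiFun XB : Matrix (Fin 3) (Fin 3) ℂ) := by
      rw [hT XA, hT XB, eA, eB]
    rw [phiXA, phiXB] at hphi
    have := congrFun (congrFun hphi 0) 0
    simp [Matrix.diagonal_apply_eq] at this
end
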